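/- arXiv:1903.00995 — 6 statements merged into one kernel-verified Lean document; each statement's English description precedes it below -/
import Mathlib

section
/- There exist absolute constants C1, C2, c > 0 such that the following holds for every n that is a power of 2 and every integer 1 ≤ k ≤ n. There exist a set S ⊆ [n] with |S| ≤ C1·k²·log n and a function R : ℂ^n → ℂ^n depending only on the coordinates in S (i.e., if x and y agree on all coordinates in S then R(x) = R(y)) such that for every x ∈ ℂ^n whose DFT satisfies ‖x̂‖_∞ ≤ n^c·‖x̂_{−k}‖₁/k, the output R(x) has at most C2·k nonzero coordinates and ‖x̂ − R(x)‖_∞ ≤ (1/k)·‖x̂_{−k}‖₁. (This is the sample-complexity content of the paper's Theorem on deterministic Sparse Fourier Transform with super-linear time; the running-time and explicit-construction claims are omitted.) -/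
open Finset

/-- Discrete Fourier transform: `x̂_f = n^{-1/2} ∑_j x_j e^{2πi jf/n}`. -/
noncomputable def dft (n : ℕ) (x : Fin n → ℂ) : Fin n → ℂ := fun f =>
  (1 / (Real.sqrt n) : ℂ) *
    ∑ j : Fin n, x j * Complex.exp (2 * (Real.pi : ℂ) * Complex.I *
      (((j : ℕ) * (f : ℕ) : ℕ) : ℂ) / (n : ℂ))

/-- `‖y_{-k}‖₁`: the minimum over sets `T` of size `k` of the ℓ1 norm of `y` outside `T`. -/
noncomputable def tailNorm (n k : ℕ) (y : Fin n → ℂ) : ℝ :=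
  sInf ((fun T : Finset (Fin n) => ∑ i ∈ Tᶜ, ‖y i‖) ''
    {T : Finset (Fin n) | T.card = k})

namespace SFT

noncomputable def ζ (n : ℕ) : ℂ := Complex.exp (2 * (Real.pi : ℂ) * Complex.I / n)

lemma zeta_ne_zero (n : ℕ) : ζ n ≠ 0 := Complex.exp_ne_zero _

lemma zeta_pow_nat (n : ℕ) (a : ℕ) :
    ζ n ^ a = Complex.exp (2 * (Real.pi : ℂ) * Complex.I * a / n) := by
  rw [ζ, ← Complex.exp_nat_mul]; ring_nf

lemma zeta_zpow (n : ℕ) (a : ℤ) :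
    ζ n ^ a = Complex.exp (2 * (Real.pi : ℂ) * Complex.I * a / n) := by
  rw [ζ, ← Complex.exp_int_mul]; ring_nf

lemma zeta_zpow_eq_one_iff {n : ℕ} (hn : 0 < n) (a : ℤ) :
    ζ n ^ a = 1 ↔ (n : ℤ) ∣ a := by
  rw [zeta_zpow, Complex.exp_eq_one_iff]
  constructor
  · rintro ⟨m, hm⟩
    refine ⟨m, ?_⟩
    have hn' : (n : ℂ) ≠ 0 := Nat.cast_ne_zero.2 hn.ne'
    have hπ : (Real.pi : ℂ) ≠ 0 := by
      simp [Complex.ofReal_ne_zero, Real.pi_ne_zero]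
    have h2 : (2 : ℂ) * Real.pi * Complex.I ≠ 0 := by
      simp [Complex.I_ne_zero, hπ]
    have : (a : ℂ) = (n : ℂ) * m := by
      field_simp at hm
      apply mul_left_cancel₀ h2
      linear_combination (2 * (Real.pi : ℂ) * Complex.I) * hm
    exact_mod_cast this
  · rintro ⟨m, hm⟩
    refine ⟨m, ?_⟩
    have hn' : (n : ℂ) ≠ 0 := Nat.cast_ne_zero.2 hn.ne'
    subst hm
    rw [div_eq_iff hn']
    push_cast
    ring

lemma zeta_pow_n {n : ℕ} (hn : 0 < n) : ζ n ^ (n : ℤ) = 1 :=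
  (zeta_zpow_eq_one_iff hn n).2 ⟨1, by ring⟩

lemma sum_zeta_geom {n : ℕ} (hn : 0 < n) {a : ℤ} (ha : ¬ (n : ℤ) ∣ a) :
    ∑ f : Fin n, (ζ n ^ a) ^ (f : ℕ) = 0 := by
  have h1 : ζ n ^ a ≠ 1 := fun h => ha ((zeta_zpow_eq_one_iff hn a).1 h)
  rw [Fin.sum_univ_eq_sum_range, geom_sum_eq h1]
  have : (ζ n ^ a) ^ n = 1 := by
    rw [← zpow_natCast, ← zpow_mul, mul_comm, zpow_mul, zeta_pow_n hn, one_zpow]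
  rw [this, sub_self, zero_div]

lemma dft_eq (n : ℕ) (x : Fin n → ℂ) (f : Fin n) :
    dft n x f = (1 / (Real.sqrt n) : ℂ) * ∑ j : Fin n, x j * ζ n ^ ((j : ℕ) * (f : ℕ)) := by
  simp only [dft, zeta_pow_nat]

/-- Fourier inversion. -/
lemma inversion {n : ℕ} (hn : 0 < n) (x : Fin n → ℂ) (j : Fin n) :
    ∑ f : Fin n, dft n x f * ζ n ^ (-((j : ℕ) * (f : ℕ) : ℤ)) = (Real.sqrt n : ℂ) * x j := by
  have hs : (Real.sqrt n : ℂ) ≠ 0 := by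
    simp [Complex.ofReal_ne_zero, Real.sqrt_ne_zero', hn, hn.ne']
  have step : ∀ f : Fin n, dft n x f * ζ n ^ (-((j : ℕ) * (f : ℕ) : ℤ))
      = (1 / (Real.sqrt n) : ℂ) * ∑ j' : Fin n,
        x j' * (ζ n ^ (((j' : ℕ) : ℤ) - ((j : ℕ) : ℤ))) ^ (f : ℕ) := by
    intro f
    rw [dft_eq, mul_assoc]
    congr 1
    rw [Finset.sum_mul]
    refine Finset.sum_congr rfl fun j' _ => ?_
    rw [mul_assoc]
    congr 1
    rw [← zpow_natCast (ζ n) ((j' : ℕ) * (f : ℕ)), ← zpow_add₀ (zeta_ne_zero n),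
      ← zpow_natCast (ζ n ^ ((((j' : ℕ)) : ℤ) - ((j : ℕ) : ℤ))) (f : ℕ), ← zpow_mul]
    congr 1
    push_cast
    ring
  calc ∑ f : Fin n, dft n x f * ζ n ^ (-((j : ℕ) * (f : ℕ) : ℤ))
      = (1 / (Real.sqrt n) : ℂ) * ∑ j' : Fin n, x j' *
          ∑ f : Fin n, (ζ n ^ (((j' : ℕ) : ℤ) - ((j : ℕ) : ℤ))) ^ (f : ℕ) := by
        rw [Finset.sum_congr rfl fun f _ => step f, ← Finset.mul_sum, Finset.sum_comm]
        congr 1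
        refine Finset.sum_congr rfl fun j' _ => ?_
        rw [Finset.mul_sum]
    _ = (1 / (Real.sqrt n) : ℂ) * (x j * n) := by
        congr 1
        rw [Finset.sum_eq_single j]
        · simp
        · intro j' _ hne
          have hdvd : ¬ (n : ℤ) ∣ (((j' : ℕ) : ℤ) - ((j : ℕ) : ℤ)) := by
            intro hd
            have h1 : ((j' : ℕ) : ℤ) < n := by exact_mod_cast j'.isLt
            have h2 : ((j : ℕ) : ℤ) < n := by exact_mod_cast j.isLt
            have h1' : (0 : ℤ) ≤ ((j' : ℕ) : ℤ) := by positivity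
            have h2' : (0 : ℤ) ≤ ((j : ℕ) : ℤ) := by positivity
            have hz : (((j' : ℕ) : ℤ) - ((j : ℕ) : ℤ)) = 0 := by
              rcases hd with ⟨m, hm⟩
              have hn0 : (0:ℤ) < n := by exact_mod_cast hn
              rcases lt_trichotomy m 0 with h | h | h
              · nlinarith [Int.le_of_lt_add_one (show m < 0 + 1 from by omega)]
              · simp [hm, h]
              · nlinarith
            apply hne
            apply Fin.ext
            omega
          rw [sum_zeta_geom hn hdvd, mul_zero]
        · simp
    _ = (Real.sqrt n : ℂ) * x j := by
        have hnn : ((Real.sqrt n : ℝ) : ℂ) * ((Real.sqrt n : ℝ) : ℂ) = (n : ℂ) := by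
          rw [← Complex.ofReal_mul, Real.mul_self_sqrt (by positivity)]
          norm_cast
        field_simp
        rw [← hnn]
        ring



lemma count_bad {n s : ℕ} (X : Fin n → ℝ) (hb : ∀ j, |X j| ≤ 1)
    (h0 : ∑ j, X j = 0) {lam a : ℝ} (h0l : 0 ≤ lam) (hl : lam ≤ 1) :
    ((Finset.univ.filter (fun ω : Fin s → Fin n => a ≤ ∑ i, X (ω i))).card : ℝ)
      ≤ (n:ℝ)^s * Real.exp (s * lam^2 - lam * a) := by
  have key1 : ∀ y : ℝ, |y| ≤ 1 → Real.exp y ≤ 1 + y + y^2 := by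
    intro y hy
    have h := Real.exp_bound hy (by norm_num : 0 < 2)
    have h2 : |Real.exp y - (1 + y)| ≤ |y|^2 * (3/4) := by
      have : ∑ i ∈ Finset.range 2, y ^ i / (Nat.factorial i) = 1 + y := by
        simp [Finset.sum_range_succ]
      rw [this] at h
      convert h using 2
      norm_num [Nat.factorial]
    have h3 : |y|^2 ≤ y^2 := by rw [sq_abs]
    have := abs_le.1 h2
    nlinarith [sq_abs y]
  -- single coordinate bound
  have single : ∑ j, Real.exp (lam * X j) ≤ (n:ℝ) * Real.exp (lam^2) := by
    have hle : ∀ j, Real.exp (lam * X j) ≤ 1 + lam * X j + lam^2 := by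
      intro j
      have habs : |lam * X j| ≤ 1 := by
        rw [abs_mul, abs_of_nonneg h0l]
        calc lam * |X j| ≤ 1 * 1 := by
              apply mul_le_mul hl (hb j) (abs_nonneg _) zero_le_one
        _ = 1 := by norm_num
      refine (key1 _ habs).trans ?_
      have : (lam * X j)^2 ≤ lam^2 := by
        have h1 := hb j
        have hX2 : X j ^ 2 ≤ 1 := by nlinarith [sq_abs (X j), abs_nonneg (X j)]
        nlinarith [sq_nonneg lam]
      linarith
    calc ∑ j, Real.exp (lam * X j) ≤ ∑ j : Fin n, (1 + lam * X j + lam^2) :=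
          Finset.sum_le_sum fun j _ => hle j
      _ = (n:ℝ) * (1 + lam^2) := by
          rw [Finset.sum_add_distrib, Finset.sum_add_distrib, ← Finset.mul_sum, h0]
          simp [mul_comm]
          ring
      _ ≤ (n:ℝ) * Real.exp (lam^2) := by
          apply mul_le_mul_of_nonneg_left _ (by positivity)
          have := Real.add_one_le_exp (lam^2)
          linarith
  -- product expansion
  have expand : ∑ ω : Fin s → Fin n, ∏ i, Real.exp (lam * X (ω i))
      = (∑ j, Real.exp (lam * X j)) ^ s := by
    rw [← Fin.prod_const s (∑ j, Real.exp (lam * X j))]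
    rw [Finset.prod_univ_sum]
    rw [← Fintype.piFinset_univ]
  -- chernoff
  have mono : ((Finset.univ.filter (fun ω : Fin s → Fin n => a ≤ ∑ i, X (ω i))).card : ℝ)
      ≤ Real.exp (- lam * a) * ∑ ω : Fin s → Fin n, ∏ i, Real.exp (lam * X (ω i)) := by
    rw [Finset.card_eq_sum_ones, Finset.mul_sum]
    push_cast
    rw [← Finset.sum_filter_add_sum_filter_not Finset.univ
      (fun ω : Fin s → Fin n => a ≤ ∑ i, X (ω i))
      (fun ω => Real.exp (- lam * a) * ∏ i, Real.exp (lam * X (ω i)))]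
    have hpos : (0:ℝ) ≤ ∑ ω ∈ Finset.univ.filter
        (fun ω : Fin s → Fin n => ¬ a ≤ ∑ i, X (ω i)),
        Real.exp (- lam * a) * ∏ i, Real.exp (lam * X (ω i)) := by
      apply Finset.sum_nonneg
      intro ω _
      positivity
    have hterm : ∀ ω ∈ Finset.univ.filter (fun ω : Fin s → Fin n => a ≤ ∑ i, X (ω i)),
        (1:ℝ) ≤ Real.exp (- lam * a) * ∏ i, Real.exp (lam * X (ω i)) := by
      intro ω hω
      rw [Finset.mem_filter] at hω
      rw [← Real.exp_sum, ← Real.exp_add]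
      rw [show (1:ℝ) = Real.exp 0 from (Real.exp_zero).symm]
      apply Real.exp_le_exp.2
      have : ∑ i, lam * X (ω i) = lam * ∑ i, X (ω i) := by rw [Finset.mul_sum]
      rw [this]
      nlinarith [hω.2]
    calc (∑ _ω ∈ Finset.univ.filter (fun ω : Fin s → Fin n => a ≤ ∑ i, X (ω i)), (1:ℝ))
        ≤ ∑ ω ∈ Finset.univ.filter (fun ω : Fin s → Fin n => a ≤ ∑ i, X (ω i)),
          Real.exp (- lam * a) * ∏ i, Real.exp (lam * X (ω i)) :=
          Finset.sum_le_sum hterm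
      _ ≤ _ := le_add_of_nonneg_right hpos
  calc ((Finset.univ.filter (fun ω : Fin s → Fin n => a ≤ ∑ i, X (ω i))).card : ℝ)
      ≤ Real.exp (- lam * a) * (∑ j, Real.exp (lam * X j)) ^ s := by
        rw [← expand]; exact mono
    _ ≤ Real.exp (- lam * a) * ((n:ℝ) * Real.exp (lam^2)) ^ s := by
        apply mul_le_mul_of_nonneg_left _ (Real.exp_nonneg _)
        apply pow_le_pow_left₀ (Finset.sum_nonneg fun j _ => Real.exp_nonneg _) single
    _ = (n:ℝ)^s * Real.exp (s * lam^2 - lam * a) := by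
        rw [mul_pow, ← Real.exp_nat_mul,
          show (s:ℝ)*lam^2 - lam*a = (-lam*a) + (s:ℝ)*lam^2 by ring, Real.exp_add]
        ring

def goodFin (n s : ℕ) (ε : ℝ) (ω : Fin s → Fin n) : Prop :=
  ∀ t : Fin n, (t:ℕ) ≠ 0 → ‖∑ i, ζ n ^ ((ω i : ℕ) * (t : ℕ))‖ ≤ ε * s

lemma abs_zeta_pow (n : ℕ) (a : ℕ) : ‖ζ n ^ a‖ = 1 := by
  rw [zeta_pow_nat]
  rw [show (2 * (Real.pi:ℂ) * Complex.I * a / n)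
      = Complex.I * ((2*Real.pi*a/n : ℝ):ℂ) by push_cast; ring]
  rw [Complex.norm_exp]
  norm_num [Complex.mul_re, Complex.I_re, Complex.I_im]

lemma nat_not_dvd {n : ℕ} (t : Fin n) (ht : (t:ℕ) ≠ 0) : ¬ (n:ℤ) ∣ ((t:ℕ) : ℤ) := by
  intro hd
  have h1 : ((t:ℕ) : ℤ) < n := by exact_mod_cast t.isLt
  have h2 : (0:ℤ) ≤ ((t:ℕ):ℤ) := by positivity
  have h3 : ((t:ℕ):ℤ) ≠ 0 := by exact_mod_cast ht
  rcases hd with ⟨m, hm⟩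
  have hn0 : (0:ℤ) < n := by
    have := t.isLt
    omega
  rcases lt_trichotomy m 0 with h | h | h
  · nlinarith
  · exact h3 (by simp [hm, h])
  · nlinarith

lemma sum_zeta_pow_mul {n : ℕ} (hn : 0 < n) (t : Fin n) (ht : (t:ℕ) ≠ 0) :
    ∑ j : Fin n, ζ n ^ ((j:ℕ) * (t:ℕ)) = 0 := by
  have := sum_zeta_geom hn (nat_not_dvd t ht)
  rw [← this]
  refine Finset.sum_congr rfl fun j _ => ?_
  rw [← zpow_natCast (ζ n) ((j:ℕ)*(t:ℕ)), ← zpow_natCast (ζ n ^ (((t:ℕ):ℤ))) (j:ℕ), ← zpow_mul]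
  congr 1
  push_cast
  ring

lemma exists_good (n s : ℕ) (hn : 2 ≤ n) {ε : ℝ} (hε : 0 < ε) (hε1 : ε ≤ 1)
    (hs : 16 * Real.log (4*n) < ε^2 * s) :
    ∃ ω : Fin s → Fin n, goodFin n s ε ω := by
  have hn0 : 0 < n := by omega
  by_contra hcon
  push_neg at hcon
  set Bad : Fin n → Finset (Fin s → Fin n) := fun t =>
    Finset.univ.filter (fun ω => ε*s < ‖∑ i, ζ n ^ ((ω i :ℕ)*(t:ℕ))‖) with hBad
  have cover : (Finset.univ : Finset (Fin s → Fin n)) ⊆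
      (Finset.univ.filter (fun t : Fin n => (t:ℕ) ≠ 0)).biUnion Bad := by
    intro ω _
    have h := hcon ω
    unfold goodFin at h
    push_neg at h
    rcases h with ⟨t, ht0, hlt⟩
    exact Finset.mem_biUnion.2 ⟨t, by simp [ht0], by simp [hBad, hlt]⟩
  have hbad : ∀ t : Fin n, (t:ℕ) ≠ 0 →
      ((Bad t).card : ℝ) ≤ 4 * (n:ℝ)^s * Real.exp (-(ε^2 * s)/16) := by
    intro t ht
    set X : Fin n → ℝ := fun j => (ζ n ^ ((j:ℕ)*(t:ℕ))).re with hX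
    set Y : Fin n → ℝ := fun j => (ζ n ^ ((j:ℕ)*(t:ℕ))).im with hY
    have hXb : ∀ j, |X j| ≤ 1 := by
      intro j
      have h := Complex.abs_re_le_norm (ζ n ^ ((j:ℕ)*(t:ℕ)))
      rw [abs_zeta_pow] at h
      exact h
    have hYb : ∀ j, |Y j| ≤ 1 := by
      intro j
      have h := Complex.abs_im_le_norm (ζ n ^ ((j:ℕ)*(t:ℕ)))
      rw [abs_zeta_pow] at h
      exact h
    have hX0 : ∑ j, X j = 0 := by
      have h := sum_zeta_pow_mul hn0 t ht
      rw [hX, ← Complex.re_sum, h, Complex.zero_re]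
    have hY0 : ∑ j, Y j = 0 := by
      have h := sum_zeta_pow_mul hn0 t ht
      rw [hY, ← Complex.im_sum, h, Complex.zero_im]
    have hXb' : ∀ j, |(-X) j| ≤ 1 := fun j => by simpa using hXb j
    have hYb' : ∀ j, |(-Y) j| ≤ 1 := fun j => by simpa using hYb j
    have hX0' : ∑ j, (-X) j = 0 := by simp [hX0]
    have hY0' : ∑ j, (-Y) j = 0 := by simp [hY0]
    have hlam0 : (0:ℝ) ≤ ε/4 := by linarith
    have hlam1 : ε/4 ≤ 1 := by linarith
    have hexp : (n:ℝ)^s * Real.exp ((s:ℝ) * (ε/4)^2 - (ε/4) * (ε*s/2))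
        = (n:ℝ)^s * Real.exp (-(ε^2 * s)/16) := by
      congr 2
      ring
    set F : (Fin n → ℝ) → Finset (Fin s → Fin n) := fun W =>
      Finset.univ.filter (fun ω => ε*s/2 ≤ ∑ i, W (ω i)) with hF
    have hsub : Bad t ⊆ F X ∪ F (-X) ∪ (F Y ∪ F (-Y)) := by
      intro ω hω
      rw [hBad, Finset.mem_filter] at hω
      have habs := Complex.norm_le_abs_re_add_abs_im (∑ i, ζ n ^ ((ω i :ℕ)*(t:ℕ)))
      have hre : (∑ i, ζ n ^ ((ω i :ℕ)*(t:ℕ))).re = ∑ i, X (ω i) := by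
        rw [Complex.re_sum]
      have him : (∑ i, ζ n ^ ((ω i :ℕ)*(t:ℕ))).im = ∑ i, Y (ω i) := by
        rw [Complex.im_sum]
      have hcase : ε*s/2 ≤ |∑ i, X (ω i)| ∨ ε*s/2 ≤ |∑ i, Y (ω i)| := by
        by_contra hc
        push_neg at hc
        rw [hre, him] at habs
        have := hω.2
        cases abs_cases (∑ i, X (ω i)) with
        | inl h1 => cases abs_cases (∑ i, Y (ω i)) with
          | inl h2 => linarith [hc.1, hc.2]
          | inr h2 => linarith [hc.1, hc.2]
        | inr h1 => cases abs_cases (∑ i, Y (ω i)) with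
          | inl h2 => linarith [hc.1, hc.2]
          | inr h2 => linarith [hc.1, hc.2]
      simp only [Finset.mem_union]
      have memF : ∀ W : Fin n → ℝ, ε*s/2 ≤ ∑ i, W (ω i) → ω ∈ F W := by
        intro W hW
        rw [hF, Finset.mem_filter]
        exact ⟨Finset.mem_univ _, hW⟩
      rcases hcase with h | h
      · rcases le_abs.1 h with h' | h'
        · exact Or.inl (Or.inl (memF X h'))
        · refine Or.inl (Or.inr (memF (-X) ?_))
          have hneg : ∑ i, (-X) (ω i) = - ∑ i, X (ω i) := by simp
          rw [hneg]
          exact h'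
      · rcases le_abs.1 h with h' | h'
        · exact Or.inr (Or.inl (memF Y h'))
        · refine Or.inr (Or.inr (memF (-Y) ?_))
          have hneg : ∑ i, (-Y) (ω i) = - ∑ i, Y (ω i) := by simp
          rw [hneg]
          exact h'
    have hcount : ∀ W : Fin n → ℝ, (∀ j, |W j| ≤ 1) → (∑ j, W j = 0) →
        ((F W).card : ℝ) ≤ (n:ℝ)^s * Real.exp (-(ε^2 * s)/16) := by
      intro W hWb hW0
      rw [← hexp]
      exact count_bad W hWb hW0 hlam0 hlam1
    calc ((Bad t).card : ℝ) ≤ ((F X ∪ F (-X) ∪ (F Y ∪ F (-Y))).card : ℝ) := by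
          exact_mod_cast Finset.card_le_card hsub
      _ ≤ (((F X ∪ F (-X)).card : ℝ) + ((F Y ∪ F (-Y)).card : ℝ)) := by
          exact_mod_cast Finset.card_union_le _ _
      _ ≤ ((F X).card : ℝ) + ((F (-X)).card : ℝ) + (((F Y).card : ℝ) + ((F (-Y)).card : ℝ)) := by
          have h1 := Finset.card_union_le (F X) (F (-X))
          have h2 := Finset.card_union_le (F Y) (F (-Y))
          have h1' : ((F X ∪ F (-X)).card : ℝ) ≤ ((F X).card : ℝ) + ((F (-X)).card : ℝ) := by
            exact_mod_cast h1
          have h2' : ((F Y ∪ F (-Y)).card : ℝ) ≤ ((F Y).card : ℝ) + ((F (-Y)).card : ℝ) := by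
            exact_mod_cast h2
          linarith
      _ ≤ 4 * (n:ℝ)^s * Real.exp (-(ε^2 * s)/16) := by
          have a1 := hcount X hXb hX0
          have a2 := hcount (-X) hXb' hX0'
          have a3 := hcount Y hYb hY0
          have a4 := hcount (-Y) hYb' hY0'
          linarith
  have htotal : ((n:ℝ))^s ≤ (n:ℝ) * (4 * (n:ℝ)^s * Real.exp (-(ε^2 * s)/16)) := by
    have h1 : ((Finset.univ : Finset (Fin s → Fin n)).card : ℝ) = (n:ℝ)^s := by
      simp
    have h2 := Finset.card_le_card cover
    have h3 := Finset.card_biUnion_le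
      (s := Finset.univ.filter (fun u : Fin n => (u:ℕ) ≠ 0)) (t := Bad)
    have h4 : (((Finset.univ.filter (fun u : Fin n => (u:ℕ) ≠ 0)).biUnion Bad).card : ℝ)
        ≤ ∑ u ∈ Finset.univ.filter (fun u : Fin n => (u:ℕ) ≠ 0), ((Bad u).card : ℝ) := by
      exact_mod_cast h3
    have h5 : ∑ u ∈ Finset.univ.filter (fun u : Fin n => (u:ℕ) ≠ 0), ((Bad u).card : ℝ)
        ≤ ∑ _u ∈ Finset.univ.filter (fun u : Fin n => (u:ℕ) ≠ 0),
            (4 * (n:ℝ)^s * Real.exp (-(ε^2 * s)/16)) :=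
      Finset.sum_le_sum fun u hu => hbad u (Finset.mem_filter.1 hu).2
    have h6 : ((Finset.univ.filter (fun u : Fin n => (u:ℕ) ≠ 0)).card : ℝ) ≤ (n:ℝ) := by
      calc ((Finset.univ.filter (fun u : Fin n => (u:ℕ) ≠ 0)).card : ℝ)
          ≤ ((Finset.univ : Finset (Fin n)).card : ℝ) := by
            exact_mod_cast Finset.card_filter_le _ _
        _ = (n:ℝ) := by simp
    rw [Finset.sum_const, nsmul_eq_mul] at h5
    have hnn : (0:ℝ) ≤ 4 * (n:ℝ)^s * Real.exp (-(ε^2 * s)/16) := by positivity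
    calc ((n:ℝ))^s = ((Finset.univ : Finset (Fin s → Fin n)).card : ℝ) := h1.symm
      _ ≤ (((Finset.univ.filter (fun u : Fin n => (u:ℕ) ≠ 0)).biUnion Bad).card : ℝ) := by
          exact_mod_cast h2
      _ ≤ ((Finset.univ.filter (fun u : Fin n => (u:ℕ) ≠ 0)).card : ℝ)
            * (4 * (n:ℝ)^s * Real.exp (-(ε^2 * s)/16)) := le_trans h4 h5
      _ ≤ (n:ℝ) * (4 * (n:ℝ)^s * Real.exp (-(ε^2 * s)/16)) :=
          mul_le_mul_of_nonneg_right h6 hnn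
  have hns : (0:ℝ) < (n:ℝ)^s := by positivity
  have hkey : Real.exp (-(ε^2 * s)/16) < 1/(4*(n:ℝ)) := by
    have h4n : (0:ℝ) < 4*(n:ℝ) := by positivity
    rw [show (1/(4*(n:ℝ))) = Real.exp (- Real.log (4*(n:ℝ))) by
      rw [Real.exp_neg, Real.exp_log h4n, one_div]]
    apply Real.exp_lt_exp.2
    push_cast at hs ⊢
    linarith
  have hlt : (n:ℝ) * (4 * (n:ℝ)^s * Real.exp (-(ε^2 * s)/16)) < (n:ℝ)^s := by
    have hn1 : (0:ℝ) < (n:ℝ) := by exact_mod_cast hn0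
    calc (n:ℝ) * (4 * (n:ℝ)^s * Real.exp (-(ε^2 * s)/16))
        < (n:ℝ) * (4 * (n:ℝ)^s * (1/(4*(n:ℝ)))) := by
          apply mul_lt_mul_of_pos_left _ hn1
          apply mul_lt_mul_of_pos_left hkey (by positivity)
      _ = (n:ℝ)^s := by field_simp
  linarith

lemma good_int {n s : ℕ} (hn : 0 < n) {ε : ℝ} {ω : Fin s → Fin n} (h : goodFin n s ε ω)
    (a : ℤ) (ha : ¬ (n:ℤ) ∣ a) :
    ‖∑ i, ζ n ^ (((ω i : ℕ) : ℤ) * a)‖ ≤ ε * s := by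
  have hnz : (n:ℤ) ≠ 0 := by exact_mod_cast hn.ne'
  have hr0 : 0 ≤ a % n := Int.emod_nonneg a hnz
  have hrlt : a % n < n := Int.emod_lt_of_pos a (by exact_mod_cast hn)
  set r : ℕ := (a % n).toNat with hrdef
  have hrcast : ((r:ℕ):ℤ) = a % n := Int.toNat_of_nonneg hr0
  have hrn : r < n := by omega
  have hrne : r ≠ 0 := by
    intro h0
    apply ha
    have : a % n = 0 := by omega
    exact Int.dvd_of_emod_eq_zero this
  set t : Fin n := ⟨r, hrn⟩ with htdef
  have hdvd : (n:ℤ) ∣ (a - r) := by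
    refine ⟨a / n, ?_⟩
    have := Int.emod_add_mul_ediv a n
    omega
  have hterm : ∀ i : Fin s, ζ n ^ (((ω i : ℕ) : ℤ) * a) = ζ n ^ ((ω i : ℕ) * (t : ℕ)) := by
    intro i
    have hsplit : (((ω i : ℕ) : ℤ) * a) = ((ω i : ℕ) : ℤ) * r + ((ω i : ℕ) : ℤ) * (a - r) := by
      ring
    rw [hsplit, zpow_add₀ (zeta_ne_zero n)]
    have h1 : ζ n ^ (((ω i : ℕ) : ℤ) * (a - r)) = 1 :=
      (zeta_zpow_eq_one_iff hn _).2 (Dvd.dvd.mul_left hdvd _)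
    rw [h1, mul_one]
    rw [← zpow_natCast (ζ n) ((ω i : ℕ) * (t:ℕ))]
    have hexp : ((ω i : ℕ) : ℤ) * (r:ℤ) = (((ω i : ℕ) * (t:ℕ) : ℕ) : ℤ) := by
      simp only [htdef]
      push_cast
      ring
    rw [hexp]
  rw [Finset.sum_congr rfl fun i _ => hterm i]
  exact h t (by simpa [htdef] using hrne)

noncomputable def Bf (n s : ℕ) (ω : Fin s → Fin n) (a : ℤ) : ℂ :=
  (1/(s:ℂ)) * ∑ i, ζ n ^ (((ω i : ℕ) : ℤ) * a)

noncomputable def Phi (n s : ℕ) (ω : Fin s → Fin n) (v : Fin n → ℂ) : Fin n → ℂ := fun f =>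
  ∑ g, v g * Bf n s ω (((f:ℕ):ℤ) - ((g:ℕ):ℤ))

noncomputable def Samp (n s : ℕ) (ω : Fin s → Fin n) (x : Fin n → ℂ) : Fin n → ℂ := fun f =>
  ((Real.sqrt n : ℂ)/s) * ∑ i, x (ω i) * ζ n ^ ((ω i : ℕ) * (f:ℕ))

lemma Bf_zero {n s : ℕ} (hs : 0 < s) (ω : Fin s → Fin n) : Bf n s ω 0 = 1 := by
  have hsC : (s:ℂ) ≠ 0 := by exact_mod_cast hs.ne'
  rw [Bf]
  simp only [mul_zero, zpow_zero]
  rw [Finset.sum_const, Finset.card_univ, Fintype.card_fin, nsmul_eq_mul, mul_one]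
  field_simp

lemma Samp_eq_Phi {n s : ℕ} (hn : 0 < n) (hs : 0 < s) (ω : Fin s → Fin n) (x : Fin n → ℂ) :
    Samp n s ω x = Phi n s ω (dft n x) := by
  funext f
  have hsC : (s:ℂ) ≠ 0 := by exact_mod_cast hs.ne'
  have step : ∀ g : Fin n, dft n x g * Bf n s ω (((f:ℕ):ℤ) - ((g:ℕ):ℤ))
      = (1/(s:ℂ)) * ∑ i, (dft n x g * ζ n ^ (-(((ω i : ℕ)) * ((g:ℕ)) : ℤ)))
          * ζ n ^ (((ω i : ℕ)) * ((f:ℕ))) := by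
    intro g
    rw [Bf, mul_left_comm]
    congr 1
    rw [Finset.mul_sum]
    refine Finset.sum_congr rfl fun i _ => ?_
    have hz : ζ n ^ (-(((ω i : ℕ) : ℤ) * (((g:ℕ)) : ℤ))) * ζ n ^ (((ω i : ℕ)) * ((f:ℕ)))
        = ζ n ^ ((((ω i : ℕ)):ℤ) * ((((f:ℕ)):ℤ) - (((g:ℕ)):ℤ))) := by
      rw [← zpow_natCast (ζ n) (((ω i : ℕ)) * ((f:ℕ))), ← zpow_add₀ (zeta_ne_zero n)]
      congr 1
      push_cast
      ring
    rw [mul_assoc, hz]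
  calc Samp n s ω x f
      = (1/(s:ℂ)) * ∑ i, ((Real.sqrt n : ℂ) * x (ω i)) * ζ n ^ (((ω i : ℕ)) * ((f:ℕ))) := by
        rw [Samp, Finset.mul_sum, Finset.mul_sum]
        refine Finset.sum_congr rfl fun i _ => ?_
        field_simp
    _ = (1/(s:ℂ)) * ∑ i, (∑ g, dft n x g * ζ n ^ (-(((ω i : ℕ)) * ((g:ℕ)) : ℤ)))
          * ζ n ^ (((ω i : ℕ)) * ((f:ℕ))) := by
        congr 1
        refine Finset.sum_congr rfl fun i _ => ?_
        rw [inversion hn x (ω i)]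
    _ = ∑ g, dft n x g * Bf n s ω (((f:ℕ):ℤ) - ((g:ℕ):ℤ)) := by
        rw [Finset.sum_congr rfl fun g (_ : g ∈ Finset.univ) => step g]
        rw [← Finset.mul_sum, Finset.sum_comm]
        congr 1
        refine Finset.sum_congr rfl fun i _ => ?_
        rw [Finset.sum_mul]
    _ = Phi n s ω (dft n x) f := rfl

lemma phi_err {n s : ℕ} (hn : 0 < n) (hs : 0 < s) {ε : ℝ} (hε : 0 ≤ ε)
    {ω : Fin s → Fin n}
    (hgood : ∀ a : ℤ, ¬(n:ℤ) ∣ a → ‖∑ i, ζ n ^ (((ω i :ℕ):ℤ) * a)‖ ≤ ε * s)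
    (v : Fin n → ℂ) (f : Fin n) :
    ‖Phi n s ω v f - v f‖ ≤ ε * ∑ g, ‖v g‖ := by
  have hsR : (0:ℝ) < s := by exact_mod_cast hs
  have hBf : ∀ g : Fin n, g ≠ f → ‖Bf n s ω (((f:ℕ):ℤ) - ((g:ℕ):ℤ))‖ ≤ ε := by
    intro g hg
    have hdvd : ¬ (n:ℤ) ∣ (((f:ℕ):ℤ) - ((g:ℕ):ℤ)) := by
      intro hd
      have h1 : ((f:ℕ):ℤ) < n := by exact_mod_cast f.isLt
      have h2 : ((g:ℕ):ℤ) < n := by exact_mod_cast g.isLt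
      rcases hd with ⟨m, hm⟩
      have : ((f:ℕ):ℤ) - ((g:ℕ):ℤ) = 0 := by
        rcases lt_trichotomy m 0 with h | h | h
        · nlinarith [h1, h2, (by positivity : (0:ℤ) ≤ ((f:ℕ):ℤ)), (by positivity : (0:ℤ) ≤ ((g:ℕ):ℤ))]
        · simp [hm, h]
        · nlinarith [h1, h2, (by positivity : (0:ℤ) ≤ ((f:ℕ):ℤ)), (by positivity : (0:ℤ) ≤ ((g:ℕ):ℤ))]
      exact hg (Fin.ext (by omega))
    have := hgood _ hdvd
    rw [Bf, norm_mul]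
    have habs1 : ‖1/(s:ℂ)‖ = 1/(s:ℝ) := by
      rw [norm_div, norm_one]
      congr 1
      exact Complex.norm_natCast s
    rw [habs1]
    rw [div_mul_eq_mul_div, one_mul, div_le_iff₀ hsR]
    calc ‖∑ i, ζ n ^ (((ω i :ℕ):ℤ) * (((f:ℕ):ℤ) - ((g:ℕ):ℤ)))‖ ≤ ε * s := this
      _ = ε * s := rfl
  have hsplit : Phi n s ω v f - v f = ∑ g ∈ Finset.univ.erase f,
      v g * Bf n s ω (((f:ℕ):ℤ) - ((g:ℕ):ℤ)) := by
    rw [Phi]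
    rw [← Finset.add_sum_erase _ _ (Finset.mem_univ f)]
    rw [sub_self, Bf_zero hs, mul_one]
    ring
  rw [hsplit]
  calc ‖∑ g ∈ Finset.univ.erase f, v g * Bf n s ω (((f:ℕ):ℤ) - ((g:ℕ):ℤ))‖
      ≤ ∑ g ∈ Finset.univ.erase f, ‖v g * Bf n s ω (((f:ℕ):ℤ) - ((g:ℕ):ℤ))‖ := by
        exact norm_sum_le _ _
    _ ≤ ∑ g ∈ Finset.univ.erase f, ‖v g‖ * ε := by
        refine Finset.sum_le_sum fun g hg => ?_
        rw [norm_mul]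
        exact mul_le_mul_of_nonneg_left (hBf g (Finset.mem_erase.1 hg).1) (norm_nonneg _)
    _ = ε * ∑ g ∈ Finset.univ.erase f, ‖v g‖ := by
        rw [Finset.mul_sum]
        exact Finset.sum_congr rfl fun _ _ => mul_comm _ _
    _ ≤ ε * ∑ g, ‖v g‖ := by
        apply mul_le_mul_of_nonneg_left _ hε
        exact Finset.sum_le_sum_of_subset_of_nonneg (Finset.erase_subset _ _)
          (fun g _ _ => norm_nonneg _)

lemma exists_topset {n : ℕ} (v : Fin n → ℂ) {m : ℕ} (hm : m ≤ n) :
    ∃ K : Finset (Fin n), K.card = m ∧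
      ∀ f, f ∉ K → ∀ g ∈ K, ‖v f‖ ≤ ‖v g‖ := by
  have hne : (Finset.univ.filter (fun K : Finset (Fin n) => K.card = m)).Nonempty := by
    obtain ⟨t, _, ht⟩ := Finset.exists_subset_card_eq (s := (Finset.univ : Finset (Fin n))) (n := m) (by simpa)
    exact ⟨t, by simp [ht]⟩
  obtain ⟨K, hK, hmax⟩ := Finset.exists_max_image _ (fun K => ∑ g ∈ K, ‖v g‖) hne
  rw [Finset.mem_filter] at hK
  refine ⟨K, hK.2, ?_⟩
  intro f hf g hg
  by_contra hlt
  push_neg at hlt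
  set K' := insert f (K.erase g) with hK'def
  have hfK : f ∉ K.erase g := fun h => hf (Finset.mem_of_mem_erase h)
  have hm1 : 1 ≤ m := hK.2 ▸ Finset.card_pos.2 ⟨g, hg⟩
  have hcard : K'.card = m := by
    rw [hK'def, Finset.card_insert_of_notMem hfK, Finset.card_erase_of_mem hg, hK.2]
    omega
  have herase := Finset.add_sum_erase K (fun a => ‖v a‖) hg
  have hsum : ∑ a ∈ K, ‖v a‖ < ∑ a ∈ K', ‖v a‖ := by
    rw [hK'def, Finset.sum_insert hfK]
    linarith
  have := hmax K' (Finset.mem_filter.2 ⟨Finset.mem_univ _, hcard⟩)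
  linarith

lemma tail_exists {n k : ℕ} (hk : k ≤ n) (y : Fin n → ℂ) :
    ∃ T : Finset (Fin n), T.card = k ∧ (∑ i ∈ Tᶜ, ‖y i‖) = tailNorm n k y := by
  set A : Set ℝ := ((fun T : Finset (Fin n) => ∑ i ∈ Tᶜ, ‖y i‖) ''
    {T : Finset (Fin n) | T.card = k}) with hA
  have hfin : A.Finite := Set.Finite.image _ (Set.toFinite _)
  have hne : A.Nonempty := by
    obtain ⟨t, _, ht⟩ := Finset.exists_subset_card_eq (s := (Finset.univ : Finset (Fin n))) (n := k) (by simpa)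
    exact ⟨_, ⟨t, ht, rfl⟩⟩
  have hmem : sInf A ∈ A := Set.Nonempty.csInf_mem hne hfin
  obtain ⟨T, hT, hTeq⟩ := hmem
  exact ⟨T, hT, hTeq⟩

lemma tail_nonneg {n k : ℕ} (hk : k ≤ n) (y : Fin n → ℂ) : 0 ≤ tailNorm n k y := by
  obtain ⟨T, _, hTeq⟩ := tail_exists hk y
  rw [← hTeq]
  exact Finset.sum_nonneg fun i _ => norm_nonneg _

end SFT

open SFT in
set_option maxHeartbeats 1000000 in
/-- Deterministic sparse Fourier transform, super-linear time version (sample complexity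
content): `O(k² log n)` samples suffice for the `ℓ∞/ℓ1` guarantee. -/
theorem deterministic_SFT_superlinear :
    ∃ C1 C2 c : ℝ, 0 < C1 ∧ 0 < C2 ∧ 0 < c ∧
      ∀ n k : ℕ, (∃ m : ℕ, n = 2 ^ m) → 1 ≤ k → k ≤ n →
        ∃ (S : Finset (Fin n)) (R : (Fin n → ℂ) → (Fin n → ℂ)),
          (S.card : ℝ) ≤ C1 * (k : ℝ) ^ 2 * Real.log n ∧
          (∀ x y : Fin n → ℂ, (∀ i ∈ S, x i = y i) → R x = R y) ∧
          (∀ x : Fin n → ℂ,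
            (∀ f : Fin n,
                ‖dft n x f‖ ≤ (n : ℝ) ^ c * tailNorm n k (dft n x) / k) →
            (({i : Fin n | R x i ≠ 0}.ncard : ℝ) ≤ C2 * k ∧
             ∀ f : Fin n,
               ‖dft n x f - R x f‖ ≤ (1 / k) * tailNorm n k (dft n x))) := by
  refine ⟨30000, 5, 1, by norm_num, by norm_num, by norm_num, ?_⟩
  intro n k _hpow hk1 hkn
  have hk0 : 0 < k := hk1
  have hkR : (0:ℝ) < k := by exact_mod_cast hk0
  rcases Nat.lt_or_ge n 2 with hn2 | hn2
  · -- degenerate case n = 1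
    have hn1 : n = 1 := by omega
    have hk1' : k = 1 := by omega
    refine ⟨∅, fun _ => fun _ => 0, ?_, fun _ _ _ => rfl, ?_⟩
    · simp [hn1]
    · intro x hx
      constructor
      · have hempty : {i : Fin n | (fun _ : Fin n => (0:ℂ)) i ≠ 0} = ∅ := by
          ext i
          simp
        rw [hempty]
        simpa using by positivity
      · intro f
        have h1 := hx f
        have hnR : ((n:ℕ):ℝ) = 1 := by rw [hn1]; norm_num
        rw [Real.rpow_one, hnR] at h1
        show ‖dft n x f - 0‖ ≤ _
        calc ‖dft n x f - 0‖
            = ‖dft n x f‖ := by rw [sub_zero]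
          _ ≤ 1 * tailNorm n k (dft n x) / k := h1
          _ = (1/k) * tailNorm n k (dft n x) := by ring
  · -- main case: n ≥ 2
    have hn0 : 0 < n := by omega
    set ε : ℝ := 1/(24*k) with hεdef
    have hε0 : 0 < ε := by positivity
    have hk1R : (1:ℝ) ≤ k := by exact_mod_cast hk1
    have hε1 : ε ≤ 1 := by
      rw [hεdef, div_le_one (by positivity)]
      linarith
    set s : ℕ := ⌈9216*(k:ℝ)^2*Real.log (4*(n:ℝ))⌉₊ + 1 with hsdef
    have hs0 : 0 < s := Nat.succ_pos _
    have hss : 16 * Real.log (4*(n:ℝ)) < ε^2 * s := by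
      have hε2 : ε^2 = 1/(576*(k:ℝ)^2) := by
        rw [hεdef]
        field_simp
        ring
      have h1 : 9216*(k:ℝ)^2*Real.log (4*(n:ℝ)) < (s:ℝ) := by
        have h2 := Nat.le_ceil (9216*(k:ℝ)^2*Real.log (4*(n:ℝ)))
        have h3 : ((⌈9216*(k:ℝ)^2*Real.log (4*(n:ℝ))⌉₊ : ℕ) : ℝ) < (s:ℝ) := by
          rw [hsdef]
          push_cast
          linarith
        linarith
      rw [hε2]
      rw [div_mul_eq_mul_div, one_mul, lt_div_iff₀ (by positivity)]
      nlinarith [h1]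
    obtain ⟨ω, hgoodF⟩ := exists_good n s hn2 hε0 hε1 hss
    have hgood : ∀ a : ℤ, ¬(n:ℤ) ∣ a →
        ‖∑ i, ζ n ^ (((ω i :ℕ):ℤ) * a)‖ ≤ ε * s :=
      fun a ha => good_int hn0 hgoodF a ha
    set S : Finset (Fin n) := Finset.image ω Finset.univ with hSdef
    have hcard : ((S.card : ℕ) : ℝ) ≤ 30000 * (k:ℝ)^2 * Real.log n := by
      have h1 : S.card ≤ s := by
        calc S.card ≤ (Finset.univ : Finset (Fin s)).card := Finset.card_image_le
          _ = s := by simp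
      have hlog2 : (0.6931471803:ℝ) < Real.log 2 := Real.log_two_gt_d9
      have hlogn : Real.log 2 ≤ Real.log n := by
        apply Real.log_le_log (by norm_num)
        exact_mod_cast hn2
      have hlog4n : Real.log (4*(n:ℝ)) ≤ 3 * Real.log n := by
        rw [Real.log_mul (by norm_num) (Nat.cast_ne_zero.2 hn0.ne')]
        have h4 : Real.log 4 = 2 * Real.log 2 := by
          rw [show (4:ℝ) = 2^2 by norm_num, Real.log_pow]
          push_cast
          ring
        nlinarith [hlog2, hlogn]
      have hsle : (s:ℝ) ≤ 9216*(k:ℝ)^2*Real.log (4*(n:ℝ)) + 2 := by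
        rw [hsdef]
        push_cast
        have hlognn : (0:ℝ) ≤ Real.log (4*(n:ℝ)) := by
          apply Real.log_nonneg
          have : (2:ℝ) ≤ (n:ℝ) := by exact_mod_cast hn2
          linarith
        have := Nat.ceil_lt_add_one
          (mul_nonneg (by positivity : (0:ℝ) ≤ 9216*(k:ℝ)^2) hlognn)
        linarith
      have hk2 : (1:ℝ) ≤ (k:ℝ)^2 := by nlinarith
      have hlognpos : (0:ℝ) < Real.log n := by linarith
      have hprod : (1:ℝ)*(0.6931471803) ≤ (k:ℝ)^2 * Real.log n := by
        apply mul_le_mul hk2 (le_trans (le_of_lt hlog2) hlogn) (by norm_num) (by positivity)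
      calc ((S.card : ℕ):ℝ) ≤ (s:ℝ) := by exact_mod_cast h1
        _ ≤ 9216*(k:ℝ)^2*Real.log (4*(n:ℝ)) + 2 := hsle
        _ ≤ 9216*(k:ℝ)^2*(3*Real.log n) + 2 := by nlinarith [hlog4n]
        _ ≤ 30000 * (k:ℝ)^2 * Real.log n := by nlinarith [hprod]
    have hmn : min (5*k) n ≤ n := min_le_right _ _
    obtain ⟨topK, htopK1, htopK2⟩ :
        ∃ tk : (Fin n → ℂ) → Finset (Fin n), (∀ u, (tk u).card = min (5*k) n) ∧
          (∀ u : Fin n → ℂ, ∀ f, f ∉ tk u → ∀ g ∈ tk u,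
            ‖u f‖ ≤ ‖u g‖) := by
      choose tk h1 h2 using fun u : Fin n → ℂ => exists_topset u hmn
      exact ⟨tk, h1, h2⟩
    set stepF : (Fin n → ℂ) → (Fin n → ℂ) → (Fin n → ℂ) := fun x z =>
      fun f => if f ∈ topK (fun f' => z f' + Samp n s ω x f' - Phi n s ω z f')
        then z f + Samp n s ω x f - Phi n s ω z f else 0 with hstepdef
    refine ⟨S, fun x => (stepF x)^[n+2] (fun _ => 0), hcard, ?_, ?_⟩
    · -- depends only on S
      intro x y hxy
      have hSamp : Samp n s ω x = Samp n s ω y := by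
        funext f
        rw [Samp, Samp]
        congr 1
        refine Finset.sum_congr rfl fun i _ => ?_
        rw [hxy (ω i) (Finset.mem_image.2 ⟨i, Finset.mem_univ _, rfl⟩)]
      have hstepeq : stepF x = stepF y := by
        rw [hstepdef]
        simp only [hSamp]
      show (stepF x)^[n+2] (fun _ => 0) = (stepF y)^[n+2] (fun _ => 0)
      rw [hstepeq]
    · -- main analysis
      intro x hx
      obtain ⟨Tstar, hTcard, hTeq⟩ := tail_exists hkn (dft n x)
      obtain ⟨μ, hμdef⟩ : ∃ r : ℝ, r = tailNorm n k (dft n x) / k := ⟨_, rfl⟩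
      have hμ0 : 0 ≤ μ := by
        rw [hμdef]
        exact div_nonneg (tail_nonneg hkn _) (le_of_lt hkR)
      have htailk : ∑ i ∈ Tstarᶜ, ‖dft n x i‖ = k * μ := by
        rw [hTeq, hμdef]
        field_simp
      obtain ⟨ν, hνdef⟩ : ∃ g : ℕ → ℝ,
          g = fun t => (1/2:ℝ)^t * ((n:ℝ)*μ) + (1 - (1/2:ℝ)^t) * (2/3) * μ := ⟨_, rfl⟩
      have hν0 : ∀ t, 0 ≤ ν t := by
        intro t
        have h2 : (1/2:ℝ)^t ≤ 1 := pow_le_one₀ (by norm_num) (by norm_num)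
        have h3 : (0:ℝ) ≤ (1/2:ℝ)^t := by positivity
        have hnR : (0:ℝ) ≤ (n:ℝ) := Nat.cast_nonneg n
        have h4 : (0:ℝ) ≤ 1 - (1/2:ℝ)^t := by linarith
        have ha : (0:ℝ) ≤ (1/2:ℝ)^t * ((n:ℝ)*μ) := mul_nonneg h3 (mul_nonneg hnR hμ0)
        have hb : (0:ℝ) ≤ (1 - (1/2:ℝ)^t) * (2/3) * μ :=
          mul_nonneg (mul_nonneg h4 (by norm_num)) hμ0
        simp only [hνdef]
        linarith
      have hrec : ∀ t : ℕ, ν t / 2 + μ/3 = ν (t+1) := by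
        intro t
        simp only [hνdef, pow_succ]
        ring
      have hInv : ∀ t : ℕ, ∃ W : Finset (Fin n), W.card ≤ 5*k ∧
          (∀ f, f ∉ W → ((stepF x)^[t] (fun _ => 0)) f = 0) ∧
          (∀ f, ‖dft n x f - ((stepF x)^[t] (fun _ => 0)) f‖ ≤ ν t) := by
        intro t
        induction t with
        | zero =>
          refine ⟨∅, by simp, by simp, ?_⟩
          intro f
          simp only [Function.iterate_zero, id_eq]
          have h1 := hx f
          rw [Real.rpow_one] at h1
          have h2 : (n:ℝ) * tailNorm n k (dft n x) / k = ν 0 := by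
            simp only [hνdef, hμdef, pow_zero]
            ring
          rw [sub_zero]
          rw [← h2]
          exact h1
        | succ t ih =>
          obtain ⟨W, hWcard, hWzero, hWbound⟩ := ih
          set z : Fin n → ℂ := (stepF x)^[t] (fun _ => 0) with hzdef
          set u : Fin n → ℂ := fun f' => z f' + Samp n s ω x f' - Phi n s ω z f' with hudef
          have hiter : ((stepF x)^[t+1] (fun _ => 0))
              = fun f => if f ∈ topK u then u f else 0 := by
            rw [Function.iterate_succ_apply']
          obtain ⟨δ, hδdef⟩ : ∃ r : ℝ, r = ν t / 4 + μ / 24 := ⟨_, rfl⟩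
          have hu_err : ∀ f, ‖u f - dft n x f‖ ≤ δ := by
            intro f
            have hSP : Samp n s ω x f = Phi n s ω (dft n x) f :=
              congrFun (Samp_eq_Phi hn0 hs0 ω x) f
            have hPhiSub : Phi n s ω (fun g => dft n x g - z g) f
                = Phi n s ω (dft n x) f - Phi n s ω z f := by
              simp only [Phi, sub_mul, Finset.sum_sub_distrib]
            have hval : u f - dft n x f
                = Phi n s ω (fun g => dft n x g - z g) f - (dft n x f - z f) := by
              rw [hPhiSub, hudef]
              simp only
              rw [hSP]
              ring
            have hperr := phi_err hn0 hs0 (le_of_lt hε0) hgood (fun g => dft n x g - z g) f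
            have hl1 : ∑ g, ‖dft n x g - z g‖ ≤ 6*(k:ℝ)*ν t + k*μ := by
              have hsplit := Finset.sum_add_sum_compl (Tstar ∪ W)
                (fun g => ‖dft n x g - z g‖)
              have hA : ∑ g ∈ Tstar ∪ W, ‖dft n x g - z g‖ ≤ 6*(k:ℝ) * ν t := by
                have hb := Finset.sum_le_card_nsmul (Tstar ∪ W)
                  (fun g => ‖dft n x g - z g‖) (ν t)
                  (fun g _ => hWbound g)
                rw [nsmul_eq_mul] at hb
                have hcardU : ((Tstar ∪ W).card : ℝ) ≤ 6*(k:ℝ) := by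
                  have := Finset.card_union_le Tstar W
                  have h2 : (Tstar ∪ W).card ≤ 6*k := by omega
                  exact_mod_cast h2
                calc ∑ g ∈ Tstar ∪ W, ‖dft n x g - z g‖
                    ≤ ((Tstar ∪ W).card : ℝ) * ν t := hb
                  _ ≤ 6*(k:ℝ) * ν t := mul_le_mul_of_nonneg_right hcardU (hν0 t)
              have hC : ∑ g ∈ (Tstar ∪ W)ᶜ, ‖dft n x g - z g‖ ≤ (k:ℝ)*μ := by
                have heq : ∀ g ∈ (Tstar ∪ W)ᶜ,
                    ‖dft n x g - z g‖ = ‖dft n x g‖ := by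
                  intro g hg
                  rw [Finset.mem_compl, Finset.mem_union] at hg
                  push_neg at hg
                  rw [hWzero g hg.2, sub_zero]
                rw [Finset.sum_congr rfl heq]
                calc ∑ g ∈ (Tstar ∪ W)ᶜ, ‖dft n x g‖
                    ≤ ∑ g ∈ Tstarᶜ, ‖dft n x g‖ := by
                      apply Finset.sum_le_sum_of_subset_of_nonneg
                      · exact Finset.compl_subset_compl.2 Finset.subset_union_left
                      · intro g _ _
                        exact norm_nonneg _
                  _ = (k:ℝ)*μ := htailk
              linarith
            have hεmul : ε * (6*(k:ℝ)*ν t + k*μ) = δ := by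
              rw [hεdef, hδdef]
              field_simp
              ring
            calc ‖u f - dft n x f‖
                = ‖Phi n s ω (fun g => dft n x g - z g) f - (dft n x f - z f)‖ := by
                  rw [hval]
              _ ≤ ε * ∑ g, ‖dft n x g - z g‖ := hperr
              _ ≤ ε * (6*(k:ℝ)*ν t + k*μ) :=
                  mul_le_mul_of_nonneg_left hl1 (le_of_lt hε0)
              _ = δ := hεmul
          refine ⟨topK u, ?_, ?_, ?_⟩
          · rw [htopK1 u]
            exact min_le_left _ _
          · intro f hf
            rw [hiter]
            simp [hf]
          · intro f
            rw [hiter]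
            by_cases hf : f ∈ topK u
            · simp only [if_pos hf]
              have h1 := hu_err f
              rw [norm_sub_rev]
              calc ‖u f - dft n x f‖ ≤ δ := h1
                _ ≤ ν (t+1) := by
                    rw [← hrec t, hδdef]
                    linarith [hν0 t, hμ0]
            · simp only [if_neg hf, sub_zero]
              rcases le_or_gt (‖dft n x f‖) (2*δ) with hcase | hcase
              · calc ‖dft n x f‖ ≤ 2*δ := hcase
                  _ ≤ ν (t+1) := by
                      rw [← hrec t, hδdef]
                      linarith [hμ0]
              · rcases le_or_gt n (5*k) with hn5k | h5kn
                · exfalso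
                  have hc1 : (topK u).card = n := by
                    rw [htopK1 u]
                    omega
                  have hc2 : topK u = Finset.univ :=
                    Finset.eq_univ_of_card _ (by rw [hc1]; simp)
                  exact hf (hc2 ▸ Finset.mem_univ f)
                · have hGcard : 4*k ≤ (topK u \ Tstar).card := by
                    have hle := Finset.le_card_sdiff Tstar (topK u)
                    have hc1 : (topK u).card = 5*k := by
                      rw [htopK1 u]
                      omega
                    omega
                  have hglb : ∀ g ∈ topK u \ Tstar,
                      ‖dft n x f‖ - 2*δ ≤ ‖dft n x g‖ := by
                    intro g hg
                    rw [Finset.mem_sdiff] at hg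
                    have h1 : ‖u f‖ ≤ ‖u g‖ :=
                      htopK2 u f hf g hg.1
                    have h2 := hu_err f
                    have h3 := hu_err g
                    have h4 := abs_le.1 (abs_norm_sub_norm_le (u f) (dft n x f))
                    have h5 := abs_le.1 (abs_norm_sub_norm_le (u g) (dft n x g))
                    linarith [h4.1, h4.2, h5.1, h5.2]
                  have hsum1 : (4*(k:ℝ)) * (‖dft n x f‖ - 2*δ)
                      ≤ ∑ g ∈ topK u \ Tstar, ‖dft n x g‖ := by
                    have hbound := Finset.card_nsmul_le_sum (topK u \ Tstar)
                      (fun g => ‖dft n x g‖)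
                      (‖dft n x f‖ - 2*δ) hglb
                    rw [nsmul_eq_mul] at hbound
                    have hXpos : 0 ≤ ‖dft n x f‖ - 2*δ := by linarith
                    have hGR : (4*(k:ℝ)) ≤ ((topK u \ Tstar).card : ℝ) := by
                      exact_mod_cast hGcard
                    calc (4*(k:ℝ)) * (‖dft n x f‖ - 2*δ)
                        ≤ ((topK u \ Tstar).card : ℝ) * (‖dft n x f‖ - 2*δ) :=
                          mul_le_mul_of_nonneg_right hGR hXpos
                      _ ≤ _ := hbound
                  have hsum2 : ∑ g ∈ topK u \ Tstar, ‖dft n x g‖ ≤ (k:ℝ)*μ := by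
                    rw [← htailk]
                    apply Finset.sum_le_sum_of_subset_of_nonneg
                    · intro g hg
                      rw [Finset.mem_sdiff] at hg
                      exact Finset.mem_compl.2 hg.2
                    · intro g _ _
                      exact norm_nonneg _
                  have hfinal : ‖dft n x f‖ ≤ μ/4 + 2*δ := by
                    nlinarith [hsum1.trans hsum2]
                  calc ‖dft n x f‖ ≤ μ/4 + 2*δ := hfinal
                    _ ≤ ν (t+1) := by
                        rw [← hrec t, hδdef]
                        linarith [hν0 t]
      obtain ⟨W, hWcard, hWzero, hWbound⟩ := hInv (n+2)
      constructor
      · have hsub : {i : Fin n | ((stepF x)^[n+2] (fun _ => 0)) i ≠ 0} ⊆ ↑W := by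
          intro i hi
          by_contra hiW
          exact hi (hWzero i (by simpa using hiW))
        calc ({i : Fin n | ((stepF x)^[n+2] (fun _ => 0)) i ≠ 0}.ncard : ℝ) ≤ (W.card : ℝ) := by
              have h1 := Set.ncard_le_ncard hsub (W.finite_toSet)
              rw [Set.ncard_coe_finset] at h1
              exact_mod_cast h1
          _ ≤ 5*(k:ℝ) := by exact_mod_cast hWcard
      · intro f
        have h1 := hWbound f
        have h2n : (n:ℝ) < 2^n := by exact_mod_cast (Nat.lt_two_pow_self (n := n))
        have hq : (1/2:ℝ)^(n+2)*((n:ℝ)*μ) ≤ μ/3 := by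
          have hp : (1/2:ℝ)^(n+2) = 1/(2:ℝ)^(n+2) := by
            rw [div_pow, one_pow]
          have h4 : (2:ℝ)^(n+2) = 4*2^n := by ring
          have h5 : (1/2:ℝ)^(n+2)*(n:ℝ) ≤ 1/3 := by
            rw [hp, div_mul_eq_mul_div, one_mul, div_le_iff₀ (by positivity), h4]
            nlinarith [h2n]
          calc (1/2:ℝ)^(n+2)*((n:ℝ)*μ) = ((1/2:ℝ)^(n+2)*(n:ℝ))*μ := by ring
            _ ≤ (1/3)*μ := mul_le_mul_of_nonneg_right h5 hμ0
            _ = μ/3 := by ring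
        have hfinal : ν (n+2) ≤ μ := by
          simp only [hνdef]
          have h3 : (0:ℝ) ≤ (1/2:ℝ)^(n+2) := by positivity
          nlinarith [hq, hμ0]
        calc ‖dft n x f - ((stepF x)^[n+2] (fun _ => 0)) f‖ ≤ ν (n+2) := h1
          _ ≤ μ := hfinal
          _ = (1/k) * tailNorm n k (dft n x) := by
              rw [hμdef]
              ring
end

section
/- There exist absolute constants C1, C2, c > 0 such that the following holds for every n that is a power of 2 and every integer 1 ≤ k ≤ n. There exist a set S ⊆ [n] with |S| ≤ C1·k²·log² n and a function R : ℂ^n → ℂ^n depending only on the coordinates in S (i.e., if x and y agree on all coordinates in S then R(x) = R(y)) such that for every x ∈ ℂ^n whose DFT satisfies ‖x̂‖_∞ ≤ n^c·‖x̂_{−k}‖₁/k, the output R(x) has at most C2·k nonzero coordinates and ‖x̂ − R(x)‖_∞ ≤ (1/k)·‖x̂_{−k}‖₁. (This is the sample-complexity content of the paper's Theorem on deterministic Sparse Fourier Transform with sublinear time; the sublinear running-time claim is omitted.) -/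
open Finset

/-! ### The character `en` -/

noncomputable def en (n : ℕ) (t : ℤ) : ℂ :=
  Complex.exp (2 * (Real.pi : ℂ) * Complex.I * t / n)

lemma en_add (n : ℕ) (a b : ℤ) : en n (a + b) = en n a * en n b := by
  rw [en, en, en, ← Complex.exp_add]
  congr 1
  push_cast
  ring

lemma en_zero (n : ℕ) : en n 0 = 1 := by
  simp [en]

lemma en_conj (n : ℕ) (a : ℤ) : (starRingEnd ℂ) (en n a) = en n (-a) := by
  rw [en, en, ← Complex.exp_conj]
  congr 1
  simp only [map_div₀, map_mul, Complex.conj_I, Complex.conj_ofReal, map_intCast, map_natCast,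
    map_ofNat]
  push_cast
  ring

lemma en_nat_mul (n : ℕ) (a : ℤ) (b : ℕ) : en n (a * b) = (en n a) ^ b := by
  induction b with
  | zero => simpa using en_zero n
  | succ b ih =>
    have h : a * ((b : ℕ) + 1 : ℤ) = a * b + a := by ring
    rw [Nat.cast_succ, h, en_add, ih, pow_succ]

lemma en_n_mul (n : ℕ) (hn : n ≠ 0) (b : ℤ) : en n ((n : ℤ) * b) = 1 := by
  rw [en]
  have hnc : (n : ℂ) ≠ 0 := Nat.cast_ne_zero.mpr hn
  have h : 2 * (Real.pi : ℂ) * Complex.I * (((n : ℤ) * b : ℤ) : ℂ) / n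
      = (b : ℂ) * (2 * Real.pi * Complex.I) := by
    push_cast
    field_simp
  rw [h, Complex.exp_int_mul_two_pi_mul_I]

lemma en_periodic (n : ℕ) (hn : n ≠ 0) (a b : ℤ) : en n (a + (n : ℤ) * b) = en n a := by
  rw [en_add, en_n_mul n hn, mul_one]

lemma en_eq_one_of_dvd (n : ℕ) (hn : n ≠ 0) {a : ℤ} (h : (n : ℤ) ∣ a) : en n a = 1 := by
  obtain ⟨c, rfl⟩ := h
  exact en_n_mul n hn c

lemma en_ne_one (n : ℕ) (hn : n ≠ 0) {a : ℤ} (h : ¬ (n : ℤ) ∣ a) : en n a ≠ 1 := by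
  intro he
  rw [en, Complex.exp_eq_one_iff] at he
  obtain ⟨c, hc⟩ := he
  have hnc : (n : ℂ) ≠ 0 := Nat.cast_ne_zero.mpr hn
  have h2 : (2 * (Real.pi : ℂ) * Complex.I) ≠ 0 := by
    simp [Real.pi_ne_zero, Complex.I_ne_zero]
  rw [div_eq_iff hnc] at hc
  have hc' : 2 * (Real.pi : ℂ) * Complex.I * (a : ℂ)
      = 2 * (Real.pi : ℂ) * Complex.I * ((c : ℂ) * n) := by
    rw [hc]; ring
  have hac : (a : ℂ) = ((c * n : ℤ) : ℂ) := by
    have := mul_left_cancel₀ h2 hc'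
    rw [this]; push_cast; ring
  have : a = c * n := Int.cast_injective hac
  exact h ⟨c, by rw [this]; ring⟩

lemma abs_en (n : ℕ) (t : ℤ) : ‖en n t‖ = 1 := by
  have h : en n t = Complex.exp (((2 * Real.pi * t / n : ℝ) : ℂ) * Complex.I) := by
    rw [en]; congr 1; push_cast; ring
  rw [h, Complex.norm_exp_ofReal_mul_I]

lemma sum_en (n : ℕ) (hn : 0 < n) (a : ℤ) :
    ∑ x : Fin n, en n (a * (x : ℕ)) = if (n : ℤ) ∣ a then (n : ℂ) else 0 := by
  by_cases h : (n : ℤ) ∣ a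
  · simp only [if_pos h]
    have : ∀ x : Fin n, en n (a * (x : ℕ)) = 1 := fun x =>
      en_eq_one_of_dvd n hn.ne' (Dvd.dvd.mul_right h _)
    simp [this]
  · simp only [if_neg h]
    have hne : en n a ≠ 1 := en_ne_one n hn.ne' h
    have hsum : ∑ x : Fin n, en n (a * (x : ℕ)) = ∑ i ∈ Finset.range n, (en n a) ^ i := by
      rw [Fin.sum_univ_eq_sum_range (fun i => en n (a * (i : ℕ)))]
      exact Finset.sum_congr rfl fun i _ => en_nat_mul n a i
    rw [hsum, geom_sum_eq hne]
    have hpow : (en n a) ^ n = 1 := by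
      rw [← en_nat_mul]
      exact en_eq_one_of_dvd n hn.ne' (Dvd.dvd.mul_left (dvd_refl ((n:ℕ) : ℤ)) a)
    rw [hpow]
    simp

/-! ### dft basics -/

lemma dft_eq (n : ℕ) (x : Fin n → ℂ) (f : Fin n) :
    dft n x f = (1 / (Real.sqrt n) : ℂ) * ∑ j : Fin n, x j * en n ((j : ℕ) * (f : ℕ)) := by
  unfold dft en
  congr 1

lemma dft_sub (n : ℕ) (x y : Fin n → ℂ) (f : Fin n) :
    dft n (fun j => x j - y j) f = dft n x f - dft n y f := by
  simp only [dft, sub_mul, Finset.sum_sub_distrib, mul_sub]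

/-- Fourier inversion identity. -/
lemma dft_inversion (n : ℕ) (hn : 0 < n) (x : Fin n → ℂ) (j0 : Fin n) :
    ∑ f : Fin n, dft n x f * en n (-((j0 : ℕ) * (f : ℕ))) = (Real.sqrt n : ℂ) * x j0 := by
  have key : ∀ f : Fin n, dft n x f * en n (-((j0 : ℕ) * (f : ℕ)))
      = (1 / (Real.sqrt n) : ℂ) * ∑ j : Fin n, x j * en n (((j : ℕ) - (j0 : ℕ) : ℤ) * (f : ℕ)) := by
    intro f
    rw [dft_eq, mul_assoc, Finset.sum_mul]
    congr 1
    refine Finset.sum_congr rfl fun j _ => ?_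
    rw [mul_assoc, ← en_add]
    congr 2
    ring
  rw [Finset.sum_congr rfl fun f _ => key f, ← Finset.mul_sum, Finset.sum_comm]
  have inner : ∀ j : Fin n, ∑ f : Fin n, x j * en n (((j : ℕ) - (j0 : ℕ) : ℤ) * (f : ℕ))
      = x j * (if (n : ℤ) ∣ ((j : ℕ) - (j0 : ℕ) : ℤ) then (n : ℂ) else 0) := by
    intro j
    rw [← Finset.mul_sum, sum_en n hn]
  rw [Finset.sum_congr rfl fun j _ => inner j]
  have hdvd : ∀ j : Fin n, (n : ℤ) ∣ ((j : ℕ) - (j0 : ℕ) : ℤ) ↔ j = j0 := by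
    intro j
    constructor
    · intro h
      have h1 : ((j : ℕ) - (j0 : ℕ) : ℤ) = 0 := by
        refine Int.eq_zero_of_abs_lt_dvd h ?_
        have := j.2; have := j0.2
        rw [abs_lt]
        omega
      have : (j : ℕ) = (j0 : ℕ) := by omega
      exact Fin.ext this
    · rintro rfl; simp
  have : ∀ j : Fin n, x j * (if (n : ℤ) ∣ ((j : ℕ) - (j0 : ℕ) : ℤ) then (n : ℂ) else 0)
      = if j = j0 then x j * n else 0 := by
    intro j
    by_cases h : j = j0
    · rw [if_pos ((hdvd j).mpr h), if_pos h]
    · rw [if_neg (fun hh => h ((hdvd j).mp hh)), if_neg h, mul_zero]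
  have hsum : ∑ j : Fin n, x j * (if (n : ℤ) ∣ ((j : ℕ) - (j0 : ℕ) : ℤ) then (n : ℂ) else 0)
      = x j0 * (n : ℂ) := by
    rw [Finset.sum_congr rfl fun j _ => this j]
    simp
  rw [hsum]
  have hs : (Real.sqrt n : ℂ) * (Real.sqrt n : ℂ) = (n : ℂ) := by
    rw [← Complex.ofReal_mul, Real.mul_self_sqrt (Nat.cast_nonneg n)]
    norm_cast
  have hsne : (Real.sqrt n : ℂ) ≠ 0 := by
    simp only [ne_eq, Complex.ofReal_eq_zero]
    positivity
  rw [← hs]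
  field_simp

/-! ### tailNorm basics -/

lemma tailNorm_nonneg (n k : ℕ) (y : Fin n → ℂ) : 0 ≤ tailNorm n k y := by
  apply Real.sInf_nonneg
  rintro x ⟨T, -, rfl⟩
  exact Finset.sum_nonneg fun i _ => (norm_nonneg _)

lemma tailNorm_le (n k : ℕ) (y : Fin n → ℂ) (T : Finset (Fin n)) (hT : T.card = k) :
    tailNorm n k y ≤ ∑ i ∈ Tᶜ, ‖y i‖ := by
  apply csInf_le
  · exact (Set.toFinite _).image _ |>.bddBelow
  · exact ⟨T, hT, rfl⟩

lemma tailNorm_attained (n k : ℕ) (hkn : k ≤ n) (y : Fin n → ℂ) :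
    ∃ T : Finset (Fin n), T.card = k ∧ ∑ i ∈ Tᶜ, ‖y i‖ = tailNorm n k y := by
  obtain ⟨T0, -, hT0⟩ := Finset.exists_subset_card_eq
    (show k ≤ (Finset.univ : Finset (Fin n)).card by simpa using hkn)
  have hne : ((fun T : Finset (Fin n) => ∑ i ∈ Tᶜ, ‖y i‖) ''
      {T : Finset (Fin n) | T.card = k}).Nonempty := ⟨_, T0, hT0, rfl⟩
  have hfin : ((fun T : Finset (Fin n) => ∑ i ∈ Tᶜ, ‖y i‖) ''
      {T : Finset (Fin n) | T.card = k}).Finite := (Set.toFinite _).image _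
  have := hne.csInf_mem hfin
  obtain ⟨T, hT, hval⟩ := this
  exact ⟨T, hT, hval⟩

lemma sum_pow_expand {ι : Type*} [Fintype ι] [DecidableEq ι] (g : ι → ℂ) (q : ℕ) :
    (∑ i, g i) ^ q = ∑ a : Fin q → ι, ∏ u, g (a u) := by
  have h1 : (∑ i, g i) ^ q = ∏ _u : Fin q, (∑ i, g i) := by
    rw [Finset.prod_const, Finset.card_univ, Fintype.card_fin]
  rw [h1, Finset.prod_univ_sum (fun _ => Finset.univ) (fun _ j => g j), Fintype.piFinset_univ]

lemma en_prod_sum (n : ℕ) {ι : Type*} (t : Finset ι) (g : ι → ℤ) :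
    ∏ u ∈ t, en n (g u) = en n (∑ u ∈ t, g u) := by
  classical
  induction t using Finset.induction_on with
  | empty => simp [en_zero]
  | insert _ _ hx ih =>
    rw [Finset.prod_insert hx, Finset.sum_insert hx, en_add, ih]

lemma fiber_sum {q s : ℕ} (a : Fin q → Fin s) (g : Fin s → ℤ) :
    ∑ u : Fin q, g (a u)
      = ∑ i : Fin s, ((Finset.univ.filter fun u => a u = i).card : ℤ) * g i := by
  rw [← Finset.sum_fiberwise Finset.univ a (fun u => g (a u))]
  refine Finset.sum_congr rfl fun i _ => ?_
  rw [Finset.sum_congr rfl (fun u hu => by rw [(Finset.mem_filter.mp hu).2]),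
    Finset.sum_const, nsmul_eq_mul]

lemma sum_card_fiber (q s : ℕ) (a : Fin q → Fin s) :
    ∑ i : Fin s, (Finset.univ.filter fun u => a u = i).card = q := by
  have := Finset.card_eq_sum_card_fiberwise (f := a) (s := Finset.univ) (t := Finset.univ)
    (fun x _ => Finset.mem_univ (a x))
  rw [Finset.card_univ, Fintype.card_fin] at this
  exact this.symm

lemma bad_card (s q : ℕ) (hs : 0 < s) :
    (Finset.univ.filter (fun p : (Fin q → Fin s) × (Fin q → Fin s) =>
      ((Finset.univ.image p.1 ∪ Finset.univ.image p.2).card ≤ q))).card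
      ≤ s^q * q^(2*q) := by
  classical
  set Φ : ((Fin q → Fin s) × ((Fin q → Fin q) × (Fin q → Fin q))) →
      ((Fin q → Fin s) × (Fin q → Fin s)) := fun t => (t.1 ∘ t.2.1, t.1 ∘ t.2.2) with hΦ
  have hsub : (Finset.univ.filter (fun p : (Fin q → Fin s) × (Fin q → Fin s) =>
      ((Finset.univ.image p.1 ∪ Finset.univ.image p.2).card ≤ q)))
      ⊆ Finset.univ.image Φ := by
    intro p hp
    rw [Finset.mem_filter] at hp
    obtain ⟨-, hcard⟩ := hp
    set U := Finset.univ.image p.1 ∪ Finset.univ.image p.2 with hU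
    have hcov : ∀ x ∈ U, ∃ j : Fin q, (U.toList.getD j ⟨0, hs⟩) = x := by
      intro x hx
      have hmem : x ∈ U.toList := Finset.mem_toList.mpr hx
      obtain ⟨i, hi, hg⟩ := List.mem_iff_getElem.mp hmem
      have hiU : i < U.card := by simpa [Finset.length_toList] using hi
      have hilen : i < q := lt_of_lt_of_le hiU hcard
      refine ⟨⟨i, hilen⟩, ?_⟩
      rw [List.getD_eq_getElem _ _ (by simpa [Finset.length_toList] using hiU)]
      exact hg
    set σ : Fin q → Fin s := fun j => U.toList.getD j ⟨0, hs⟩ with hσ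
    have ha : ∀ u, p.1 u ∈ U :=
      fun u => Finset.mem_union_left _ (Finset.mem_image_of_mem _ (Finset.mem_univ u))
    have hb : ∀ u, p.2 u ∈ U :=
      fun u => Finset.mem_union_right _ (Finset.mem_image_of_mem _ (Finset.mem_univ u))
    refine Finset.mem_image.mpr ⟨⟨σ, (fun u => Classical.choose (hcov _ (ha u)),
      fun u => Classical.choose (hcov _ (hb u)))⟩, Finset.mem_univ _, ?_⟩
    have e1 : σ ∘ (fun u => Classical.choose (hcov _ (ha u))) = p.1 := by
      funext u
      exact Classical.choose_spec (hcov _ (ha u))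
    have e2 : σ ∘ (fun u => Classical.choose (hcov _ (hb u))) = p.2 := by
      funext u
      exact Classical.choose_spec (hcov _ (hb u))
    rw [hΦ]
    simp only
    rw [e1, e2]
  calc (Finset.univ.filter (fun p : (Fin q → Fin s) × (Fin q → Fin s) =>
      ((Finset.univ.image p.1 ∪ Finset.univ.image p.2).card ≤ q))).card
      ≤ (Finset.univ.image Φ).card := Finset.card_le_card hsub
    _ ≤ (Finset.univ : Finset ((Fin q → Fin s) × ((Fin q → Fin q) × (Fin q → Fin q)))).card :=
        Finset.card_image_le
    _ = s^q * q^(2*q) := by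
        simp only [Finset.card_univ, Fintype.card_prod, Fintype.card_fun, Fintype.card_fin]
        rw [← pow_add]
        ring

lemma count_bound (n s q : ℕ) (hn : 0 < n) (hs : 0 < s) (d : ℤ) (hd : ¬ (n:ℤ) ∣ d) :
    ∑ v : Fin s → Fin n, (‖∑ i, en n (d * ((v i : ℕ) : ℤ))‖) ^ (2*q)
      ≤ ((n : ℝ)^s * (s:ℝ)^q) * (q:ℝ)^(2*q) := by
  classical
  set T : (Fin s → Fin n) → ℂ := fun v => ∑ i, en n (d * ((v i : ℕ) : ℤ)) with hT
  set N : (Fin q → Fin s) → Fin s → ℤ :=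
    fun a i => ((Finset.univ.filter fun u => a u = i).card : ℤ) with hN
  have hA : ∀ v, ((‖T v‖) ^ (2*q) : ℝ) = ((T v * (starRingEnd ℂ) (T v))^q).re := by
    intro v
    rw [Complex.mul_conj, ← Complex.sq_norm, ← Complex.ofReal_pow, Complex.ofReal_re, ← pow_mul]
  have hinner : ∀ (a b : Fin q → Fin s),
      ∑ v : Fin s → Fin n, en n (∑ i : Fin s, (d * (N a i - N b i)) * ((v i : ℕ) : ℤ))
        = ∏ i : Fin s, (if (n:ℤ) ∣ (d * (N a i - N b i)) then (n:ℂ) else 0) := by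
    intro a b
    have e1 : ∀ v : Fin s → Fin n,
        en n (∑ i : Fin s, (d * (N a i - N b i)) * ((v i : ℕ) : ℤ))
          = ∏ i : Fin s, en n ((d * (N a i - N b i)) * ((v i : ℕ) : ℤ)) :=
      fun v => (en_prod_sum n Finset.univ _).symm
    rw [Finset.sum_congr rfl fun v _ => e1 v]
    have e2 := Finset.prod_univ_sum (fun _ : Fin s => (Finset.univ : Finset (Fin n)))
      (fun i x => en n ((d * (N a i - N b i)) * ((x : ℕ) : ℤ)))
    rw [Fintype.piFinset_univ] at e2
    rw [← e2]
    exact Finset.prod_congr rfl fun i _ => sum_en n hn _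
  have hB : ∑ v : Fin s → Fin n, (T v * (starRingEnd ℂ) (T v))^q
      = ∑ a : Fin q → Fin s, ∑ b : Fin q → Fin s,
          ∏ i : Fin s, (if (n:ℤ) ∣ (d * (N a i - N b i)) then (n:ℂ) else 0) := by
    have hv : ∀ v, (T v * (starRingEnd ℂ) (T v))^q
        = ∑ a : Fin q → Fin s, ∑ b : Fin q → Fin s,
            en n (∑ i : Fin s, (d * (N a i - N b i)) * ((v i : ℕ) : ℤ)) := by
      intro v
      have hconj : (starRingEnd ℂ) (T v) = ∑ i, en n (-(d * ((v i : ℕ) : ℤ))) := by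
        rw [hT, map_sum]
        exact Finset.sum_congr rfl fun i _ => en_conj n _
      rw [mul_pow, hT, sum_pow_expand, hconj, sum_pow_expand, Finset.sum_mul_sum]
      refine Finset.sum_congr rfl fun a _ => Finset.sum_congr rfl fun b _ => ?_
      rw [en_prod_sum n Finset.univ, en_prod_sum n Finset.univ, ← en_add]
      congr 1
      rw [fiber_sum a (fun i => d * ((v i : ℕ) : ℤ)), fiber_sum b (fun i => -(d * ((v i : ℕ) : ℤ)))]
      rw [← Finset.sum_add_distrib]
      refine Finset.sum_congr rfl fun i _ => ?_
      simp only [hN]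
      ring
    rw [Finset.sum_congr rfl fun v _ => hv v, Finset.sum_comm]
    refine Finset.sum_congr rfl fun a _ => ?_
    rw [Finset.sum_comm]
    exact Finset.sum_congr rfl fun b _ => hinner a b
  -- the "bad" pairs
  set Bad : Finset ((Fin q → Fin s) × (Fin q → Fin s)) :=
    Finset.univ.filter (fun p =>
      ((Finset.univ.image p.1 ∪ Finset.univ.image p.2).card ≤ q)) with hBad
  have hzero : ∀ p : (Fin q → Fin s) × (Fin q → Fin s), p ∉ Bad →
      (∏ i : Fin s, (if (n:ℤ) ∣ (d * (N p.1 i - N p.2 i)) then (n:ℂ) else 0)) = 0 := by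
    intro p hp
    by_contra h0
    apply hp
    rw [hBad, Finset.mem_filter]
    refine ⟨Finset.mem_univ _, ?_⟩
    have hfac : ∀ i : Fin s, (n:ℤ) ∣ (d * (N p.1 i - N p.2 i)) := by
      intro i
      by_contra hdvd
      exact h0 (Finset.prod_eq_zero (Finset.mem_univ i) (by rw [if_neg hdvd]))
    have h2 : ∀ i ∈ (Finset.univ.image p.1 ∪ Finset.univ.image p.2),
        2 ≤ (Finset.univ.filter fun u => p.1 u = i).card
            + (Finset.univ.filter fun u => p.2 u = i).card := by
      intro i hi
      have h1le : 1 ≤ (Finset.univ.filter fun u => p.1 u = i).card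
          + (Finset.univ.filter fun u => p.2 u = i).card := by
        rcases Finset.mem_union.mp hi with h | h
        · obtain ⟨u, -, hu⟩ := Finset.mem_image.mp h
          have hmm : u ∈ Finset.univ.filter fun u => p.1 u = i := by simp [hu]
          have := Finset.card_pos.mpr ⟨u, hmm⟩
          omega
        · obtain ⟨u, -, hu⟩ := Finset.mem_image.mp h
          have hmm : u ∈ Finset.univ.filter fun u => p.2 u = i := by simp [hu]
          have := Finset.card_pos.mpr ⟨u, hmm⟩
          omega
      by_contra hlt
      have hci : N p.1 i - N p.2 i = 1 ∨ N p.1 i - N p.2 i = -1 := by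
        simp only [hN]
        omega
      rcases hci with hci | hci
      · have h3 := hfac i
        rw [hci, mul_one] at h3
        exact hd h3
      · have h3 := hfac i
        rw [hci, mul_neg, mul_one] at h3
        exact hd (dvd_neg.mp h3)
    have hcard : 2 * ((Finset.univ.image p.1 ∪ Finset.univ.image p.2)).card ≤ 2 * q := by
      have hstep := Finset.card_nsmul_le_sum
        ((Finset.univ.image p.1 ∪ Finset.univ.image p.2))
        (fun i => (Finset.univ.filter fun u => p.1 u = i).card
          + (Finset.univ.filter fun u => p.2 u = i).card) 2 h2
      have hle : ∑ i ∈ (Finset.univ.image p.1 ∪ Finset.univ.image p.2),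
          ((Finset.univ.filter fun u => p.1 u = i).card
            + (Finset.univ.filter fun u => p.2 u = i).card)
          ≤ ∑ i : Fin s, ((Finset.univ.filter fun u => p.1 u = i).card
            + (Finset.univ.filter fun u => p.2 u = i).card) :=
        Finset.sum_le_sum_of_subset (Finset.subset_univ _)
      have hq1 : ∑ i : Fin s, ((Finset.univ.filter fun u => p.1 u = i).card
            + (Finset.univ.filter fun u => p.2 u = i).card) = 2 * q := by
        rw [Finset.sum_add_distrib, sum_card_fiber q s p.1, sum_card_fiber q s p.2]
        ring
      rw [hq1] at hle
      have := le_trans hstep hle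
      simpa [smul_eq_mul, mul_comm] using this
    omega
  -- assembling
  have hre : ∑ v : Fin s → Fin n, ((‖T v‖) ^ (2*q) : ℝ)
      = (∑ v : Fin s → Fin n, (T v * (starRingEnd ℂ) (T v))^q).re := by
    rw [Complex.re_sum]
    exact Finset.sum_congr rfl fun v _ => hA v
  rw [hre, hB, ← Finset.sum_product']
  refine le_trans (Complex.re_le_norm _) ?_
  refine le_trans (norm_sum_le _ _) ?_
  have hstep2 : ∀ p ∈ (Finset.univ ×ˢ Finset.univ :
      Finset ((Fin q → Fin s) × (Fin q → Fin s))),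
      ‖∏ i : Fin s, (if (n:ℤ) ∣ (d * (N p.1 i - N p.2 i)) then (n:ℂ) else 0)‖
        ≤ if p ∈ Bad then (n:ℝ)^s else 0 := by
    intro p _
    by_cases hp : p ∈ Bad
    · rw [if_pos hp, norm_prod]
      have hfac : ∀ i ∈ (Finset.univ : Finset (Fin s)),
          ‖if (n:ℤ) ∣ (d * (N p.1 i - N p.2 i)) then (n:ℂ) else 0‖ ≤ (n:ℝ) := by
        intro i _
        by_cases hdd : (n:ℤ) ∣ (d * (N p.1 i - N p.2 i))
        · rw [if_pos hdd, Complex.norm_natCast]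
        · rw [if_neg hdd, norm_zero]
          positivity
      calc ∏ i : Fin s, ‖if (n:ℤ) ∣ (d * (N p.1 i - N p.2 i)) then (n:ℂ) else 0‖
          ≤ ∏ _i : Fin s, (n:ℝ) := Finset.prod_le_prod (fun i _ => norm_nonneg _) hfac
        _ = (n:ℝ)^s := by rw [Finset.prod_const, Finset.card_univ, Fintype.card_fin]
    · rw [if_neg hp, hzero p hp, norm_zero]
  refine le_trans (Finset.sum_le_sum hstep2) ?_
  have : ∑ p ∈ (Finset.univ ×ˢ Finset.univ :
      Finset ((Fin q → Fin s) × (Fin q → Fin s))), (if p ∈ Bad then (n:ℝ)^s else 0)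
      = (Bad.card : ℝ) * (n:ℝ)^s := by
    rw [Finset.sum_ite_mem]
    rw [Finset.univ_product_univ, Finset.univ_inter, Finset.sum_const, nsmul_eq_mul]
  rw [this]
  have hb := bad_card s q hs
  have hbr : (Bad.card : ℝ) ≤ (s:ℝ)^q * (q:ℝ)^(2*q) := by
    rw [hBad]
    exact_mod_cast hb
  calc (Bad.card : ℝ) * (n:ℝ)^s ≤ ((s:ℝ)^q * (q:ℝ)^(2*q)) * (n:ℝ)^s :=
        mul_le_mul_of_nonneg_right hbr (by positivity)
    _ = ((n : ℝ)^s * (s:ℝ)^q) * (q:ℝ)^(2*q) := by ring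

lemma exists_coherent (m k : ℕ) (hm : 0 < m) (hk : 0 < k) :
    ∃ v : Fin (2048*k^2*m^2) → Fin (2^m),
      ∀ d : ℤ, ¬ ((2^m : ℕ):ℤ) ∣ d →
        ‖∑ i, en (2^m) (d * ((v i : ℕ) : ℤ))‖
          ≤ ((2048*k^2*m^2 : ℕ):ℝ) / (32*(k:ℝ)) := by
  classical
  set n : ℕ := 2^m with hn
  set s : ℕ := 2048*k^2*m^2 with hs
  have hn0 : 0 < n := by positivity
  have hs0 : 0 < s := by positivity
  have hk0 : (0:ℝ) < k := by exact_mod_cast hk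
  have hswap : ∑ v : Fin s → Fin n, ∑ d ∈ Finset.Ioo 0 n,
      (‖∑ i, en n (((d:ℕ):ℤ) * ((v i : ℕ) : ℤ))‖) ^ (2*m)
      ≤ ∑ _v : Fin s → Fin n, ((n:ℝ) * ((s:ℝ)^m * (m:ℝ)^(2*m))) := by
    rw [Finset.sum_comm]
    have hdd : ∀ d ∈ Finset.Ioo 0 n, ¬ ((n:ℕ):ℤ) ∣ ((d:ℕ):ℤ) := by
      intro d hd hdvd
      rw [Finset.mem_Ioo] at hd
      have h1 := Int.le_of_dvd (by exact_mod_cast hd.1) hdvd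
      have h2 : n ≤ d := by exact_mod_cast h1
      omega
    have hcard : ((Finset.Ioo 0 n).card : ℝ) ≤ (n:ℝ) := by
      rw [Nat.card_Ioo]
      exact_mod_cast (by omega : n - 0 - 1 ≤ n)
    calc ∑ d ∈ Finset.Ioo 0 n, ∑ v : Fin s → Fin n,
          (‖∑ i, en n (((d:ℕ):ℤ) * ((v i : ℕ) : ℤ))‖) ^ (2*m)
        ≤ ∑ _d ∈ Finset.Ioo 0 n, (((n : ℝ)^s * (s:ℝ)^m) * (m:ℝ)^(2*m)) :=
          Finset.sum_le_sum fun d hd => count_bound n s m hn0 hs0 _ (hdd d hd)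
      _ ≤ (n:ℝ) * (((n : ℝ)^s * (s:ℝ)^m) * (m:ℝ)^(2*m)) := by
          rw [Finset.sum_const, nsmul_eq_mul]
          have hpos : (0:ℝ) ≤ ((n : ℝ)^s * (s:ℝ)^m) * (m:ℝ)^(2*m) := by positivity
          nlinarith
      _ = ∑ _v : Fin s → Fin n, ((n:ℝ) * ((s:ℝ)^m * (m:ℝ)^(2*m))) := by
          rw [Finset.sum_const, nsmul_eq_mul, Finset.card_univ, Fintype.card_fun,
            Fintype.card_fin, Fintype.card_fin]
          push_cast
          ring
  obtain ⟨v, -, hv⟩ := Finset.exists_le_of_sum_le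
    (Finset.univ_nonempty (α := Fin s → Fin n)) hswap
  refine ⟨v, ?_⟩
  have hB0 : (0:ℝ) ≤ ((s:ℕ):ℝ) / (32*(k:ℝ)) := by positivity
  have hBsq : (((s:ℕ):ℝ) / (32*(k:ℝ)))^2 = 2 * (s:ℝ) * (m:ℝ)^2 := by
    rw [hs]
    push_cast
    field_simp
    ring
  have hnat : ∀ d ∈ Finset.Ioo 0 n,
      ‖∑ i, en n (((d:ℕ):ℤ) * ((v i : ℕ) : ℤ))‖
        ≤ ((s:ℕ):ℝ) / (32*(k:ℝ)) := by
    intro d hd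
    have h1 : (‖∑ i, en n (((d:ℕ):ℤ) * ((v i : ℕ) : ℤ))‖) ^ (2*m)
        ≤ (n:ℝ) * ((s:ℝ)^m * (m:ℝ)^(2*m)) :=
      le_trans (Finset.single_le_sum
        (f := fun d : ℕ => (‖∑ i, en n (((d:ℕ):ℤ) * ((v i : ℕ) : ℤ))‖) ^ (2*m))
        (fun d _ => by positivity) hd) hv
    have h2 : (n:ℝ) * ((s:ℝ)^m * (m:ℝ)^(2*m)) = (2 * (s:ℝ) * (m:ℝ)^2)^m := by
      rw [hn]
      push_cast
      rw [mul_pow, mul_pow, ← pow_mul]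
      ring
    have h3 : ((‖∑ i, en n (((d:ℕ):ℤ) * ((v i : ℕ) : ℤ))‖)^2) ^ m
        ≤ (2 * (s:ℝ) * (m:ℝ)^2)^m := by
      rw [← pow_mul, ← h2]
      exact h1
    have h4 : (‖∑ i, en n (((d:ℕ):ℤ) * ((v i : ℕ) : ℤ))‖)^2
        ≤ 2 * (s:ℝ) * (m:ℝ)^2 :=
      le_of_pow_le_pow_left₀ hm.ne' (by positivity) h3
    refine le_of_pow_le_pow_left₀ (two_ne_zero) hB0 ?_
    rw [hBsq]
    exact h4
  -- extend to all integers d not divisible by n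
  intro d hd
  have hnz : (n:ℤ) ≠ 0 := by exact_mod_cast hn0.ne'
  set r : ℤ := d % (n:ℤ) with hr
  have hr0 : 0 ≤ r := Int.emod_nonneg d hnz
  have hrlt : r < n := Int.emod_lt_of_pos d (by exact_mod_cast hn0)
  have hrne : r ≠ 0 := by
    intro h0
    exact hd (Int.dvd_of_emod_eq_zero h0)
  have heq : ∀ i : Fin s, en n (d * ((v i : ℕ) : ℤ)) = en n (r * ((v i : ℕ) : ℤ)) := by
    intro i
    have : d * ((v i : ℕ) : ℤ) = r * ((v i : ℕ) : ℤ) + (n:ℤ) * ((d / (n:ℤ)) * ((v i : ℕ) : ℤ)) := by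
      have hdr : (n:ℤ) * (d / (n:ℤ)) + r = d := Int.mul_ediv_add_emod d (n:ℤ)
      calc d * ((v i : ℕ) : ℤ) = ((n:ℤ) * (d / (n:ℤ)) + r) * ((v i : ℕ) : ℤ) := by rw [hdr]
        _ = r * ((v i : ℕ) : ℤ) + (n:ℤ) * ((d / (n:ℤ)) * ((v i : ℕ) : ℤ)) := by ring
    rw [this, en_periodic n hn0.ne']
  rw [Finset.sum_congr rfl fun i _ => heq i]
  have hrnat : r = ((r.toNat : ℕ) : ℤ) := (Int.toNat_of_nonneg hr0).symm
  have hmem : r.toNat ∈ Finset.Ioo 0 n := by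
    rw [Finset.mem_Ioo]
    constructor
    · omega
    · exact_mod_cast (by rwa [hrnat] at hrlt : ((r.toNat:ℕ):ℤ) < (n:ℤ))
  have := hnat r.toNat hmem
  rwa [← hrnat] at this

lemma key_dev (n k s : ℕ) (hn : 0 < n) (hk : 0 < k) (hs : 0 < s)
    (v : Fin s → Fin n)
    (hG : ∀ d : ℤ, ¬ (n:ℤ) ∣ d →
      ‖∑ i, en n (d * ((v i : ℕ) : ℤ))‖ ≤ (s:ℝ)/(32*(k:ℝ)))
    (x₁ x₂ : Fin n → ℂ) (hagree : ∀ i, x₁ (v i) = x₂ (v i))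
    (t₁ t₂ : ℝ)
    (T₁ : Finset (Fin n)) (hT₁ : T₁.card = k)
    (h₁ : ∑ f ∈ T₁ᶜ, ‖dft n x₁ f‖ ≤ t₁)
    (T₂ : Finset (Fin n)) (hT₂ : T₂.card = k)
    (h₂ : ∑ f ∈ T₂ᶜ, ‖dft n x₂ f‖ ≤ t₂) :
    ∀ f, ‖dft n x₁ f - dft n x₂ f‖ ≤ (t₁ + t₂)/(30*(k:ℝ)) := by
  classical
  haveI : Nonempty (Fin n) := ⟨⟨0, hn⟩⟩
  have hk0 : (0:ℝ) < k := by exact_mod_cast hk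
  have hs0 : (0:ℝ) < s := by exact_mod_cast hs
  set z : Fin n → ℂ := fun j => x₁ j - x₂ j with hzdef
  set w : Fin n → ℂ := dft n z with hwdef
  have hw : ∀ f, w f = dft n x₁ f - dft n x₂ f := fun f => dft_sub n x₁ x₂ f
  have hz : ∀ i, z (v i) = 0 := fun i => sub_eq_zero.mpr (hagree i)
  -- orthogonality per sample
  have horth : ∀ (i : Fin s) (f0 : Fin n),
      ∑ f : Fin n, w f * en n ((((f0:ℕ):ℤ) - ((f:ℕ):ℤ)) * ((v i : ℕ):ℤ)) = 0 := by
    intro i f0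
    have hsplit : ∀ f : Fin n, en n ((((f0:ℕ):ℤ) - ((f:ℕ):ℤ)) * ((v i : ℕ):ℤ))
        = en n (((v i:ℕ):ℤ) * ((f0:ℕ):ℤ)) * en n (-(((v i : ℕ):ℤ) * ((f : ℕ):ℤ))) := by
      intro f
      rw [← en_add]
      congr 1
      ring
    calc ∑ f : Fin n, w f * en n ((((f0:ℕ):ℤ) - ((f:ℕ):ℤ)) * ((v i : ℕ):ℤ))
        = en n (((v i:ℕ):ℤ) * ((f0:ℕ):ℤ))
          * ∑ f : Fin n, w f * en n (-(((v i : ℕ):ℤ) * ((f : ℕ):ℤ))) := by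
          rw [Finset.mul_sum]
          refine Finset.sum_congr rfl fun f _ => ?_
          rw [hsplit f]
          ring
      _ = en n (((v i:ℕ):ℤ) * ((f0:ℕ):ℤ)) * ((Real.sqrt n : ℂ) * z (v i)) := by
          rw [hwdef, dft_inversion n hn z (v i)]
      _ = 0 := by rw [hz i, mul_zero, mul_zero]
  -- the coherent-sum equation
  have hGeq : ∀ f0 : Fin n, (s:ℂ) * w f0
      = - ∑ f ∈ Finset.univ.erase f0,
          w f * (∑ i, en n ((((f0:ℕ):ℤ) - ((f:ℕ):ℤ)) * ((v i : ℕ):ℤ))) := by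
    intro f0
    have htot : ∑ f : Fin n,
        w f * (∑ i, en n ((((f0:ℕ):ℤ) - ((f:ℕ):ℤ)) * ((v i : ℕ):ℤ))) = 0 := by
      have swap : ∑ f : Fin n, w f * (∑ i, en n ((((f0:ℕ):ℤ) - ((f:ℕ):ℤ)) * ((v i : ℕ):ℤ)))
          = ∑ i : Fin s, ∑ f : Fin n,
              w f * en n ((((f0:ℕ):ℤ) - ((f:ℕ):ℤ)) * ((v i : ℕ):ℤ)) := by
        rw [Finset.sum_comm]
        refine Finset.sum_congr rfl fun f _ => ?_
        rw [Finset.mul_sum]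
      rw [swap]
      exact Finset.sum_eq_zero fun i _ => horth i f0
    have hsplit0 : w f0 * (∑ i, en n ((((f0:ℕ):ℤ) - ((f0:ℕ):ℤ)) * ((v i : ℕ):ℤ)))
        = (s:ℂ) * w f0 := by
      have h1 : (∑ i : Fin s, en n ((((f0:ℕ):ℤ) - ((f0:ℕ):ℤ)) * ((v i : ℕ):ℤ))) = (s:ℂ) := by
        simp [sub_self, zero_mul, en_zero]
      rw [h1]
      ring
    have := Finset.add_sum_erase Finset.univ
      (fun f => w f * (∑ i, en n ((((f0:ℕ):ℤ) - ((f:ℕ):ℤ)) * ((v i : ℕ):ℤ))))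
      (Finset.mem_univ f0)
    rw [htot] at this
    rw [hsplit0] at this
    linear_combination this
  -- pointwise bound by the ℓ1 norm
  set L : ℝ := ∑ f : Fin n, ‖w f‖ with hL
  have hpoint : ∀ f0 : Fin n, ‖w f0‖ ≤ (1/(32*(k:ℝ))) * L := by
    intro f0
    have habs : (s:ℝ) * ‖w f0‖
        ≤ ((s:ℝ)/(32*(k:ℝ))) * ∑ f ∈ Finset.univ.erase f0, ‖w f‖ := by
      have h0 : (s:ℝ) * ‖w f0‖
          = ‖(s:ℂ) * w f0‖ := by
        rw [norm_mul, Complex.norm_natCast]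
      rw [h0, hGeq f0, norm_neg]
      refine le_trans (norm_sum_le _ _) ?_
      rw [Finset.mul_sum]
      refine Finset.sum_le_sum fun f hf => ?_
      rw [norm_mul]
      have hfd : ¬ (n:ℤ) ∣ (((f0:ℕ):ℤ) - ((f:ℕ):ℤ)) := by
        intro hdvd
        have hne : f ≠ f0 := (Finset.mem_erase.mp hf).1
        have h0' : (((f0:ℕ):ℤ) - ((f:ℕ):ℤ)) = 0 := by
          refine Int.eq_zero_of_abs_lt_dvd hdvd ?_
          have := f.2
          have := f0.2
          rw [abs_lt]
          omega
        have : (f0:ℕ) = (f:ℕ) := by omega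
        exact hne (Fin.ext this.symm)
      have := hG (((f0:ℕ):ℤ) - ((f:ℕ):ℤ)) hfd
      calc ‖w f‖
            * ‖∑ i, en n ((((f0:ℕ):ℤ) - ((f:ℕ):ℤ)) * ((v i : ℕ):ℤ))‖
          ≤ ‖w f‖ * ((s:ℝ)/(32*(k:ℝ))) :=
            mul_le_mul_of_nonneg_left this (norm_nonneg _)
        _ = (s:ℝ)/(32*(k:ℝ)) * ‖w f‖ := by ring
    have herase : ∑ f ∈ Finset.univ.erase f0, ‖w f‖ ≤ L := by
      rw [hL]
      exact Finset.sum_le_sum_of_subset_of_nonneg (Finset.erase_subset _ _)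
        (fun f _ _ => norm_nonneg _)
    have h2 : (s:ℝ) * ‖w f0‖ ≤ ((s:ℝ)/(32*(k:ℝ))) * L :=
      le_trans habs (mul_le_mul_of_nonneg_left herase (by positivity))
    have h3 : ‖w f0‖ ≤ ((s:ℝ)/(32*(k:ℝ))) * L / (s:ℝ) := by
      rw [le_div_iff₀ hs0]
      linarith
    calc ‖w f0‖ ≤ ((s:ℝ)/(32*(k:ℝ))) * L / (s:ℝ) := h3
      _ = (1/(32*(k:ℝ))) * L := by
          field_simp
  -- the max
  set M : ℝ := Finset.univ.sup' Finset.univ_nonempty (fun f => ‖w f‖) with hM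
  have hMle : ∀ f, ‖w f‖ ≤ M :=
    fun f => Finset.le_sup' (fun f => ‖w f‖) (Finset.mem_univ f)
  obtain ⟨f1, -, hf1⟩ := Finset.exists_mem_eq_sup' Finset.univ_nonempty
    (fun f => ‖w f‖)
  -- ℓ1 bound
  have hLb : L ≤ 2*(k:ℝ)*M + (t₁ + t₂) := by
    have hsplitL := Finset.sum_add_sum_compl (T₁ ∪ T₂) (fun f => ‖w f‖)
    have hU : ∑ f ∈ (T₁ ∪ T₂), ‖w f‖ ≤ 2*(k:ℝ)*M := by
      have hcard : ((T₁ ∪ T₂).card : ℝ) ≤ 2*(k:ℝ) := by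
        have := Finset.card_union_le T₁ T₂
        rw [hT₁, hT₂] at this
        exact_mod_cast (by omega : (T₁ ∪ T₂).card ≤ 2*k)
      have hMnn : 0 ≤ M := le_trans (norm_nonneg _) (hMle f1)
      calc ∑ f ∈ (T₁ ∪ T₂), ‖w f‖ ≤ ∑ _f ∈ (T₁ ∪ T₂), M :=
            Finset.sum_le_sum fun f _ => hMle f
        _ = ((T₁ ∪ T₂).card : ℝ) * M := by rw [Finset.sum_const, nsmul_eq_mul]
        _ ≤ 2*(k:ℝ)*M := mul_le_mul_of_nonneg_right hcard hMnn
    have hUc : ∑ f ∈ (T₁ ∪ T₂)ᶜ, ‖w f‖ ≤ t₁ + t₂ := by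
      have hdec : ∀ f, ‖w f‖
          ≤ ‖dft n x₁ f‖ + ‖dft n x₂ f‖ := by
        intro f
        rw [hw f, sub_eq_add_neg]
        refine le_trans (norm_add_le _ _) ?_
        rw [norm_neg]
      calc ∑ f ∈ (T₁ ∪ T₂)ᶜ, ‖w f‖
          ≤ ∑ f ∈ (T₁ ∪ T₂)ᶜ, (‖dft n x₁ f‖ + ‖dft n x₂ f‖) :=
            Finset.sum_le_sum fun f _ => hdec f
        _ = ∑ f ∈ (T₁ ∪ T₂)ᶜ, ‖dft n x₁ f‖
            + ∑ f ∈ (T₁ ∪ T₂)ᶜ, ‖dft n x₂ f‖ := Finset.sum_add_distrib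
        _ ≤ t₁ + t₂ := by
            have e1 : ∑ f ∈ (T₁ ∪ T₂)ᶜ, ‖dft n x₁ f‖
                ≤ ∑ f ∈ T₁ᶜ, ‖dft n x₁ f‖ :=
              Finset.sum_le_sum_of_subset_of_nonneg
                (Finset.compl_subset_compl.mpr Finset.subset_union_left)
                (fun f _ _ => norm_nonneg _)
            have e2 : ∑ f ∈ (T₁ ∪ T₂)ᶜ, ‖dft n x₂ f‖
                ≤ ∑ f ∈ T₂ᶜ, ‖dft n x₂ f‖ :=
              Finset.sum_le_sum_of_subset_of_nonneg
                (Finset.compl_subset_compl.mpr Finset.subset_union_right)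
                (fun f _ _ => norm_nonneg _)
            linarith
    rw [hL, ← hsplitL]
    linarith
  -- solve for M
  have hMbound : M ≤ (t₁ + t₂)/(30*(k:ℝ)) := by
    have h1 : M ≤ (1/(32*(k:ℝ))) * (2*(k:ℝ)*M + (t₁ + t₂)) := by
      have := hpoint f1
      rw [← hf1] at this
      refine le_trans this ?_
      exact mul_le_mul_of_nonneg_left hLb (by positivity)
    rw [le_div_iff₀ (by positivity)]
    have h32 : (0:ℝ) < 32*(k:ℝ) := by positivity
    have h2 : M * (32*(k:ℝ)) ≤ 2*(k:ℝ)*M + (t₁ + t₂) := by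
      have := mul_le_mul_of_nonneg_right h1 (le_of_lt h32)
      calc M * (32*(k:ℝ)) ≤ (1/(32*(k:ℝ))) * (2*(k:ℝ)*M + (t₁ + t₂)) * (32*(k:ℝ)) := this
        _ = 2*(k:ℝ)*M + (t₁ + t₂) := by field_simp
    nlinarith
  intro f
  rw [← hw f]
  exact le_trans (hMle f) hMbound

/-! ### the recovery procedure -/

def PP (n k : ℕ) {s : ℕ} (v : Fin s → Fin n) (data : Fin s → ℂ) (x' : Fin n → ℂ) : Prop :=
  (∀ f, ‖dft n x' f‖ ≤ (n:ℝ)^(1:ℝ) * tailNorm n k (dft n x') / k) ∧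
  (∀ i, x' (v i) = data i)

noncomputable def tauv (n k : ℕ) {s : ℕ} (v : Fin s → Fin n) (data : Fin s → ℂ) : ℝ :=
  sInf ((fun x' => tailNorm n k (dft n x')) '' {x' | PP n k v data x'})

lemma tauv_nonneg (n k : ℕ) {s : ℕ} (v : Fin s → Fin n) (data : Fin s → ℂ) :
    0 ≤ tauv n k v data := by
  apply Real.sInf_nonneg
  rintro t ⟨x', -, rfl⟩
  exact tailNorm_nonneg n k (dft n x')

lemma tauv_le (n k : ℕ) {s : ℕ} (v : Fin s → Fin n) (data : Fin s → ℂ)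
    {x' : Fin n → ℂ} (hx' : PP n k v data x') :
    tauv n k v data ≤ tailNorm n k (dft n x') := by
  apply csInf_le
  · exact ⟨0, by rintro t ⟨y, -, rfl⟩; exact tailNorm_nonneg n k (dft n y)⟩
  · exact ⟨x', hx', rfl⟩

lemma exists_lt_tauv (n k : ℕ) {s : ℕ} (v : Fin s → Fin n) (data : Fin s → ℂ)
    (h : ∃ x', PP n k v data x') {b : ℝ} (hb : tauv n k v data < b) :
    ∃ x', PP n k v data x' ∧ tailNorm n k (dft n x') < b := by
  obtain ⟨x0, hx0⟩ := h
  have hne : ((fun x' => tailNorm n k (dft n x')) '' {x' | PP n k v data x'}).Nonempty :=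
    ⟨_, ⟨x0, hx0, rfl⟩⟩
  obtain ⟨t0, ⟨x', hx', rfl⟩, hlt⟩ := exists_lt_of_csInf_lt hne hb
  exact ⟨x', hx', hlt⟩

open Classical in
noncomputable def recover (n k : ℕ) {s : ℕ} (v : Fin s → Fin n) (data : Fin s → ℂ) :
    Fin n → ℂ :=
  if h : ∃ x', PP n k v data x' then
    (if hτ : 0 < tauv n k v data then
      (fun f => if tauv n k v data / (2*(k:ℝ)) <
          ‖dft n (Classical.choose (exists_lt_tauv n k v data h
            (by linarith : tauv n k v data < 3/2 * tauv n k v data))) f‖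
        then dft n (Classical.choose (exists_lt_tauv n k v data h
            (by linarith : tauv n k v data < 3/2 * tauv n k v data))) f else 0)
    else fun _ => 0)
  else fun _ => 0

/-- Deterministic sparse Fourier transform, sublinear time version (sample complexity
content): `O(k² log² n)` samples suffice for the `ℓ∞/ℓ1` guarantee. -/
theorem deterministic_SFT_sublinear :
    ∃ C1 C2 c : ℝ, 0 < C1 ∧ 0 < C2 ∧ 0 < c ∧
      ∀ n k : ℕ, (∃ m : ℕ, n = 2 ^ m) → 1 ≤ k → k ≤ n →
        ∃ (S : Finset (Fin n)) (R : (Fin n → ℂ) → (Fin n → ℂ)),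
          (S.card : ℝ) ≤ C1 * (k : ℝ) ^ 2 * Real.log n ^ 2 ∧
          (∀ x y : Fin n → ℂ, (∀ i ∈ S, x i = y i) → R x = R y) ∧
          (∀ x : Fin n → ℂ,
            (∀ f : Fin n,
                ‖dft n x f‖ ≤ (n : ℝ) ^ c * tailNorm n k (dft n x) / k) →
            (({i : Fin n | R x i ≠ 0}.ncard : ℝ) ≤ C2 * k ∧
             ∀ f : Fin n,
               ‖dft n x f - R x f‖ ≤ (1 / k) * tailNorm n k (dft n x))) := by
  classical
  refine ⟨10000, 4, 1, by norm_num, by norm_num, by norm_num, ?_⟩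
  rintro n k ⟨m, rfl⟩ hk1 hkn
  set n := 2^m with hn  -- just an abbreviation for readability
  rcases Nat.eq_zero_or_pos m with hm | hm
  · -- n = 1 case
    subst hm
    have hn1 : n = 1 := by simp [hn]
    have hk : k = 1 := by omega
    subst hk
    refine ⟨∅, fun _ => fun _ => 0, ?_, ?_, ?_⟩
    · simp [hn1]
    · intro x y _
      rfl
    · intro x hx
      have ht0 : tailNorm n 1 (dft n x) = 0 := by
        refine le_antisymm ?_ (tailNorm_nonneg _ _ _)
        have := tailNorm_le n 1 (dft n x) Finset.univ
          (by rw [Finset.card_univ, hn1]; simp)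
        simpa [Finset.compl_univ] using this
      have hzero : ∀ f, dft n x f = 0 := by
        intro f
        have := hx f
        rw [ht0] at this
        simp at this
        have h0 : ‖dft n x f‖ ≤ 0 := by
          calc ‖dft n x f‖ ≤ (n:ℝ)^(1:ℝ) * 0 / 1 := by simpa using this
            _ = 0 := by ring
        exact norm_eq_zero.mp (le_antisymm h0 (norm_nonneg _))
      constructor
      · simp
      · intro f
        rw [hzero f, ht0]
        simp
  · -- main case: m ≥ 1
    have hk0 : 0 < k := hk1
    have hn0 : 0 < n := by positivity
    set s : ℕ := 2048*k^2*m^2 with hs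
    have hs0 : 0 < s :=
      Nat.mul_pos (Nat.mul_pos (by norm_num) (pow_pos hk0 2)) (pow_pos hm 2)
    obtain ⟨v, hG⟩ := exists_coherent m k hm hk0
    have hkR : (0:ℝ) < k := by exact_mod_cast hk0
    refine ⟨Finset.image v Finset.univ, fun y => recover n k v (fun i => y (v i)), ?_, ?_, ?_⟩
    · -- cardinality bound
      have h1 : (Finset.image v Finset.univ).card ≤ s :=
        le_trans Finset.card_image_le (by rw [Finset.card_univ, Fintype.card_fin])
      have hlog : Real.log n = (m:ℝ) * Real.log 2 := by
        rw [hn, Nat.cast_pow, Real.log_pow]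
        norm_num
      have h048 : (0.48:ℝ) ≤ (Real.log 2)^2 := by
        have hl2 : (0.6931471803:ℝ) < Real.log 2 := Real.log_two_gt_d9
        nlinarith
      have hbase : (0:ℝ) ≤ (k:ℝ)^2 * (m:ℝ)^2 := by positivity
      have hsR : ((s:ℕ):ℝ) = 2048*(k:ℝ)^2*(m:ℝ)^2 := by
        rw [hs]; push_cast; ring
      calc ((Finset.image v Finset.univ).card : ℝ) ≤ ((s:ℕ):ℝ) := by exact_mod_cast h1
        _ ≤ 10000 * (k:ℝ)^2 * Real.log n ^ 2 := by
            rw [hlog, hsR]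
            nlinarith [h048, hbase]
    · -- depends only on S
      intro x y hxy
      have hfun : (fun i => x (v i)) = (fun i => y (v i)) :=
        funext fun i => hxy (v i) (Finset.mem_image_of_mem v (Finset.mem_univ i))
      simp only [hfun]
    · -- guarantee
      intro x hx
      set data : Fin s → ℂ := fun i => x (v i) with hdata
      have hPx : PP n k v data x := ⟨hx, fun i => rfl⟩
      have hEx : ∃ x', PP n k v data x' := ⟨x, hPx⟩
      set t := tailNorm n k (dft n x) with htdef
      have ht0 : 0 ≤ t := tailNorm_nonneg _ _ _
      obtain ⟨T₁, hT₁c, hT₁s⟩ := tailNorm_attained n k hkn (dft n x)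
      have hRx : (fun y => recover n k v (fun i => y (v i))) x = recover n k v data := rfl
      by_cases hτ : 0 < tauv n k v data
      · -- positive tau branch
        have hE : tauv n k v data < 3/2 * tauv n k v data := by linarith
        set xs := Classical.choose (exists_lt_tauv n k v data hEx hE) with hxsdef
        have hxsP : PP n k v data xs := (Classical.choose_spec (exists_lt_tauv n k v data hEx hE)).1
        have hxst : tailNorm n k (dft n xs) < 3/2 * tauv n k v data :=
          (Classical.choose_spec (exists_lt_tauv n k v data hEx hE)).2
        have hform : (recover n k v data) = fun f =>
            if tauv n k v data / (2*(k:ℝ)) < ‖dft n xs f‖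
            then dft n xs f else 0 := by
          rw [recover, dif_pos hEx, dif_pos hτ]
        set ts := tailNorm n k (dft n xs) with htsdef
        have hts0 : 0 ≤ ts := tailNorm_nonneg _ _ _
        obtain ⟨T₂, hT₂c, hT₂s⟩ := tailNorm_attained n k hkn (dft n xs)
        have hagree : ∀ i, x (v i) = xs (v i) := fun i => ((hxsP.2 i).symm : _)
        have hMall : ∀ f, ‖dft n x f - dft n xs f‖ ≤ (t + ts)/(30*(k:ℝ)) :=
          key_dev n k s hn0 hk0 hs0 v hG x xs hagree t ts T₁ hT₁c (le_of_eq hT₁s)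
            T₂ hT₂c (le_of_eq hT₂s)
        have hτt : tauv n k v data ≤ t := tauv_le n k v data hPx
        have htsle : ts ≤ 3/2 * t := by linarith
        constructor
        · -- sparsity
          show ({i : Fin n | recover n k v data i ≠ 0}.ncard : ℝ) ≤ 4 * (k:ℝ)
          set K : Finset (Fin n) := Finset.univ.filter
            (fun f => tauv n k v data / (2*(k:ℝ)) < ‖dft n xs f‖) with hK
          have hsub : {i : Fin n | recover n k v data i ≠ 0} ⊆ ↑K := by
            intro f hf
            simp only [Set.mem_setOf_eq, hform] at hf
            have hcond : tauv n k v data / (2*(k:ℝ)) < ‖dft n xs f‖ := by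
              by_contra hcc
              rw [if_neg hcc] at hf
              exact hf rfl
            rw [hK]
            exact Finset.mem_coe.mpr (Finset.mem_filter.mpr ⟨Finset.mem_univ f, hcond⟩)
          have hncard : ({i : Fin n | recover n k v data i ≠ 0}.ncard : ℝ)
              ≤ (K.card : ℝ) := by
            have := Set.ncard_le_ncard hsub (Finset.finite_toSet K)
            rw [Set.ncard_coe_finset] at this
            exact_mod_cast this
          have hKle : (K.card : ℝ) ≤ 4 * k := by
            have hsubK : K ⊆ T₂ ∪ (K \ T₂) := by
              intro f hf
              by_cases hf2 : f ∈ T₂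
              · exact Finset.mem_union_left _ hf2
              · exact Finset.mem_union_right _ (Finset.mem_sdiff.mpr ⟨hf, hf2⟩)
            have hc1 : K.card ≤ T₂.card + (K \ T₂).card :=
              le_trans (Finset.card_le_card hsubK) (Finset.card_union_le _ _)
            have hKd : (((K \ T₂).card : ℝ)) * (tauv n k v data / (2*(k:ℝ))) ≤ ts := by
              calc (((K \ T₂).card : ℝ)) * (tauv n k v data / (2*(k:ℝ)))
                  = ∑ _f ∈ K \ T₂, (tauv n k v data / (2*(k:ℝ))) := by
                    rw [Finset.sum_const, nsmul_eq_mul]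
                _ ≤ ∑ f ∈ K \ T₂, ‖dft n xs f‖ := by
                    refine Finset.sum_le_sum fun f hf => ?_
                    have := Finset.mem_filter.mp (Finset.mem_sdiff.mp hf).1
                    exact le_of_lt this.2
                _ ≤ ∑ f ∈ T₂ᶜ, ‖dft n xs f‖ := by
                    refine Finset.sum_le_sum_of_subset_of_nonneg ?_
                      (fun f _ _ => norm_nonneg _)
                    intro f hf
                    exact Finset.mem_compl.mpr (Finset.mem_sdiff.mp hf).2
                _ = ts := hT₂s
            have hKd3 : (((K \ T₂).card : ℝ)) ≤ 3 * k := by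
              by_contra hgt
              push_neg at hgt
              have h1 : 3 * (k:ℝ) * (tauv n k v data / (2*(k:ℝ)))
                  ≤ (((K \ T₂).card : ℝ)) * (tauv n k v data / (2*(k:ℝ))) :=
                mul_le_mul_of_nonneg_right (le_of_lt hgt) (by positivity)
              have h2 : 3 * (k:ℝ) * (tauv n k v data / (2*(k:ℝ)))
                  = 3/2 * tauv n k v data := by
                field_simp
              rw [h2] at h1
              linarith [le_trans h1 hKd]
            calc (K.card : ℝ) ≤ (T₂.card : ℝ) + (((K \ T₂).card : ℝ)) := by exact_mod_cast hc1
              _ ≤ (k:ℝ) + 3*(k:ℝ) := by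
                  rw [hT₂c]
                  linarith
              _ = 4 * k := by ring
          exact le_trans hncard hKle
        · -- approximation
          intro f
          show ‖dft n x f - recover n k v data f‖ ≤ 1/(k:ℝ) * t
          rw [hform]
          beta_reduce
          by_cases hc : tauv n k v data / (2*(k:ℝ)) < ‖dft n xs f‖
          · rw [if_pos hc]
            refine le_trans (hMall f) ?_
            rw [div_le_iff₀ (by positivity)]
            have heq : (1/(k:ℝ)) * t * (30*(k:ℝ)) = 30 * t := by
              field_simp
            rw [heq]
            linarith
          · rw [if_neg hc]
            push_neg at hc
            have htri : ‖dft n x f - 0‖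
                ≤ ‖dft n xs f‖ + ‖dft n x f - dft n xs f‖ := by
              rw [sub_zero]
              calc ‖dft n x f‖
                  = ‖dft n xs f + (dft n x f - dft n xs f)‖ := by ring_nf
                _ ≤ ‖dft n xs f‖ + ‖dft n x f - dft n xs f‖ :=
                    norm_add_le _ _
            refine le_trans htri ?_
            have h1 : ‖dft n xs f‖ ≤ t/(2*(k:ℝ)) := by
              refine le_trans hc ?_
              gcongr
            have hfin : t / (2*(k:ℝ)) + (t + ts)/(30*(k:ℝ)) ≤ (1/(k:ℝ)) * t := by
              rw [div_add_div _ _ (by positivity : (2*(k:ℝ)) ≠ 0)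
                (by positivity : (30*(k:ℝ)) ≠ 0), div_le_iff₀ (by positivity)]
              have heq : (1/(k:ℝ)) * t * (2*(k:ℝ)*(30*(k:ℝ))) = 60 * (k:ℝ) * t := by
                field_simp
                ring
              rw [heq]
              nlinarith [htsle, ht0, hkR]
            exact le_trans (add_le_add h1 (hMall f)) hfin
      · -- tau non-positive branch : output 0
        have hform0 : (recover n k v data) = fun _ => (0:ℂ) := by
          rw [recover, dif_pos hEx, dif_neg hτ]
        have herr : ∀ f, ‖dft n x f‖ ≤ t/(30*(k:ℝ)) := by
          intro f
          have hstep : ∀ ε : ℝ, 0 < ε → ‖dft n x f‖ ≤ t/(30*(k:ℝ)) + ε := by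
            intro ε hε
            set δ : ℝ := ε * (k:ℝ) / ((n:ℝ)+1) with hδdef
            have hδ0 : 0 < δ := div_pos (mul_pos hε hkR) (by positivity)
            have hτδ : tauv n k v data < δ := lt_of_le_of_lt (not_lt.mp hτ) hδ0
            obtain ⟨xe, hxeP, hxet⟩ := exists_lt_tauv n k v data hEx hτδ
            obtain ⟨T₂, hT₂c, hT₂s⟩ := tailNorm_attained n k hkn (dft n xe)
            have hT₂le : ∑ f ∈ T₂ᶜ, ‖dft n xe f‖ ≤ δ := by
              rw [hT₂s]
              exact le_of_lt hxet
            have hagree : ∀ i, x (v i) = xe (v i) := fun i => (hxeP.2 i).symm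
            have hM := key_dev n k s hn0 hk0 hs0 v hG x xe hagree t δ
              T₁ hT₁c (le_of_eq hT₁s) T₂ hT₂c hT₂le
            have hxe_inf : ‖dft n xe f‖ ≤ (n:ℝ) * δ / (k:ℝ) := by
              have h1 := hxeP.1 f
              rw [Real.rpow_one] at h1
              refine le_trans h1 ?_
              have hle : tailNorm n k (dft n xe) ≤ δ := le_of_lt hxet
              gcongr
            have htri : ‖dft n x f‖
                ≤ ‖dft n xe f‖ + ‖dft n x f - dft n xe f‖ := by
              calc ‖dft n x f‖
                  = ‖dft n xe f + (dft n x f - dft n xe f)‖ := by ring_nf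
                _ ≤ _ := norm_add_le _ _
            have hε_eq : δ * ((n:ℝ)+1) / (k:ℝ) = ε := by
              rw [hδdef]
              field_simp
            have hfinal : (n:ℝ)*δ/(k:ℝ) + (t+δ)/(30*(k:ℝ)) ≤ t/(30*(k:ℝ)) + ε := by
              rw [← hε_eq]
              have hdiff : δ*((n:ℝ)+1)/(k:ℝ) - ((n:ℝ)*δ/(k:ℝ) + δ/(30*(k:ℝ)))
                  = δ*(29/30)/(k:ℝ) := by
                field_simp
                ring
              have hpos : (0:ℝ) ≤ δ*(29/30)/(k:ℝ) := by positivity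
              have hexpand : (t+δ)/(30*(k:ℝ)) = t/(30*(k:ℝ)) + δ/(30*(k:ℝ)) := by ring
              rw [hexpand]
              linarith
            calc ‖dft n x f‖
                ≤ ‖dft n xe f‖ + ‖dft n x f - dft n xe f‖ := htri
              _ ≤ (n:ℝ)*δ/(k:ℝ) + (t+δ)/(30*(k:ℝ)) := add_le_add hxe_inf (hM f)
              _ ≤ t/(30*(k:ℝ)) + ε := hfinal
          exact le_of_forall_pos_le_add hstep
        constructor
        · show ({i : Fin n | recover n k v data i ≠ 0}.ncard : ℝ) ≤ 4*(k:ℝ)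
          have hempty : {i : Fin n | recover n k v data i ≠ 0} = ∅ := by
            ext i
            simp [hform0]
          rw [hempty, Set.ncard_empty]
          norm_num
        · intro f
          show ‖dft n x f - recover n k v data f‖ ≤ 1/(k:ℝ) * t
          rw [hform0, sub_zero]
          refine le_trans (herr f) ?_
          rw [div_le_iff₀ (by positivity)]
          have heq : (1/(k:ℝ)) * t * (30*(k:ℝ)) = 30*t := by
            field_simp
          rw [heq]
          linarith
end

section
/- There exists an absolute constant C > 0 such that for all integers n ≥ 2 and k ≥ 1 with C·k²·log n ≤ n, there exists a nonempty set S ⊆ Z_n with |S| ≤ C·k²·log n such that for all i ≠ j in Z_n, (1/|S|)·|Σ_{s∈S} e^{2πi·s(i−j)/n}| ≤ 1/k. Equivalently, the matrix √(n/|S|)·F_{S,[n]} obtained by restricting the unitary DFT matrix F (with F_{s,j} = n^{−1/2} e^{2πi·sj/n}) to the rows in S and rescaling is (1/k)-incoherent. -/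
open Finset

private lemma exp_le_one_add_add_sq {u : ℝ} (hu : |u| ≤ 1) :
    Real.exp u ≤ 1 + u + u ^ 2 := by
  have h := Real.exp_bound hu (n := 2) (by norm_num)
  have h2 : ∑ i ∈ Finset.range 2, u ^ i / (Nat.factorial i) = 1 + u := by
    simp [Finset.sum_range_succ, Nat.factorial]
  rw [h2] at h
  have h3 : |u| ^ 2 = u ^ 2 := sq_abs u
  have h4 : Real.exp u - (1 + u) ≤ u ^ 2 * (3 / 4) := by
    have := (abs_le.mp h).2
    rw [h3] at this
    calc Real.exp u - (1+u) ≤ u ^ 2 * ((2:ℕ).succ / (Nat.factorial 2 * 2)) := this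
      _ ≤ u ^ 2 * (3/4) := by norm_num [Nat.factorial]
  nlinarith [sq_nonneg u]

private lemma coord_bound {p u : ℝ} (hp0 : 0 ≤ p) (hp1 : p ≤ 1) (hu : |u| ≤ 1) :
    p * Real.exp ((1 - p) * u) + (1 - p) * Real.exp (-(p * u)) ≤ Real.exp (p * u ^ 2) := by
  have e1 : p * Real.exp ((1 - p) * u) + (1 - p) * Real.exp (-(p * u))
      = Real.exp (-(p * u)) * (1 + p * (Real.exp u - 1)) := by
    have : (1 - p) * u = u + -(p * u) := by ring
    rw [this, Real.exp_add]
    ring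
  rw [e1]
  have e2 : 1 + p * (Real.exp u - 1) ≤ Real.exp (p * (Real.exp u - 1)) := by
    have := Real.add_one_le_exp (p * (Real.exp u - 1))
    linarith
  have e3 : Real.exp (-(p*u)) * (1 + p * (Real.exp u - 1))
      ≤ Real.exp (-(p*u)) * Real.exp (p * (Real.exp u - 1)) := by
    apply mul_le_mul_of_nonneg_left e2 (Real.exp_nonneg _)
  refine e3.trans ?_
  rw [← Real.exp_add]
  apply Real.exp_le_exp.mpr
  have := exp_le_one_add_add_sq hu
  nlinarith



private lemma total_mass {α : Type*} [Fintype α] [DecidableEq α] (p : ℝ) :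
    ∑ S : Finset α, p ^ S.card * (1 - p) ^ Sᶜ.card = 1 := by
  have h := Fintype.prod_add (fun _ : α => p) (fun _ : α => 1 - p)
  simp [Finset.prod_const] at h
  rw [← h]

private lemma mgf_bound {α : Type*} [Fintype α] [DecidableEq α] {p l : ℝ}
    (hp0 : 0 ≤ p) (hp1 : p ≤ 1) (hl0 : 0 ≤ l) (hl1 : l ≤ 1)
    (r : α → ℝ) (hr : ∀ x, |r x| ≤ 1) :
    ∑ S : Finset α, p ^ S.card * (1 - p) ^ Sᶜ.card *
        Real.exp (l * ((∑ x ∈ S, r x) - p * ∑ x : α, r x))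
      ≤ Real.exp (Fintype.card α * (p * l ^ 2)) := by
  have key : ∀ S : Finset α,
      p ^ S.card * (1 - p) ^ Sᶜ.card *
        Real.exp (l * ((∑ x ∈ S, r x) - p * ∑ x : α, r x))
      = (∏ x ∈ S, p * Real.exp (l * (1 - p) * r x)) *
        ∏ x ∈ Sᶜ, (1 - p) * Real.exp (-(l * p * r x)) := by
    intro S
    have hsplit : (∑ x : α, r x) = (∑ x ∈ S, r x) + ∑ x ∈ Sᶜ, r x :=
      (Finset.sum_add_sum_compl S r).symm
    have harg : l * ((∑ x ∈ S, r x) - p * ∑ x : α, r x)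
        = (∑ x ∈ S, l * (1 - p) * r x) + ∑ x ∈ Sᶜ, -(l * p * r x) := by
      have hneg : ∑ x ∈ Sᶜ, -(l * p * r x) = -∑ x ∈ Sᶜ, l * p * r x := by simp
      rw [hsplit, hneg, ← Finset.mul_sum, ← Finset.mul_sum]; ring
    rw [harg, Real.exp_add, Real.exp_sum, Real.exp_sum]
    rw [Finset.prod_mul_distrib, Finset.prod_mul_distrib, Finset.prod_const, Finset.prod_const]
    ring
  calc ∑ S : Finset α, p ^ S.card * (1 - p) ^ Sᶜ.card *
          Real.exp (l * ((∑ x ∈ S, r x) - p * ∑ x : α, r x))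
      = ∑ S : Finset α, (∏ x ∈ S, p * Real.exp (l * (1 - p) * r x)) *
          ∏ x ∈ Sᶜ, (1 - p) * Real.exp (-(l * p * r x)) := by
        exact Finset.sum_congr rfl fun S _ => key S
    _ = ∏ x : α, (p * Real.exp (l * (1 - p) * r x) + (1 - p) * Real.exp (-(l * p * r x))) :=
        (Fintype.prod_add _ _).symm
    _ ≤ ∏ x : α, Real.exp (p * l ^ 2) := by
        apply Finset.prod_le_prod
        · intro x _
          have h1 : 0 ≤ p * Real.exp (l * (1 - p) * r x) :=
            mul_nonneg hp0 (Real.exp_nonneg _)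
          have h2 : 0 ≤ (1 - p) * Real.exp (-(l * p * r x)) :=
            mul_nonneg (by linarith) (Real.exp_nonneg _)
          linarith
        · intro x _
          have hu : |l * r x| ≤ 1 := by
            rw [abs_mul]
            calc |l| * |r x| ≤ 1 * 1 :=
              mul_le_mul (by rwa [abs_of_nonneg hl0]) (hr x) (abs_nonneg _) zero_le_one
            _ = 1 := by ring
          have := coord_bound hp0 hp1 hu
          have e1 : (1 - p) * (l * r x) = l * (1 - p) * r x := by ring
          have e2 : p * (l * r x) = l * p * r x := by ring
          rw [e1, e2] at this
          refine this.trans (Real.exp_le_exp.mpr ?_)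
          have hr2 : (r x) ^ 2 ≤ 1 := by
            have h := hr x
            nlinarith [sq_abs (r x), abs_nonneg (r x)]
          have : (l * r x) ^ 2 ≤ l ^ 2 := by
            have : (l * r x) ^ 2 = l ^ 2 * (r x) ^ 2 := by ring
            rw [this]
            nlinarith [sq_nonneg l]
          nlinarith
    _ = Real.exp (Fintype.card α * (p * l ^ 2)) := by
        rw [Finset.prod_const, ← Real.exp_nat_mul]
        simp



private lemma bw_nonneg {α : Type*} [Fintype α] [DecidableEq α] {p : ℝ}
    (hp0 : 0 ≤ p) (hp1 : p ≤ 1) (S : Finset α) :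
    0 ≤ p ^ S.card * (1 - p) ^ Sᶜ.card :=
  mul_nonneg (pow_nonneg hp0 _) (pow_nonneg (by linarith) _)

private lemma tail_bound {α : Type*} [Fintype α] [DecidableEq α] {p l s : ℝ}
    (hp0 : 0 ≤ p) (hp1 : p ≤ 1) (hl0 : 0 ≤ l) (hl1 : l ≤ 1)
    (r : α → ℝ) (hr : ∀ x, |r x| ≤ 1) :
    ∑ S ∈ Finset.univ.filter
        (fun S : Finset α => s ≤ (∑ x ∈ S, r x) - p * ∑ x : α, r x),
        p ^ S.card * (1 - p) ^ Sᶜ.card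
      ≤ Real.exp (Fintype.card α * (p * l ^ 2) - l * s) := by
  have step1 : ∑ S ∈ Finset.univ.filter
        (fun S : Finset α => s ≤ (∑ x ∈ S, r x) - p * ∑ x : α, r x),
        p ^ S.card * (1 - p) ^ Sᶜ.card
      ≤ ∑ S ∈ Finset.univ.filter
        (fun S : Finset α => s ≤ (∑ x ∈ S, r x) - p * ∑ x : α, r x),
        p ^ S.card * (1 - p) ^ Sᶜ.card *
          Real.exp (l * (((∑ x ∈ S, r x) - p * ∑ x : α, r x) - s)) := by
    apply Finset.sum_le_sum
    intro S hS
    rw [Finset.mem_filter] at hS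
    have h1 : (1:ℝ) ≤ Real.exp (l * (((∑ x ∈ S, r x) - p * ∑ x : α, r x) - s)) := by
      rw [← Real.exp_zero]
      apply Real.exp_le_exp.mpr
      have := hS.2
      nlinarith
    nlinarith [bw_nonneg hp0 hp1 S]
  have step2 : ∑ S ∈ Finset.univ.filter
        (fun S : Finset α => s ≤ (∑ x ∈ S, r x) - p * ∑ x : α, r x),
        p ^ S.card * (1 - p) ^ Sᶜ.card *
          Real.exp (l * (((∑ x ∈ S, r x) - p * ∑ x : α, r x) - s))
      ≤ ∑ S : Finset α,
        p ^ S.card * (1 - p) ^ Sᶜ.card *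
          Real.exp (l * (((∑ x ∈ S, r x) - p * ∑ x : α, r x) - s)) := by
    apply Finset.sum_le_sum_of_subset_of_nonneg (Finset.filter_subset _ _)
    intro S _ _
    exact mul_nonneg (bw_nonneg hp0 hp1 S) (Real.exp_nonneg _)
  have step3 : ∑ S : Finset α,
        p ^ S.card * (1 - p) ^ Sᶜ.card *
          Real.exp (l * (((∑ x ∈ S, r x) - p * ∑ x : α, r x) - s))
      = Real.exp (-(l*s)) * ∑ S : Finset α,
        p ^ S.card * (1 - p) ^ Sᶜ.card *
          Real.exp (l * ((∑ x ∈ S, r x) - p * ∑ x : α, r x)) := by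
    calc ∑ S : Finset α,
        p ^ S.card * (1 - p) ^ Sᶜ.card *
          Real.exp (l * (((∑ x ∈ S, r x) - p * ∑ x : α, r x) - s))
        = ∑ S : Finset α, Real.exp (-(l*s)) *
            (p ^ S.card * (1 - p) ^ Sᶜ.card *
              Real.exp (l * ((∑ x ∈ S, r x) - p * ∑ x : α, r x))) := by
          apply Finset.sum_congr rfl
          intro S _
          rw [show l * (((∑ x ∈ S, r x) - p * ∑ x : α, r x) - s)
              = -(l*s) + l * ((∑ x ∈ S, r x) - p * ∑ x : α, r x) by ring, Real.exp_add]
          ring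
      _ = _ := (Finset.mul_sum _ _ _).symm
  calc _ ≤ _ := step1
    _ ≤ _ := step2
    _ = _ := step3
    _ ≤ Real.exp (-(l*s)) * Real.exp (Fintype.card α * (p * l ^ 2)) := by
        apply mul_le_mul_of_nonneg_left (mgf_bound hp0 hp1 hl0 hl1 r hr) (Real.exp_nonneg _)
    _ = Real.exp (Fintype.card α * (p * l ^ 2) - l * s) := by
        rw [← Real.exp_add]; ring_nf

private lemma pr_or {α : Type*} [Fintype α] (w : Finset α → ℝ) (hw : ∀ S, 0 ≤ w S)
    (A B : Finset α → Prop) [DecidablePred A] [DecidablePred B] :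
    ∑ S ∈ Finset.univ.filter (fun S => A S ∨ B S), w S
      ≤ (∑ S ∈ Finset.univ.filter A, w S) + ∑ S ∈ Finset.univ.filter B, w S := by
  classical
  rw [Finset.filter_or]
  have h := Finset.sum_union_inter (s₁ := Finset.univ.filter A) (s₂ := Finset.univ.filter B) (f := w)
  have h2 : 0 ≤ ∑ S ∈ Finset.univ.filter A ∩ Finset.univ.filter B, w S :=
    Finset.sum_nonneg fun S _ => hw S
  linarith

private lemma pr_exists {α β : Type*} [Fintype α] [DecidableEq β] (w : Finset α → ℝ)
    (hw : ∀ S, 0 ≤ w S) (T : Finset β) (E : β → Finset α → Prop)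
    [∀ t, DecidablePred (E t)] :
    ∑ S ∈ Finset.univ.filter (fun S => ∃ t ∈ T, E t S), w S
      ≤ ∑ t ∈ T, ∑ S ∈ Finset.univ.filter (E t), w S := by
  classical
  induction T using Finset.induction_on with
  | empty => simp
  | insert a T hx ih =>
    have hiff : ∀ S, (∃ t ∈ insert a T, E t S) ↔ (E a S ∨ ∃ t ∈ T, E t S) := by
      intro S; simp [Finset.mem_insert, or_and_right, exists_or]
    rw [Finset.sum_insert hx]
    calc ∑ S ∈ Finset.univ.filter (fun S => ∃ t ∈ insert a T, E t S), w S
        = ∑ S ∈ Finset.univ.filter (fun S => E a S ∨ ∃ t ∈ T, E t S), w S := by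
          apply Finset.sum_congr _ (fun _ _ => rfl)
          apply Finset.filter_congr
          intro S _; exact hiff S
      _ ≤ (∑ S ∈ Finset.univ.filter (E a), w S)
            + ∑ S ∈ Finset.univ.filter (fun S => ∃ t ∈ T, E t S), w S :=
          pr_or w hw _ _
      _ ≤ _ := by exact add_le_add_right ih _

private lemma char_sum_zero {n : ℕ} [NeZero n] {t : ZMod n} (ht : t ≠ 0) :
    ∑ x : ZMod n, Complex.exp (2 * (Real.pi : ℂ) * Complex.I *
        (((x * t).val : ℕ) : ℂ) / (n : ℂ)) = 0 := by
  have hnn : n ≠ 0 := NeZero.ne n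
  have hn0 : (n : ℂ) ≠ 0 := by exact_mod_cast hnn
  set ζ : ℂ := Complex.exp (2 * (Real.pi : ℂ) * Complex.I / n) with hζ
  have hpow : ∀ v : ℕ, Complex.exp (2 * (Real.pi : ℂ) * Complex.I * (v : ℂ) / (n : ℂ)) = ζ ^ v := by
    intro v
    rw [hζ, ← Complex.exp_nat_mul]
    congr 1
    field_simp
  have hζn : ζ ^ n = 1 := by
    rw [hζ, ← Complex.exp_nat_mul]
    rw [show (n : ℂ) * (2 * (Real.pi : ℂ) * Complex.I / n) = 2 * (Real.pi : ℂ) * Complex.I by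
      field_simp]
    exact Complex.exp_two_pi_mul_I
  have hmod : ∀ a : ℕ, ζ ^ (a % n) = ζ ^ a := by
    intro a
    conv_rhs => rw [show a = n * (a / n) + a % n from (Nat.div_add_mod a n).symm]
    rw [pow_add, pow_mul, hζn, one_pow, one_mul]
  set w : ℂ := ζ ^ t.val with hw
  have hwn : w ^ n = 1 := by rw [hw, ← pow_mul, mul_comm, pow_mul, hζn, one_pow]
  have hlt : t.val < n := ZMod.val_lt t
  have hne : t.val ≠ 0 := fun h0 => ht ((ZMod.val_eq_zero t).mp h0)
  have hw1 : w ≠ 1 := by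
    intro h
    rw [hw, hζ, ← Complex.exp_nat_mul] at h
    obtain ⟨z, hz⟩ := Complex.exp_eq_one_iff.mp h
    generalize hv : t.val = v at hz hlt hne
    have h2πI : (2 * (Real.pi : ℂ) * Complex.I) ≠ 0 :=
      mul_ne_zero (mul_ne_zero two_ne_zero (by exact_mod_cast Real.pi_ne_zero)) Complex.I_ne_zero
    have hvC : (v : ℂ) = (z : ℂ) * n := by
      apply mul_right_cancel₀ h2πI
      calc (v : ℂ) * (2 * (Real.pi : ℂ) * Complex.I)
          = ((v : ℂ) * (2 * (Real.pi : ℂ) * Complex.I / n)) * n := by field_simp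
        _ = ((z : ℂ) * (2 * (Real.pi : ℂ) * Complex.I)) * n := by rw [hz]
        _ = (z : ℂ) * n * (2 * (Real.pi : ℂ) * Complex.I) := by ring
    have hvZ : (v : ℤ) = z * n := by exact_mod_cast hvC
    have hn' : (0 : ℤ) < n := by exact_mod_cast Nat.pos_of_ne_zero hnn
    have h0 : 0 < (v : ℤ) := by exact_mod_cast Nat.pos_of_ne_zero hne
    have h1 : (v : ℤ) < n := by exact_mod_cast hlt
    rcases le_or_gt z 0 with hz0 | hz0
    · nlinarith
    · nlinarith
  have step1 : ∑ x : ZMod n, Complex.exp (2 * (Real.pi : ℂ) * Complex.I *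
      (((x * t).val : ℕ) : ℂ) / (n : ℂ)) = ∑ x : ZMod n, w ^ x.val := by
    apply Finset.sum_congr rfl
    intro x _
    rw [hpow, ZMod.val_mul, hmod, mul_comm x.val t.val, pow_mul, ← hw]
  have step2 : ∑ x : ZMod n, w ^ x.val = ∑ j ∈ Finset.range n, w ^ j := by
    apply Finset.sum_nbij' (i := fun x : ZMod n => x.val) (j := fun a : ℕ => (a : ZMod n))
    · intro a _; exact Finset.mem_range.mpr (ZMod.val_lt a)
    · intro a _; exact Finset.mem_univ _
    · intro a _; exact ZMod.natCast_rightInverse a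
    · intro a ha; exact ZMod.val_cast_of_lt (Finset.mem_range.mp ha)
    · intro a _; rfl
  rw [step1, step2, geom_sum_eq hw1, hwn]
  simp


set_option maxHeartbeats 1000000 in
/-- Derandomized subsampling of the DFT matrix gives a `(1/k)`-incoherent matrix with
`O(k² log n)` rows: there is a set `S ⊆ Z_n`, `|S| ≤ C k² log n`, such that all normalized
exponential sums `(1/|S|)·|∑_{s∈S} e^{2πi s(i-j)/n}|` with `i ≠ j` are at most `1/k`. -/
theorem incoherent_from_DFT_subsampling :
    ∃ C : ℝ, 0 < C ∧
      ∀ n k : ℕ, 2 ≤ n → 1 ≤ k → C * (k : ℝ) ^ 2 * Real.log n ≤ n →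
        ∃ S : Finset (ZMod n), S.Nonempty ∧
          (S.card : ℝ) ≤ C * (k : ℝ) ^ 2 * Real.log n ∧
          ∀ i j : ZMod n, i ≠ j →
            (1 / S.card : ℝ) *
              ‖(∑ s ∈ S, Complex.exp (2 * (Real.pi : ℂ) * Complex.I *
                (((s * (i - j)).val : ℕ) : ℂ) / (n : ℂ)))‖ ≤ 1 / k := by
  classical
  refine ⟨1000, by norm_num, ?_⟩
  intro n k hn hk hC
  haveI : NeZero n := ⟨by omega⟩
  set N : ℝ := (n : ℝ) with hN
  set K : ℝ := (k : ℝ) with hKdef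
  have hN2 : (2:ℝ) ≤ N := by rw [hN]; exact_mod_cast hn
  have hK1 : (1:ℝ) ≤ K := by rw [hKdef]; exact_mod_cast hk
  have hK0 : (0:ℝ) < K := by linarith
  have hN0 : (0:ℝ) < N := by linarith
  have hlogn : 0 < Real.log N := Real.log_pos (by linarith)
  set L : ℝ := Real.log (4 * N) with hLdef
  have hL0 : 0 < L := Real.log_pos (by linarith)
  set m : ℝ := 65 * K ^ 2 * L with hmdef
  have hm0 : 0 < m := by positivity
  have hLle : L ≤ 3 * Real.log N := by
    rw [hLdef, Real.log_mul (by norm_num) (by linarith)]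
    have h4 : Real.log 4 = 2 * Real.log 2 := by
      rw [show (4:ℝ) = 2 ^ 2 by norm_num, Real.log_pow]; push_cast; ring
    have h2 : Real.log 2 ≤ Real.log N := Real.log_le_log (by norm_num) hN2
    linarith
  have hmle : m ≤ (195/1000) * N := by
    have h1 : m ≤ 195 * K ^ 2 * Real.log N := by
      rw [hmdef]; nlinarith [sq_nonneg K]
    have h2 : 1000 * K ^ 2 * Real.log N ≤ N := hC
    nlinarith [sq_nonneg K, hlogn]
  set p : ℝ := m / N with hpdef
  have hp0 : 0 ≤ p := le_of_lt (div_pos hm0 hN0)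
  have hp1 : p ≤ 1 := by rw [hpdef, div_le_one hN0]; linarith
  have hNp : N * p = m := by rw [hpdef]; field_simp
  have hcardZ : (Fintype.card (ZMod n) : ℝ) = N := by rw [ZMod.card]
  -- the weight function
  set w : Finset (ZMod n) → ℝ := fun S => p ^ S.card * (1 - p) ^ Sᶜ.card with hwdef
  have hw0 : ∀ S, 0 ≤ w S := fun S => bw_nonneg hp0 hp1 S
  -- the character values
  set c : ZMod n → ZMod n → ℂ := fun t x => Complex.exp (2 * (Real.pi : ℂ) * Complex.I *
        (((x * t).val : ℕ) : ℂ) / (n : ℂ)) with hcdef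
  have habs : ∀ t x, ‖c t x‖ = 1 := by
    intro t x
    have hrw : 2 * (Real.pi : ℂ) * Complex.I * ((((x * t).val : ℕ)) : ℂ) / (n : ℂ)
        = ((2 * Real.pi * ((x * t).val : ℕ) / n : ℝ) : ℂ) * Complex.I := by
      push_cast; ring
    show ‖Complex.exp _‖ = 1
    rw [hrw, Complex.norm_exp_ofReal_mul_I]
  set rf : ZMod n → Fin 4 → ZMod n → ℝ := fun t =>
    ![fun x => (c t x).re, fun x => -(c t x).re, fun x => (c t x).im, fun x => -(c t x).im]
    with hrfdef
  have hrf1 : ∀ t i x, |rf t i x| ≤ 1 := by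
    intro t i x
    have h1 : |(c t x).re| ≤ 1 := by
      rw [← habs t x]; exact Complex.abs_re_le_norm _
    have h2 : |(c t x).im| ≤ 1 := by
      rw [← habs t x]; exact Complex.abs_im_le_norm _
    fin_cases i <;> simp [hrfdef, abs_neg] <;> first | exact h1 | exact h2
  -- events
  set T : Finset (ZMod n × Fin 4) := (Finset.univ \ {(0 : ZMod n)}) ×ˢ Finset.univ with hTdef
  set E : ZMod n × Fin 4 → Finset (ZMod n) → Prop := fun q S =>
    m / (4 * K) ≤ (∑ x ∈ S, rf q.1 q.2 x) - p * ∑ x : ZMod n, rf q.1 q.2 x with hEdef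
  set Elo : Finset (ZMod n) → Prop := fun S =>
    m / 2 ≤ (∑ x ∈ S, (fun _ : ZMod n => (-1 : ℝ)) x)
      - p * ∑ x : ZMod n, (fun _ : ZMod n => (-1 : ℝ)) x with hElodef
  set Ehi : Finset (ZMod n) → Prop := fun S =>
    m / 2 ≤ (∑ x ∈ S, (fun _ : ZMod n => (1 : ℝ)) x)
      - p * ∑ x : ZMod n, (fun _ : ZMod n => (1 : ℝ)) x with hEhidef
  set ε : ℝ := Real.exp (-(65 / 64 * L)) with hεdef
  -- per-event tail bounds
  have hEbound : ∀ q : ZMod n × Fin 4,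
      ∑ S ∈ Finset.univ.filter (E q), w S ≤ ε := by
    intro q
    have h := tail_bound (α := ZMod n) hp0 hp1
      (l := 1 / (8 * K)) (s := m / (4 * K))
      (by positivity) (by rw [div_le_one (by positivity)]; linarith)
      (rf q.1 q.2) (hrf1 q.1 q.2)
    refine h.trans (le_of_eq ?_)
    rw [hεdef]
    congr 1
    rw [hcardZ]
    have : N * (p * (1 / (8 * K)) ^ 2) = m * (1 / (8 * K)) ^ 2 := by
      rw [← mul_assoc, hNp]
    rw [this, hmdef]
    field_simp
    ring
  have hcardbound : ∀ r0 : ZMod n → ℝ, (∀ x, |r0 x| ≤ 1) →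
      ∑ S ∈ Finset.univ.filter
        (fun S : Finset (ZMod n) => m / 2 ≤ (∑ x ∈ S, r0 x) - p * ∑ x : ZMod n, r0 x), w S
      ≤ ε := by
    intro r0 hr0
    have h := tail_bound (α := ZMod n) hp0 hp1
      (l := (1:ℝ) / 4) (s := m / 2) (by norm_num) (by norm_num) r0 hr0
    refine h.trans ?_
    rw [hεdef]
    apply Real.exp_le_exp.mpr
    rw [hcardZ]
    have e1 : N * (p * ((1:ℝ)/4) ^ 2) = m / 16 := by
      rw [← mul_assoc, hNp]; ring
    rw [e1]
    have e2 : m / 16 - 1 / 4 * (m / 2) = -(m / 16) := by ring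
    rw [e2]
    have : 65 / 64 * L ≤ m / 16 := by
      rw [hmdef]
      nlinarith [sq_nonneg (K - 1)]
    linarith
  -- total bad probability
  set bad : Finset (ZMod n) → Prop := fun S =>
    (∃ q ∈ T, E q S) ∨ (Elo S ∨ Ehi S) with hbaddef
  have hbadlt : ∑ S ∈ Finset.univ.filter bad, w S < 1 := by
    have h1 : ∑ S ∈ Finset.univ.filter bad, w S
        ≤ (∑ S ∈ Finset.univ.filter (fun S => ∃ q ∈ T, E q S), w S)
          + ∑ S ∈ Finset.univ.filter (fun S => Elo S ∨ Ehi S), w S :=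
      pr_or w hw0 _ _
    have h2 : ∑ S ∈ Finset.univ.filter (fun S => Elo S ∨ Ehi S), w S
        ≤ (∑ S ∈ Finset.univ.filter Elo, w S) + ∑ S ∈ Finset.univ.filter Ehi, w S :=
      pr_or w hw0 _ _
    have h3 : ∑ S ∈ Finset.univ.filter (fun S => ∃ q ∈ T, E q S), w S
        ≤ ∑ q ∈ T, ∑ S ∈ Finset.univ.filter (E q), w S :=
      pr_exists w hw0 T E
    have h4 : ∑ q ∈ T, ∑ S ∈ Finset.univ.filter (E q), w S ≤ T.card * ε := by
      calc ∑ q ∈ T, ∑ S ∈ Finset.univ.filter (E q), w S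
          ≤ ∑ _q ∈ T, ε := Finset.sum_le_sum fun q _ => hEbound q
        _ = T.card * ε := by rw [Finset.sum_const, nsmul_eq_mul]
    have hTcard : (T.card : ℝ) ≤ 4 * N - 4 := by
      rw [hTdef, Finset.card_product]
      have : (Finset.univ \ {(0 : ZMod n)}).card = n - 1 := by
        rw [Finset.card_sdiff_of_subset (by simp), Finset.card_singleton, Finset.card_univ, ZMod.card]
      rw [this]
      have hn1 : (1:ℕ) ≤ n := by omega
      push_cast [hn1]
      simp only [Finset.card_univ, Fintype.card_fin]
      push_cast
      rw [hN]
      ring_nf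
      nlinarith [hN0]
    have hElo : ∑ S ∈ Finset.univ.filter Elo, w S ≤ ε :=
      hcardbound _ (fun x => by norm_num)
    have hEhi : ∑ S ∈ Finset.univ.filter Ehi, w S ≤ ε :=
      hcardbound _ (fun x => by norm_num)
    have hε0 : 0 < ε := Real.exp_pos _
    have htot : ∑ S ∈ Finset.univ.filter bad, w S ≤ (4 * N - 2) * ε := by
      calc ∑ S ∈ Finset.univ.filter bad, w S
          ≤ T.card * ε + (ε + ε) := by
            have := add_le_add h3 h2
            have h5 := h1.trans this
            have := add_le_add h4 (add_le_add hElo hEhi)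
            linarith
        _ ≤ (4 * N - 2) * ε := by
            have hmul : (T.card : ℝ) * ε ≤ (4 * N - 4) * ε :=
              mul_le_mul_of_nonneg_right hTcard hε0.le
            linarith
    have hfin : (4 * N - 2) * ε < 1 := by
      have h4N : 4 * N = Real.exp L := by
        rw [hLdef, Real.exp_log (by linarith)]
      have : 4 * N * ε = Real.exp (L + -(65/64 * L)) := by
        rw [Real.exp_add, ← h4N, hεdef]
      have hlt1 : 4 * N * ε < 1 := by
        rw [this, ← Real.exp_zero]
        apply Real.exp_lt_exp.mpr
        linarith
      nlinarith
    linarith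
  -- a good subset exists
  have htotal : ∑ S : Finset (ZMod n), w S = 1 := total_mass p
  have hex : ∃ S : Finset (ZMod n), ¬ bad S := by
    by_contra hco
    push_neg at hco
    have hfeq : Finset.univ.filter bad = Finset.univ :=
      Finset.filter_true_of_mem (fun S _ => hco S)
    rw [hfeq] at hbadlt
    linarith
  obtain ⟨S, hS⟩ := hex
  simp only [hbaddef] at hS
  push_neg at hS
  obtain ⟨hS1, hS2, hS3⟩ := hS
  -- card facts
  have hsumconst : ∀ (S' : Finset (ZMod n)) (a : ℝ),
      (∑ _x ∈ S', a) = S'.card * a := by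
    intro S' a; rw [Finset.sum_const, nsmul_eq_mul]
  have hsumU : ∀ a : ℝ, (∑ _x : ZMod n, a) = N * a := by
    intro a; rw [Finset.sum_const, nsmul_eq_mul, Finset.card_univ, hcardZ]
  have hpN : p * N = m := by rw [mul_comm]; exact hNp
  have hSlow : m / 2 < (S.card : ℝ) := by
    simp only [hElodef] at hS2
    push_neg at hS2
    rw [hsumconst, hsumU] at hS2
    nlinarith
  have hShigh : (S.card : ℝ) < 3 * m / 2 := by
    simp only [hEhidef] at hS3
    push_neg at hS3
    rw [hsumconst, hsumU] at hS3
    nlinarith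
  have hsc0 : (0:ℝ) < (S.card : ℝ) := lt_trans (by positivity) hSlow
  refine ⟨S, ?_, ?_, ?_⟩
  · exact Finset.card_pos.mp (by exact_mod_cast hsc0)
  · have hm195 : m ≤ 195 * K ^ 2 * Real.log N := by
      rw [hmdef]; nlinarith [sq_nonneg K]
    have hnn : 0 ≤ K ^ 2 * Real.log N :=
      mul_nonneg (sq_nonneg K) hlogn.le
    nlinarith
  · intro i j hij
    have ht : i - j ≠ 0 := sub_ne_zero_of_ne hij
    set Z : ℂ := ∑ x ∈ S, c (i - j) x with hZdef
    have hnot : ∀ fi : Fin 4, ¬ E ((i - j), fi) S := by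
      intro fi
      apply hS1
      rw [hTdef]
      simp [Finset.mem_product, Finset.mem_sdiff, ht]
    simp only [hEdef] at hnot
    push_neg at hnot
    have hc0 : ∑ x : ZMod n, c (i - j) x = 0 := char_sum_zero ht
    have hre0 : ∑ x : ZMod n, (c (i - j) x).re = 0 := by
      have := congrArg Complex.re hc0
      simpa [Complex.re_sum] using this
    have him0 : ∑ x : ZMod n, (c (i - j) x).im = 0 := by
      have := congrArg Complex.im hc0
      simpa [Complex.im_sum] using this
    have hZre : Z.re = ∑ x ∈ S, (c (i - j) x).re := by
      rw [hZdef, Complex.re_sum]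
    have hZim : Z.im = ∑ x ∈ S, (c (i - j) x).im := by
      rw [hZdef, Complex.im_sum]
    have e0 := hnot 0
    have e1 := hnot 1
    have e2 := hnot 2
    have e3 := hnot 3
    simp only [hrfdef, Matrix.cons_val_zero, Matrix.cons_val_one, Matrix.head_cons,
      Matrix.cons_val_two, Matrix.cons_val_three, Matrix.tail_cons, Matrix.cons_val_fin_one,
      Fin.isValue] at e0 e1 e2 e3
    rw [hre0] at e0
    rw [him0] at e2
    simp only [Finset.sum_neg_distrib] at e1 e3
    rw [hre0] at e1
    rw [him0] at e3
    have habsre : |Z.re| ≤ m / (4 * K) := by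
      rw [hZre]
      apply abs_le.mpr
      constructor <;> [linarith; linarith]
    have habsim : |Z.im| ≤ m / (4 * K) := by
      rw [hZim]
      apply abs_le.mpr
      constructor <;> [linarith; linarith]
    have hhalf : m / (4 * K) + m / (4 * K) = m / (2 * K) := by
      field_simp; ring
    have habsZ : ‖Z‖ ≤ m / (2 * K) := by
      refine (Complex.norm_le_abs_re_add_abs_im Z).trans ?_
      linarith
    show (1 / (S.card : ℝ)) * ‖Z‖ ≤ 1 / K
    rw [show (1 / (S.card : ℝ)) * ‖Z‖ = ‖Z‖ / (S.card : ℝ) by ring,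
      div_le_div_iff₀ hsc0 hK0]
    have hZK : ‖Z‖ * K ≤ m / 2 := by
      calc ‖Z‖ * K ≤ (m / (2 * K)) * K :=
            mul_le_mul_of_nonneg_right habsZ hK0.le
        _ = m / 2 := by field_simp
    nlinarith
end

section
/- For every real ε > 0 and every integer d ≥ 2 there exists a constant C = C(d, ε) > 0 such that for every prime p and every integer m with 2 ≤ m ≤ p, there exists a function r : {0, 1, …, m−1} → Z_p such that the matrix M ∈ ℂ^{m×p} with entries M_{j,t} = m^{−1/2}·e^{2πi·r(j)·t/p} is C·m^ε·(1/m + p/m^d)^{2^{1−d}}-incoherent; in particular every column of M has unit ℓ2 norm and for all t1 ≠ t2 in Z_p, (1/m)·|Σ_{j=0}^{m−1} e^{2πi·r(j)(t1−t2)/p}| ≤ C·m^ε·(1/m + p/m^d)^{2^{1−d}}. The rows of √m·M are rows of the p×p DFT matrix (possibly with repetition). -/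
open Finset

-- Auxiliary lemmas -------------------------------------------------------

-- helper: permutation existence from equal fiber cards
lemma exists_comp_perm {k : ℕ} {β : Type*} [DecidableEq β] {a b : Fin k → β}
    (h : ∀ x, (univ.filter fun i => a i = x).card = (univ.filter fun i => b i = x).card) :
    ∃ σ : Equiv.Perm (Fin k), ∀ i, a (σ i) = b i := by
  have e : ∀ x, {i // b i = x} ≃ {i // a i = x} := fun x =>
    Fintype.equivOfCardEq (by
      simp only [Fintype.card_subtype]
      exact (h x).symm)
  exact ⟨Equiv.ofFiberEquiv e, fun i => Equiv.ofFiberEquiv_map e i⟩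

lemma card_same_fibers_le {k m : ℕ} (a : Fin k → Fin m) :
    ((univ : Finset (Fin k → Fin m)).filter fun b =>
      ∀ x, (univ.filter fun i => a i = x).card = (univ.filter fun i => b i = x).card).card
      ≤ k.factorial := by
  classical
  set s := ((univ : Finset (Fin k → Fin m)).filter fun b =>
      ∀ x, (univ.filter fun i => a i = x).card = (univ.filter fun i => b i = x).card) with hs
  have hex : ∀ b ∈ s, ∃ σ : Equiv.Perm (Fin k), ∀ i, a (σ i) = b i := by
    intro b hb
    rw [hs, mem_filter] at hb
    exact exists_comp_perm hb.2
  choose g hg using hex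
  have : s.card ≤ (univ : Finset (Equiv.Perm (Fin k))).card := by
    apply Finset.card_le_card_of_injOn (fun b => if hb : b ∈ s then g b hb else 1)
      (fun b _ => mem_univ _)
    intro b hb b' hb' hbb
    have hb : b ∈ s := Finset.mem_coe.mp hb
    have hb' : b' ∈ s := Finset.mem_coe.mp hb'
    simp only [dif_pos hb, dif_pos hb'] at hbb
    funext i
    rw [← hg b hb i, ← hg b' hb' i, hbb]
  simpa [Fintype.card_perm] using this


variable {p : ℕ} [NeZero p]

private lemma psi_map_sum {ι : Type*} (s : Finset ι) (g : ι → ZMod p) :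
    ZMod.stdAddChar (∑ i ∈ s, g i) = ∏ i ∈ s, ZMod.stdAddChar (g i) := by
  classical
  induction s using Finset.cons_induction with
  | empty => simp
  | cons i s hi ih => rw [Finset.sum_cons, Finset.prod_cons, AddChar.map_add_eq_mul, ih]

private lemma psi_norm (x : ZMod p) : ‖(ZMod.stdAddChar x)‖ = 1 := by
  rw [ZMod.stdAddChar_apply]; exact Circle.norm_coe _

private lemma psi_conj (x : ZMod p) :
    (starRingEnd ℂ) (ZMod.stdAddChar x) = ZMod.stdAddChar (-x) := by
  rw [AddChar.map_neg_eq_inv, ← Complex.inv_eq_conj]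
  rw [psi_norm]

private lemma psi_sum_eq (u : ZMod p) :
    ∑ x : ZMod p, ZMod.stdAddChar (u * x) = if u = 0 then (p : ℂ) else 0 := by
  split_ifs with h
  · simp [h, ZMod.card]
  · have h1 : (ZMod.stdAddChar (N := p)).mulShift u ≠ 1 :=
      ZMod.isPrimitive_stdAddChar p h
    have := AddChar.sum_eq_zero_of_ne_one h1
    simpa [AddChar.mulShift_apply, mul_comm] using this

-- the per-(a,b) sum over r
private lemma sum_r_eq (hp : p.Prime) {m k : ℕ} (hkp : k < p) {t : ZMod p} (ht : t ≠ 0)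
    (a b : Fin k → Fin m) :
    ∑ r : Fin m → ZMod p,
        (∏ i, ZMod.stdAddChar (r (a i) * t)) * ∏ i, ZMod.stdAddChar (-(r (b i) * t))
      = if (∀ j, (univ.filter fun i => a i = j).card = (univ.filter fun i => b i = j).card)
        then (p : ℂ) ^ m else 0 := by
  haveI := Fact.mk hp
  set na : Fin m → ℕ := fun j => (univ.filter fun i => a i = j).card with hna
  set nb : Fin m → ℕ := fun j => (univ.filter fun i => b i = j).card with hnb
  have hterm : ∀ r : Fin m → ZMod p,
      (∏ i, ZMod.stdAddChar (r (a i) * t)) * ∏ i, ZMod.stdAddChar (-(r (b i) * t))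
        = ∏ j : Fin m, ZMod.stdAddChar ((((na j : ℤ) - (nb j : ℤ) : ℤ) : ZMod p) * (r j * t)) := by
    intro r
    rw [← psi_map_sum, ← psi_map_sum, ← AddChar.map_add_eq_mul, ← psi_map_sum]
    congr 1
    have hA : ∀ u : Fin k → Fin m, ∑ i, r (u i) * t
        = ∑ j, (((univ.filter fun i => u i = j).card : ℕ) : ZMod p) * (r j * t) := by
      intro u
      rw [← Finset.sum_fiberwise' univ u (fun j => r j * t)]
      refine Finset.sum_congr rfl fun j _ => ?_
      rw [Finset.sum_const, nsmul_eq_mul]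
    have hB : ∑ i, -(r (b i) * t) = -∑ i, r (b i) * t := by
      rw [Finset.sum_neg_distrib]
    rw [hB, hA a, hA b, ← sub_eq_add_neg, ← Finset.sum_sub_distrib]
    refine Finset.sum_congr rfl fun j _ => ?_
    push_cast
    ring
  calc ∑ r : Fin m → ZMod p,
        (∏ i, ZMod.stdAddChar (r (a i) * t)) * ∏ i, ZMod.stdAddChar (-(r (b i) * t))
      = ∑ r : Fin m → ZMod p,
          ∏ j : Fin m, ZMod.stdAddChar ((((na j : ℤ) - (nb j : ℤ) : ℤ) : ZMod p) * (r j * t)) :=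
        Finset.sum_congr rfl fun r _ => hterm r
    _ = ∏ j : Fin m, ∑ x : ZMod p,
          ZMod.stdAddChar ((((na j : ℤ) - (nb j : ℤ) : ℤ) : ZMod p) * (x * t)) := by
        exact (Fintype.prod_sum
          (fun j x => ZMod.stdAddChar ((((na j : ℤ) - (nb j : ℤ) : ℤ) : ZMod p) * (x * t)))).symm
    _ = ∏ j : Fin m, (if ((((na j : ℤ) - (nb j : ℤ) : ℤ) : ZMod p) * t) = 0 then (p : ℂ) else 0) := by
        refine Finset.prod_congr rfl fun j _ => ?_
        rw [← psi_sum_eq]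
        refine Finset.sum_congr rfl fun x _ => ?_
        ring_nf
    _ = ∏ j : Fin m, (if na j = nb j then (p : ℂ) else 0) := by
        refine Finset.prod_congr rfl fun j _ => ?_
        congr 1
        simp only [eq_iff_iff]
        rw [mul_eq_zero]
        constructor
        · rintro (h | h)
          · have hdvd := (ZMod.intCast_zmod_eq_zero_iff_dvd _ p).mp h
            have h1 : na j ≤ k := by
              simpa [hna] using Finset.card_filter_le (univ : Finset (Fin k)) _
            have h2 : nb j ≤ k := by
              simpa [hnb] using Finset.card_filter_le (univ : Finset (Fin k)) _
            have : ((na j : ℤ) - (nb j : ℤ)) = 0 := by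
              by_contra hne
              have hle := Int.le_of_dvd (abs_pos.mpr hne) ((dvd_abs _ _).mpr hdvd)
              have hlt : |(na j : ℤ) - (nb j : ℤ)| < p := by
                rw [abs_sub_lt_iff]
                constructor <;> omega
              exact absurd hle (not_le.mpr hlt)
            omega
          · exact absurd h ht
        · intro h
          left
          have : ((na j : ℤ) - (nb j : ℤ)) = 0 := by omega
          rw [this]
          simp
    _ = if (∀ j, na j = nb j) then (p : ℂ) ^ m else 0 := by
        by_cases hall : ∀ j, na j = nb j
        · rw [if_pos hall]
          rw [Finset.prod_congr rfl fun j _ => if_pos (hall j)]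
          simp
        · rw [if_neg hall]
          push_neg at hall
          obtain ⟨j0, hj0⟩ := hall
          exact Finset.prod_eq_zero (mem_univ j0) (if_neg hj0)

lemma moment_bound (hp : p.Prime) {m k : ℕ} (hkp : k < p) {t : ZMod p} (ht : t ≠ 0) :
    ∑ r : Fin m → ZMod p, ‖(∑ j, ZMod.stdAddChar (r j * t))‖ ^ (2 * k)
      ≤ (m : ℝ) ^ k * ((k.factorial : ℝ) * (p : ℝ) ^ m) := by
  have habs : ∀ z : ℂ, ((‖z‖ ^ (2 * k) : ℝ) : ℂ)
      = z ^ k * ((starRingEnd ℂ) z) ^ k := by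
    intro z
    rw [← mul_pow, Complex.mul_conj, ← Complex.ofReal_pow, Complex.normSq_eq_norm_sq, ← pow_mul]
  have main : ∑ r : Fin m → ZMod p,
        ((‖(∑ j, ZMod.stdAddChar (r j * t))‖ ^ (2 * k) : ℝ) : ℂ)
      = ∑ a : Fin k → Fin m, ∑ b : Fin k → Fin m,
          (if (∀ j, (univ.filter fun i => a i = j).card = (univ.filter fun i => b i = j).card)
           then (p : ℂ) ^ m else 0) := by
    calc ∑ r : Fin m → ZMod p,
          ((‖(∑ j, ZMod.stdAddChar (r j * t))‖ ^ (2 * k) : ℝ) : ℂ)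
        = ∑ r : Fin m → ZMod p, (∑ j, ZMod.stdAddChar (r j * t)) ^ k *
            ((starRingEnd ℂ) (∑ j, ZMod.stdAddChar (r j * t))) ^ k :=
          Finset.sum_congr rfl fun r _ => habs _
      _ = ∑ r : Fin m → ZMod p, ∑ a : Fin k → Fin m, ∑ b : Fin k → Fin m,
            (∏ i, ZMod.stdAddChar (r (a i) * t)) * ∏ i, ZMod.stdAddChar (-(r (b i) * t)) := by
          refine Finset.sum_congr rfl fun r _ => ?_
          rw [map_sum]
          simp_rw [psi_conj]
          rw [Fintype.sum_pow, Fintype.sum_pow, Finset.sum_mul_sum]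
      _ = ∑ a : Fin k → Fin m, ∑ b : Fin k → Fin m, ∑ r : Fin m → ZMod p,
            (∏ i, ZMod.stdAddChar (r (a i) * t)) * ∏ i, ZMod.stdAddChar (-(r (b i) * t)) := by
          rw [Finset.sum_comm]
          exact Finset.sum_congr rfl fun a _ => Finset.sum_comm
      _ = _ := Finset.sum_congr rfl fun a _ => Finset.sum_congr rfl fun b _ =>
            sum_r_eq hp hkp ht a b
  have hreal : ∑ r : Fin m → ZMod p,
        ‖(∑ j, ZMod.stdAddChar (r j * t))‖ ^ (2 * k)
      = ∑ a : Fin k → Fin m, ∑ b : Fin k → Fin m,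
          (if (∀ j, (univ.filter fun i => a i = j).card = (univ.filter fun i => b i = j).card)
           then (p : ℝ) ^ m else 0) := by
    have := congrArg Complex.re main
    simpa [Complex.re_sum, apply_ite Complex.re, ← Complex.ofReal_pow, Complex.ofReal_re,
      ← Complex.ofReal_natCast] using this
  rw [hreal]
  have hb : ∀ a : Fin k → Fin m,
      (∑ b : Fin k → Fin m,
        (if (∀ j, (univ.filter fun i => a i = j).card = (univ.filter fun i => b i = j).card)
         then (p : ℝ) ^ m else 0)) ≤ (k.factorial : ℝ) * (p : ℝ) ^ m := by
    intro a
    rw [← Finset.sum_filter, Finset.sum_const, nsmul_eq_mul]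
    have hcard := card_same_fibers_le a
    have hp0 : (0 : ℝ) ≤ (p : ℝ) ^ m := by positivity
    exact mul_le_mul_of_nonneg_right (by exact_mod_cast hcard) hp0
  calc ∑ a : Fin k → Fin m, ∑ b : Fin k → Fin m, _ ≤ ∑ _a : Fin k → Fin m,
        (k.factorial : ℝ) * (p : ℝ) ^ m := Finset.sum_le_sum fun a _ => hb a
    _ = (m : ℝ) ^ k * ((k.factorial : ℝ) * (p : ℝ) ^ m) := by
        rw [Finset.sum_const, card_univ, nsmul_eq_mul]
        congr 1
        simp [Fintype.card_fun]

lemma exists_good_r (hp : p.Prime) (m k : ℕ) (hkp : k < p) :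
    ∃ r : Fin m → ZMod p, ∀ t : ZMod p, t ≠ 0 →
      ‖(∑ j, ZMod.stdAddChar (r j * t))‖ ^ (2 * k)
        ≤ (p : ℝ) * ((m : ℝ) ^ k * (k.factorial : ℝ)) := by
  set F : (Fin m → ZMod p) → ℝ := fun r =>
    ∑ t ∈ (univ : Finset (ZMod p)).erase 0,
      ‖(∑ j, ZMod.stdAddChar (r j * t))‖ ^ (2 * k) with hF
  have hsum : ∑ r : Fin m → ZMod p, F r
      ≤ ∑ _r : Fin m → ZMod p, (p : ℝ) * ((m : ℝ) ^ k * (k.factorial : ℝ)) := by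
    rw [hF]
    rw [Finset.sum_comm]
    have h1 : ∀ t ∈ (univ : Finset (ZMod p)).erase 0,
        ∑ r : Fin m → ZMod p, ‖(∑ j, ZMod.stdAddChar (r j * t))‖ ^ (2 * k)
          ≤ (m : ℝ) ^ k * ((k.factorial : ℝ) * (p : ℝ) ^ m) := fun t htmem =>
      moment_bound hp hkp (Finset.ne_of_mem_erase htmem)
    calc ∑ t ∈ (univ : Finset (ZMod p)).erase 0, ∑ r : Fin m → ZMod p,
          ‖(∑ j, ZMod.stdAddChar (r j * t))‖ ^ (2 * k)
        ≤ ∑ _t ∈ (univ : Finset (ZMod p)).erase 0,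
            (m : ℝ) ^ k * ((k.factorial : ℝ) * (p : ℝ) ^ m) := Finset.sum_le_sum h1
      _ ≤ (p : ℝ) * ((m : ℝ) ^ k * ((k.factorial : ℝ) * (p : ℝ) ^ m)) := by
          rw [Finset.sum_const, nsmul_eq_mul]
          have hcard : (((univ : Finset (ZMod p)).erase 0).card : ℝ) ≤ (p : ℝ) := by
            have := Finset.card_erase_le (s := (univ : Finset (ZMod p))) (a := (0 : ZMod p))
            have h2 : (univ : Finset (ZMod p)).card = p := by simp [ZMod.card]
            exact_mod_cast le_trans this (le_of_eq h2)
          have hpos : (0 : ℝ) ≤ (m : ℝ) ^ k * ((k.factorial : ℝ) * (p : ℝ) ^ m) := by positivity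
          exact mul_le_mul_of_nonneg_right hcard hpos
      _ = ∑ _r : Fin m → ZMod p, (p : ℝ) * ((m : ℝ) ^ k * (k.factorial : ℝ)) := by
          rw [Finset.sum_const, card_univ, nsmul_eq_mul]
          have : Fintype.card (Fin m → ZMod p) = p ^ m := by
            simp [Fintype.card_fun, ZMod.card]
          rw [this]
          push_cast
          ring
  obtain ⟨r, _, hr⟩ := Finset.exists_le_of_sum_le (Finset.univ_nonempty) hsum
  refine ⟨r, fun t ht => ?_⟩
  refine le_trans ?_ hr
  show _ ≤ ∑ t' ∈ (univ : Finset (ZMod p)).erase 0,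
      ‖(∑ j, ZMod.stdAddChar (r j * t'))‖ ^ (2 * k)
  refine Finset.single_le_sum
    (f := fun t' => ‖(∑ j, ZMod.stdAddChar (r j * t'))‖ ^ (2 * k))
    (fun t' _ => by positivity) ?_
  exact Finset.mem_erase.mpr ⟨ht, mem_univ t⟩

lemma exp_eq_psi {p : ℕ} [NeZero p] (x : ZMod p) :
    Complex.exp (2 * (Real.pi : ℂ) * Complex.I * ((x.val : ℕ) : ℂ) / (p : ℂ))
      = ZMod.stdAddChar x := by
  rw [ZMod.stdAddChar_apply, ZMod.toCircle_apply]

set_option maxHeartbeats 2000000 in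
/-- Strongly explicit incoherent matrices from the DFT via low-degree polynomials (Weyl sums):
for every `ε > 0` and degree `d ≥ 2` there is `C > 0` such that for every prime `p` and
`2 ≤ m ≤ p` there are row indices `r : Fin m → Z_p` so that the matrix
`M_{j,t} = m^{-1/2} e^{2πi r(j) t/p}` has unit-norm columns and incoherence at most
`C·m^ε·(1/m + p/m^d)^{2^{1-d}}`. -/
theorem incoherent_from_DFT_weyl :
    ∀ ε : ℝ, 0 < ε → ∀ d : ℕ, 2 ≤ d → ∃ C : ℝ, 0 < C ∧
      ∀ p : ℕ, p.Prime → ∀ m : ℕ, 2 ≤ m → m ≤ p →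
        ∃ r : Fin m → ZMod p,
          (∀ t : ZMod p,
            ∑ j : Fin m, ‖((1 / (Real.sqrt m) : ℂ) *
              Complex.exp (2 * (Real.pi : ℂ) * Complex.I *
                (((r j * t).val : ℕ) : ℂ) / (p : ℂ)))‖ ^ 2 = 1) ∧
          ∀ t1 t2 : ZMod p, t1 ≠ t2 →
            (1 / m : ℝ) *
              ‖(∑ j : Fin m, Complex.exp (2 * (Real.pi : ℂ) * Complex.I *
                (((r j * (t1 - t2)).val : ℕ) : ℂ) / (p : ℂ)))‖ ≤
            C * (m : ℝ) ^ ε * ((1 / m : ℝ) + (p : ℝ) / (m : ℝ) ^ d) ^ ((2 : ℝ) ^ (1 - (d : ℝ))) := by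
  intro ε hε d hd
  set k : ℕ := max 1 ⌈(d : ℝ) / ε⌉₊ with hk
  have hk1 : 1 ≤ k := le_max_left _ _
  have hk0 : (0 : ℝ) < k := by exact_mod_cast hk1
  have hkd : (d : ℝ) ≤ (k : ℝ) * ε := by
    have h1 : (d : ℝ) / ε ≤ (⌈(d : ℝ) / ε⌉₊ : ℝ) := Nat.le_ceil _
    have h2 : ((⌈(d : ℝ) / ε⌉₊ : ℕ) : ℝ) ≤ (k : ℝ) := by
      exact_mod_cast le_max_right 1 ⌈(d : ℝ) / ε⌉₊
    have := le_trans h1 h2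
    calc (d : ℝ) = (d : ℝ) / ε * ε := by field_simp
      _ ≤ (k : ℝ) * ε := by
          exact mul_le_mul_of_nonneg_right this hε.le
  refine ⟨(k : ℝ), hk0, ?_⟩
  intro p hp m hm hmp
  haveI : NeZero p := ⟨hp.ne_zero⟩
  -- pick r
  obtain ⟨r, hr⟩ : ∃ r : Fin m → ZMod p, k < p → ∀ t : ZMod p, t ≠ 0 →
      ‖(∑ j, ZMod.stdAddChar (r j * t))‖ ^ (2 * k)
        ≤ (p : ℝ) * ((m : ℝ) ^ k * (k.factorial : ℝ)) := by
    by_cases hkp : k < p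
    · obtain ⟨r, hr⟩ := exists_good_r hp m k hkp
      exact ⟨r, fun _ => hr⟩
    · exact ⟨fun _ => 0, fun h => absurd h hkp⟩
  -- basic facts
  have hm0 : (0 : ℝ) < m := by positivity
  have hm1 : (1 : ℝ) ≤ m := by exact_mod_cast le_trans one_le_two hm
  have hmε : (1 : ℝ) ≤ (m : ℝ) ^ ε := Real.one_le_rpow hm1 hε.le
  set α : ℝ := (2 : ℝ) ^ (1 - (d : ℝ)) with hα
  have hα0 : 0 < α := Real.rpow_pos_of_pos two_pos _
  have hα2 : α ≤ 1 / 2 := by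
    have : (1 : ℝ) - d ≤ -1 := by
      have : (2 : ℝ) ≤ d := by exact_mod_cast hd
      linarith
    calc α ≤ (2 : ℝ) ^ (-1 : ℝ) := Real.rpow_le_rpow_of_exponent_le one_le_two this
      _ = 1 / 2 := by
        rw [Real.rpow_neg_one]
        norm_num
  set X : ℝ := (1 / m : ℝ) + (p : ℝ) / (m : ℝ) ^ d with hX
  have hX1 : (1 / m : ℝ) ≤ X := by
    have : (0 : ℝ) ≤ (p : ℝ) / (m : ℝ) ^ d := by positivity
    linarith
  have hXα : (1 / (m : ℝ)) ^ α ≤ X ^ α :=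
    Real.rpow_le_rpow (by positivity) hX1 hα0.le
  have hhalf : (1 / (m : ℝ)) ^ ((1 : ℝ) / 2) ≤ (1 / (m : ℝ)) ^ α := by
    apply Real.rpow_le_rpow_of_exponent_ge (by positivity) _ hα2
    rw [div_le_one hm0]; exact hm1
  have hsqrt_half : (1 / (m : ℝ)) ^ ((1 : ℝ) / 2) = (Real.sqrt m)⁻¹ := by
    rw [← Real.sqrt_eq_rpow, one_div, Real.sqrt_inv]
  -- the sum in the goal equals the character sum
  have hbridge : ∀ t : ZMod p,
      (∑ j : Fin m, Complex.exp (2 * (Real.pi : ℂ) * Complex.I *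
        (((r j * t).val : ℕ) : ℂ) / (p : ℂ))) = ∑ j, ZMod.stdAddChar (r j * t) :=
    fun t => Finset.sum_congr rfl fun j _ => exp_eq_psi _
  have htriv : ∀ t : ZMod p, ‖(∑ j, ZMod.stdAddChar (r j * t))‖ ≤ (m : ℝ) := by
    intro t
    have h := norm_sum_le (univ : Finset (Fin m)) (fun j => ZMod.stdAddChar (r j * t))
    calc ‖(∑ j, ZMod.stdAddChar (r j * t))‖
        ≤ ∑ j : Fin m, ‖(ZMod.stdAddChar (r j * t))‖ := h
      _ = (m : ℝ) := by simp [psi_norm]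
  refine ⟨r, ?_, ?_⟩
  · -- unit norm columns
    intro t
    have habs : ∀ j : Fin m, ‖((1 / (Real.sqrt m) : ℂ) *
        Complex.exp (2 * (Real.pi : ℂ) * Complex.I *
          (((r j * t).val : ℕ) : ℂ) / (p : ℂ)))‖ = 1 / Real.sqrt m := by
      intro j
      rw [exp_eq_psi, norm_mul, psi_norm, mul_one, norm_div, norm_one, Complex.norm_real, Real.norm_eq_abs,
        abs_of_nonneg (Real.sqrt_nonneg _)]
    rw [Finset.sum_congr rfl fun j _ => by rw [habs j]]
    rw [Finset.sum_const, card_univ, Fintype.card_fin, nsmul_eq_mul]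
    rw [div_pow, one_pow, Real.sq_sqrt hm0.le]
    field_simp
  · -- incoherence
    intro t1 t2 hne
    set t : ZMod p := t1 - t2 with htdef
    have ht : t ≠ 0 := sub_ne_zero.mpr hne
    rw [hbridge t]
    set A : ℝ := ‖(∑ j, ZMod.stdAddChar (r j * t))‖ with hA
    have hA0 : 0 ≤ A := norm_nonneg _
    have hXα0 : 0 ≤ X ^ α := Real.rpow_nonneg (by positivity) _
    have htrivdone : (1 : ℝ) ≤ (k : ℝ) * X ^ α →
        (1 / m : ℝ) * A ≤ (k : ℝ) * (m : ℝ) ^ ε * X ^ α := by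
      intro h
      have h2 : (1 / m : ℝ) * A ≤ 1 := by
        have h3 : (1 / m : ℝ) * A ≤ (1 / m : ℝ) * m :=
          mul_le_mul_of_nonneg_left (htriv t) (by positivity)
        have h4 : (1 / m : ℝ) * m = 1 := by field_simp
        linarith
      calc (1 / m : ℝ) * A ≤ 1 := h2
        _ ≤ (k : ℝ) * X ^ α := h
        _ ≤ (k : ℝ) * (m : ℝ) ^ ε * X ^ α := by
            rw [mul_assoc]
            exact mul_le_mul_of_nonneg_left
              (le_mul_of_one_le_left hXα0 hmε) hk0.le
    by_cases hkp : k < p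
    · by_cases hpm : (p : ℝ) ≤ (m : ℝ) ^ d
      · -- moment regime
        have hAk : A ^ (2 * k) ≤ (p : ℝ) * ((m : ℝ) ^ k * (k.factorial : ℝ)) := hr hkp t ht
        set E : ℝ := (m : ℝ) ^ ε * Real.sqrt k * Real.sqrt m with hE
        have hE0 : 0 ≤ E := by positivity
        have hE2k : (p : ℝ) * ((m : ℝ) ^ k * (k.factorial : ℝ)) ≤ E ^ (2 * k) := by
          have h1 : (k.factorial : ℝ) ≤ (k : ℝ) ^ k := by exact_mod_cast Nat.factorial_le_pow k
          have hEpow : E ^ (2 * k) = ((m : ℝ) ^ ε) ^ (2 * k) * ((k : ℝ) ^ k * (m : ℝ) ^ k) := by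
            rw [hE, mul_pow, mul_pow]
            have hsq : ∀ x : ℝ, 0 ≤ x → Real.sqrt x ^ (2 * k) = x ^ k := by
              intro x hx
              rw [pow_mul, Real.sq_sqrt hx]
            rw [hsq _ hk0.le, hsq _ hm0.le, mul_assoc]
          have hmd : (m : ℝ) ^ d ≤ ((m : ℝ) ^ ε) ^ (2 * k) := by
            rw [← Real.rpow_natCast ((m : ℝ) ^ ε) (2 * k), ← Real.rpow_natCast (m : ℝ) d,
              ← Real.rpow_mul (by positivity)]
            apply Real.rpow_le_rpow_of_exponent_le hm1
            push_cast
            nlinarith [hε.le, hk0]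
          rw [hEpow]
          have h2 : (m : ℝ) ^ k * (k.factorial : ℝ) ≤ (k : ℝ) ^ k * (m : ℝ) ^ k := by
            rw [mul_comm ((k:ℝ) ^ k) ((m:ℝ) ^ k)]
            exact mul_le_mul_of_nonneg_left h1 (by positivity)
          calc (p : ℝ) * ((m : ℝ) ^ k * (k.factorial : ℝ))
              ≤ (m : ℝ) ^ d * ((k : ℝ) ^ k * (m : ℝ) ^ k) :=
                mul_le_mul hpm h2 (by positivity) (by positivity)
            _ ≤ ((m : ℝ) ^ ε) ^ (2 * k) * ((k : ℝ) ^ k * (m : ℝ) ^ k) :=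
                mul_le_mul_of_nonneg_right hmd (by positivity)
        have hAE : A ≤ E := by
          have h2k0 : (2 * k) ≠ 0 := by omega
          have hid : (A ^ (2 * k)) ^ (((2 * k : ℕ) : ℝ))⁻¹ = A :=
            Real.pow_rpow_inv_natCast hA0 h2k0
          have hid2 : (E ^ (2 * k)) ^ (((2 * k : ℕ) : ℝ))⁻¹ = E :=
            Real.pow_rpow_inv_natCast hE0 h2k0
          calc A = (A ^ (2 * k)) ^ (((2 * k : ℕ) : ℝ))⁻¹ := hid.symm
            _ ≤ (E ^ (2 * k)) ^ (((2 * k : ℕ) : ℝ))⁻¹ :=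
                Real.rpow_le_rpow (by positivity) (le_trans hAk hE2k) (by positivity)
            _ = E := hid2
        have hsm0 : 0 < Real.sqrt m := Real.sqrt_pos.mpr hm0
        have hkey : (1 / (m : ℝ)) * E = Real.sqrt k * ((m : ℝ) ^ ε * (Real.sqrt m)⁻¹) := by
          have hmm : (m : ℝ) = Real.sqrt m * Real.sqrt m := (Real.mul_self_sqrt hm0.le).symm
          have hss : Real.sqrt m * Real.sqrt m = (m : ℝ) := Real.mul_self_sqrt hm0.le
          rw [hE]
          field_simp
          linear_combination hss
        have hk1' : (1 : ℝ) ≤ (k : ℝ) := by exact_mod_cast hk1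
        have hsk : Real.sqrt k ≤ (k : ℝ) := by
          nlinarith [Real.sq_sqrt hk0.le, Real.sqrt_nonneg (k : ℝ)]
        calc (1 / m : ℝ) * A ≤ (1 / m : ℝ) * E :=
            mul_le_mul_of_nonneg_left hAE (by positivity)
          _ = Real.sqrt k * ((m : ℝ) ^ ε * (Real.sqrt m)⁻¹) := hkey
          _ ≤ (k : ℝ) * ((m : ℝ) ^ ε * X ^ α) := by
              apply mul_le_mul hsk _ (by positivity) hk0.le
              apply mul_le_mul_of_nonneg_left _ (by positivity)
              calc (Real.sqrt m)⁻¹ = (1 / (m : ℝ)) ^ ((1 : ℝ) / 2) := hsqrt_half.symm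
                _ ≤ (1 / (m : ℝ)) ^ α := hhalf
                _ ≤ X ^ α := hXα
          _ = (k : ℝ) * (m : ℝ) ^ ε * X ^ α := by ring
      · -- p > m^d : X ≥ 1
        apply htrivdone
        push_neg at hpm
        have hX2 : (1 : ℝ) ≤ X := by
          have h1 : (1 : ℝ) ≤ (p : ℝ) / (m : ℝ) ^ d := by
            rw [le_div_iff₀ (by positivity)]
            linarith
          have h2 : (0 : ℝ) ≤ 1 / m := by positivity
          rw [hX]; linarith
        have h3 : (1 : ℝ) ≤ X ^ α := Real.one_le_rpow hX2 hα0.le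
        have hk1' : (1 : ℝ) ≤ (k : ℝ) := by exact_mod_cast hk1
        nlinarith [hk1', h3]
    · -- p ≤ k : m ≤ k, trivial
      apply htrivdone
      push_neg at hkp
      have hmk : (m : ℝ) ≤ (k : ℝ) := by
        have : m ≤ k := le_trans hmp hkp
        exact_mod_cast this
      have hs1 : (Real.sqrt m)⁻¹ ≤ X ^ α := by
        calc (Real.sqrt m)⁻¹ = (1 / (m : ℝ)) ^ ((1 : ℝ) / 2) := hsqrt_half.symm
          _ ≤ (1 / (m : ℝ)) ^ α := hhalf
          _ ≤ X ^ α := hXα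
      have hs2 : (1 : ℝ) / (k : ℝ) ≤ (Real.sqrt m)⁻¹ := by
        have hsm0 : 0 < Real.sqrt m := Real.sqrt_pos.mpr hm0
        rw [one_div, inv_le_inv₀ hk0 hsm0]
        calc Real.sqrt m ≤ (m : ℝ) := by
              nlinarith [Real.sq_sqrt hm0.le, Real.sqrt_nonneg (m : ℝ)]
          _ ≤ (k : ℝ) := hmk
      have := le_trans hs2 hs1
      rw [div_le_iff₀ hk0] at this
      linarith [mul_comm ((k:ℝ)) (X ^ α)]
end

section
/- Let p be a prime and let d be a divisor of p − 1 with d > √p. Let G be the unique subgroup of the multiplicative group 𝔽_p^× of order d. Then the matrix M ∈ ℂ^{d×p} with rows indexed by a ∈ G and columns indexed by t ∈ Z_p, with entries M_{a,t} = d^{−1/2}·e^{2πi·at/p}, is (√p/d)-incoherent; in particular every column of M has unit ℓ2 norm and for all t1 ≠ t2 in Z_p, (1/d)·|Σ_{a∈G} e^{2πi·a(t1−t2)/p}| ≤ √p/d. -/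
open Finset

section Aux

variable (p : ℕ) [Fact p.Prime]

noncomputable def subgroupSum (G : Subgroup (ZMod p)ˣ) [Fintype G] (t : ZMod p) : ℂ :=
  ∑ a : G, ZMod.stdAddChar (((a : (ZMod p)ˣ) : ZMod p) * t)

lemma aux_neZero : NeZero p := ⟨(Fact.out : p.Prime).ne_zero⟩

lemma exp_eq_stdAddChar (x : ZMod p) :
    Complex.exp (2 * (Real.pi : ℂ) * Complex.I * ((x.val : ℕ) : ℂ) / (p : ℂ)) =
      ZMod.stdAddChar x := by
  haveI := aux_neZero p
  rw [ZMod.stdAddChar_apply, ZMod.toCircle_apply]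

lemma abs_stdAddChar (x : ZMod p) : ‖(ZMod.stdAddChar x : ℂ)‖ = 1 := by
  haveI := aux_neZero p
  rw [ZMod.stdAddChar_apply]
  exact Circle.norm_coe _

lemma orth (t : ZMod p) :
    ∑ i : ZMod p, ZMod.stdAddChar (t * i) = if t = 0 then (p : ℂ) else 0 := by
  haveI := aux_neZero p
  split_ifs with h
  · simp only [h, zero_mul, AddChar.map_zero_eq_one, sum_const, card_univ,
      ZMod.card, nsmul_eq_mul, mul_one]
  · exact AddChar.sum_eq_zero_of_ne_one (ZMod.isPrimitive_stdAddChar p h)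

lemma subgroupSum_parseval (G : Subgroup (ZMod p)ˣ) [Fintype G] :
    ∑ t : ZMod p, (‖subgroupSum p G t‖) ^ 2 =
      (Fintype.card G : ℝ) * p := by
  haveI := aux_neZero p
  have key : ∑ t : ZMod p, subgroupSum p G t * (starRingEnd ℂ) (subgroupSum p G t) =
      ((Fintype.card G : ℝ) : ℂ) * p := by
    have hconj : ∀ x : ZMod p, (starRingEnd ℂ) (ZMod.stdAddChar x) =
        ZMod.stdAddChar (-x) := by
      intro x
      rw [AddChar.map_neg_eq_inv, ← Complex.inv_eq_conj (abs_stdAddChar p x)]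
    calc ∑ t : ZMod p, subgroupSum p G t * (starRingEnd ℂ) (subgroupSum p G t)
        = ∑ t : ZMod p, ∑ a : G, ∑ b : G,
            ZMod.stdAddChar ((((a : (ZMod p)ˣ) : ZMod p) - ((b : (ZMod p)ˣ) : ZMod p)) * t) := by
          refine Finset.sum_congr rfl fun t _ => ?_
          rw [subgroupSum, map_sum, Finset.sum_mul_sum]
          refine Finset.sum_congr rfl fun a _ => Finset.sum_congr rfl fun b _ => ?_
          rw [hconj, ← AddChar.map_add_eq_mul]
          ring_nf
      _ = ∑ a : G, ∑ b : G, ∑ t : ZMod p,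
            ZMod.stdAddChar ((((a : (ZMod p)ˣ) : ZMod p) - ((b : (ZMod p)ˣ) : ZMod p)) * t) := by
          rw [Finset.sum_comm]
          exact Finset.sum_congr rfl fun a _ => Finset.sum_comm
      _ = ∑ a : G, ∑ b : G,
            (if (((a : (ZMod p)ˣ) : ZMod p) - ((b : (ZMod p)ˣ) : ZMod p)) = 0
              then (p : ℂ) else 0) := by
          exact Finset.sum_congr rfl fun a _ => Finset.sum_congr rfl fun b _ => orth p _
      _ = ∑ a : G, (p : ℂ) := by
          refine Finset.sum_congr rfl fun a _ => ?_
          have hcond : ∀ b : G, ((((a : (ZMod p)ˣ) : ZMod p) - ((b : (ZMod p)ˣ) : ZMod p)) = 0)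
              ↔ b = a := by
            intro b
            rw [sub_eq_zero]
            constructor
            · intro h
              exact Subtype.ext (Units.ext h.symm)
            · rintro rfl; rfl
          simp only [hcond]
          rw [Finset.sum_ite_eq' univ a (fun _ => (p : ℂ))]
          simp
      _ = ((Fintype.card G : ℝ) : ℂ) * p := by
          rw [Finset.sum_const, card_univ, nsmul_eq_mul]
          push_cast
          ring
  calc ∑ t : ZMod p, (‖subgroupSum p G t‖) ^ 2
      = (∑ t : ZMod p, subgroupSum p G t * (starRingEnd ℂ) (subgroupSum p G t)).re := by
        rw [Complex.re_sum]
        refine Finset.sum_congr rfl fun t _ => ?_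
        rw [Complex.mul_conj]
        simp [Complex.sq_norm]
    _ = (Fintype.card G : ℝ) * p := by
        rw [key]
        push_cast
        simp

lemma subgroupSum_coset (G : Subgroup (ZMod p)ˣ) [Fintype G] (g : G) (t : ZMod p) :
    subgroupSum p G (((g : (ZMod p)ˣ) : ZMod p) * t) = subgroupSum p G t := by
  unfold subgroupSum
  refine Fintype.sum_equiv (Equiv.mulRight g) _ _ fun a => ?_
  simp only [Equiv.coe_mulRight]
  congr 1
  push_cast
  ring

lemma subgroupSum_abs_le (G : Subgroup (ZMod p)ˣ) [Fintype G] {s : ZMod p} (hs : s ≠ 0)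
    (hcard : 0 < Fintype.card G) :
    ‖subgroupSum p G s‖ ≤ Real.sqrt p := by
  haveI := aux_neZero p
  set F : ZMod p → ℝ := fun t => (‖subgroupSum p G t‖) ^ 2 with hF
  have hφinj : Function.Injective (fun g : G => ((g : (ZMod p)ˣ) : ZMod p) * s) := by
    intro g1 g2 h
    simp only at h
    have := mul_right_cancel₀ hs h
    exact Subtype.ext (Units.ext this)
  have h1 : (Fintype.card G : ℝ) * F s ≤ ∑ t : ZMod p, F t := by
    have h2 : ∑ g : G, F (((g : (ZMod p)ˣ) : ZMod p) * s) = (Fintype.card G : ℝ) * F s := by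
      have he : ∀ g : G, F (((g : (ZMod p)ˣ) : ZMod p) * s) = F s := by
        intro g
        simp only [hF, subgroupSum_coset]
      rw [Finset.sum_congr rfl fun g _ => he g, Finset.sum_const, card_univ, nsmul_eq_mul]
    calc (Fintype.card G : ℝ) * F s
        = ∑ g : G, F (((g : (ZMod p)ˣ) : ZMod p) * s) := h2.symm
      _ = ∑ t ∈ Finset.image (fun g : G => ((g : (ZMod p)ˣ) : ZMod p) * s) univ, F t := by
          rw [Finset.sum_image fun a _ b _ h => hφinj h]
      _ ≤ ∑ t : ZMod p, F t :=
          Finset.sum_le_sum_of_subset_of_nonneg (Finset.subset_univ _)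
            (fun t _ _ => sq_nonneg _)
  rw [subgroupSum_parseval] at h1
  have hFs : F s ≤ p := by
    have hc : (0 : ℝ) < Fintype.card G := by exact_mod_cast hcard
    nlinarith [h1]
  have := Real.sqrt_le_sqrt hFs
  rwa [Real.sqrt_sq (norm_nonneg _)] at this

end Aux

/-- Incoherent matrices from the DFT via multiplicative subgroups: if `d ∣ p - 1` and
`d > √p`, and `G` is the (unique) subgroup of `𝔽_p^×` of order `d`, then the matrix
`M_{a,t} = d^{-1/2} e^{2πi a t/p}` (rows indexed by `a ∈ G`, columns by `t ∈ Z_p`) has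
unit-norm columns and is `(√p/d)`-incoherent. -/
theorem incoherent_from_DFT_subgroup (p : ℕ) [Fact p.Prime] (d : ℕ)
    (hd : d ∣ p - 1) (hdgt : Real.sqrt p < d)
    (G : Subgroup (ZMod p)ˣ) [Fintype G] (hG : Nat.card G = d) :
    (∀ t : ZMod p,
      ∑ a : G, ‖(1 / (Real.sqrt d) : ℂ) *
        Complex.exp (2 * (Real.pi : ℂ) * Complex.I *
          (((((a : (ZMod p)ˣ) : ZMod p) * t).val : ℕ) : ℂ) / (p : ℂ))‖ ^ 2 = 1) ∧
    ∀ t1 t2 : ZMod p, t1 ≠ t2 →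
      (1 / d : ℝ) *
        ‖∑ a : G, Complex.exp (2 * (Real.pi : ℂ) * Complex.I *
          (((((a : (ZMod p)ˣ) : ZMod p) * (t1 - t2)).val : ℕ) : ℂ) / (p : ℂ))‖ ≤
      Real.sqrt p / d := by
  have hd0 : (0 : ℝ) < d := lt_of_le_of_lt (Real.sqrt_nonneg p) hdgt
  have hcard : Fintype.card G = d := by rw [← Nat.card_eq_fintype_card, hG]
  constructor
  · intro t
    have hterm : ∀ a : G, ‖(1 / (Real.sqrt d) : ℂ) *
        Complex.exp (2 * (Real.pi : ℂ) * Complex.I *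
          (((((a : (ZMod p)ˣ) : ZMod p) * t).val : ℕ) : ℂ) / (p : ℂ))‖ ^ 2 = 1 / d := by
      intro a
      rw [exp_eq_stdAddChar p, norm_mul, abs_stdAddChar p, mul_one]
      rw [show ((1 / (Real.sqrt d) : ℂ)) = (((1 / Real.sqrt d : ℝ)) : ℂ) by push_cast; ring]
      rw [Complex.norm_real, Real.norm_eq_abs, abs_of_nonneg (by positivity)]
      rw [div_pow, one_pow, Real.sq_sqrt hd0.le]
    rw [Finset.sum_congr rfl fun a _ => hterm a, Finset.sum_const, card_univ, hcard,
      nsmul_eq_mul]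
    field_simp
  · intro t1 t2 ht
    have hs : t1 - t2 ≠ 0 := sub_ne_zero.mpr ht
    have hsum : (∑ a : G, Complex.exp (2 * (Real.pi : ℂ) * Complex.I *
        (((((a : (ZMod p)ˣ) : ZMod p) * (t1 - t2)).val : ℕ) : ℂ) / (p : ℂ))) =
        subgroupSum p G (t1 - t2) := by
      unfold subgroupSum
      exact Finset.sum_congr rfl fun a _ => exp_eq_stdAddChar p _
    rw [hsum]
    have hb := subgroupSum_abs_le p G hs (by rw [hcard]; exact_mod_cast hd0)
    rw [one_div, inv_mul_le_iff₀ hd0, mul_div_cancel₀ _ (ne_of_gt hd0)]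
    exact hb
end

section
/- Let k ≥ 1 be an integer, 0 ≤ c ≤ 1 a real number, and let A ∈ ℂ^{m×n} be (c/k)-incoherent, i.e., every column of A has unit ℓ2 norm and |⟨A_i, A_j⟩| ≤ c/k for all distinct columns A_i, A_j. Then A satisfies the (k, c) Restricted Isometry Property: for every x ∈ ℂ^n with at most k nonzero coordinates, (1 − c)·‖x‖₂ ≤ ‖Ax‖₂ ≤ (1 + c)·‖x‖₂. -/
open Finset

/-- A `(c/k)`-incoherent matrix satisfies the `(k, c)` restricted isometry property:
for every `k`-sparse `x`, `(1-c)‖x‖₂ ≤ ‖Ax‖₂ ≤ (1+c)‖x‖₂`. -/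
theorem incoherent_implies_RIP (k : ℕ) (hk : 1 ≤ k) (c : ℝ) (hc0 : 0 ≤ c) (hc1 : c ≤ 1)
    (m n : ℕ) (A : Matrix (Fin m) (Fin n) ℂ)
    (hcol : ∀ i : Fin n, ∑ ℓ : Fin m, ‖A ℓ i‖ ^ 2 = 1)
    (hinc : ∀ i j : Fin n, i ≠ j →
      ‖∑ ℓ : Fin m, (starRingEnd ℂ) (A ℓ i) * A ℓ j‖ ≤ c / k) :
    ∀ x : Fin n → ℂ, {i : Fin n | x i ≠ 0}.ncard ≤ k →
      (1 - c) * Real.sqrt (∑ i : Fin n, ‖x i‖ ^ 2) ≤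
        Real.sqrt (∑ ℓ : Fin m, ‖A.mulVec x ℓ‖ ^ 2) ∧
      Real.sqrt (∑ ℓ : Fin m, ‖A.mulVec x ℓ‖ ^ 2) ≤
        (1 + c) * Real.sqrt (∑ i : Fin n, ‖x i‖ ^ 2) := by
  intro x hx
  classical
  set s : ℝ := ∑ i, ‖x i‖ ^ 2 with hs
  set T : ℝ := ∑ ℓ, ‖A.mulVec x ℓ‖ ^ 2 with hTdef
  have hs0 : 0 ≤ s := Finset.sum_nonneg fun i _ => sq_nonneg _
  have hT0 : 0 ≤ T := Finset.sum_nonneg fun i _ => sq_nonneg _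
  have hk0 : (0:ℝ) < k := by exact_mod_cast hk
  -- support
  set S : Finset (Fin n) := Finset.univ.filter (fun i => x i ≠ 0) with hSdef
  have hScard : S.card ≤ k := by
    have h1 : {i : Fin n | x i ≠ 0} = ↑S := by ext i; simp [hSdef]
    rwa [h1, Set.ncard_coe_finset] at hx
  have hxout : ∀ i, i ∉ S → x i = 0 := by
    intro i hi
    by_contra h
    exact hi (by simp [hSdef, h])
  have hsum_abs : ∑ i, ‖x i‖ = ∑ i ∈ S, ‖x i‖ := by
    refine (Finset.sum_subset (Finset.subset_univ S) ?_).symm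
    intro i _ hiS; simp [hxout i hiS]
  have hsum_sq : s = ∑ i ∈ S, ‖x i‖ ^ 2 := by
    refine (Finset.sum_subset (Finset.subset_univ S) ?_).symm
    intro i _ hiS; simp [hxout i hiS]
  -- Cauchy-Schwarz on the support
  have hCS : (∑ i, ‖x i‖) ^ 2 ≤ (k : ℝ) * s := by
    rw [hsum_abs, hsum_sq]
    calc (∑ i ∈ S, ‖x i‖) ^ 2
        ≤ (S.card : ℝ) * ∑ i ∈ S, ‖x i‖ ^ 2 := sq_sum_le_card_mul_sum_sq
      _ ≤ (k : ℝ) * ∑ i ∈ S, ‖x i‖ ^ 2 := by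
          have : (S.card : ℝ) ≤ k := by exact_mod_cast hScard
          have hnn : 0 ≤ ∑ i ∈ S, ‖x i‖ ^ 2 :=
            Finset.sum_nonneg fun i _ => sq_nonneg _
          exact mul_le_mul_of_nonneg_right this hnn
  -- off-diagonal absolute sum bound
  have hoff : ∑ i, ∑ j ∈ Finset.univ.erase i, ‖x i‖ * ‖x j‖
      ≤ (k : ℝ) * s := by
    calc ∑ i, ∑ j ∈ Finset.univ.erase i, ‖x i‖ * ‖x j‖
        ≤ ∑ i : Fin n, ∑ j : Fin n, ‖x i‖ * ‖x j‖ := by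
          refine Finset.sum_le_sum fun i _ => ?_
          refine Finset.sum_le_sum_of_subset_of_nonneg (Finset.erase_subset _ _) ?_
          intro j _ _; positivity
      _ = (∑ i, ‖x i‖) ^ 2 := by
          rw [sq, Finset.sum_mul_sum]
      _ ≤ (k : ℝ) * s := hCS
  -- Gram matrix
  set G : Fin n → Fin n → ℂ := fun i j => ∑ ℓ, (starRingEnd ℂ) (A ℓ i) * A ℓ j with hG
  have habs2 : ∀ z : ℂ, (starRingEnd ℂ) z * z = ((‖z‖ : ℝ) : ℂ) ^ 2 := by
    intro z
    rw [← Complex.normSq_eq_conj_mul_self, ← Complex.sq_norm]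
    push_cast
    ring
  have hGdiag : ∀ i, G i i = 1 := by
    intro i
    have : G i i = ((∑ ℓ, ‖A ℓ i‖ ^ 2 : ℝ) : ℂ) := by
      rw [hG]
      push_cast
      exact Finset.sum_congr rfl fun ℓ _ => by rw [habs2]
    rw [this, hcol i]; norm_num
  -- key expansion
  have key : (T : ℂ) = ∑ i, ∑ j, (starRingEnd ℂ) (x i) * x j * G i j := by
    have h1 : (T : ℂ) = ∑ ℓ, (starRingEnd ℂ) (A.mulVec x ℓ) * A.mulVec x ℓ := by
      rw [hTdef]
      push_cast
      exact Finset.sum_congr rfl fun ℓ _ => (habs2 _).symm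
    rw [h1]
    simp only [Matrix.mulVec, dotProduct, map_sum, map_mul, Finset.sum_mul,
      Finset.mul_sum, hG]
    rw [Finset.sum_comm]
    conv_rhs => rw [Finset.sum_comm]
    refine Finset.sum_congr rfl fun i _ => ?_
    rw [Finset.sum_comm]
    refine Finset.sum_congr rfl fun j _ => ?_
    refine Finset.sum_congr rfl fun ℓ _ => ?_
    ring
  -- split diagonal
  set R : ℂ := ∑ i, ∑ j ∈ Finset.univ.erase i, (starRingEnd ℂ) (x i) * x j * G i j with hR
  have split : (T : ℂ) = (s : ℂ) + R := by
    rw [key]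
    have : ∀ i : Fin n, ∑ j, (starRingEnd ℂ) (x i) * x j * G i j
        = ((‖x i‖ ^ 2 : ℝ) : ℂ)
          + ∑ j ∈ Finset.univ.erase i, (starRingEnd ℂ) (x i) * x j * G i j := by
      intro i
      rw [← Finset.add_sum_erase _ _ (Finset.mem_univ i)]
      congr 1
      rw [hGdiag i, mul_one, habs2]
      push_cast
      ring
    rw [Finset.sum_congr rfl fun i _ => this i, Finset.sum_add_distrib, hR, hs]
    push_cast
    ring
  have hTre : T = s + R.re := by
    have := congrArg Complex.re split
    simpa using this
  -- bound on R
  have hRabs : ‖R‖ ≤ c * s := by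
    calc ‖R‖
        ≤ ∑ i, ‖∑ j ∈ Finset.univ.erase i,
            (starRingEnd ℂ) (x i) * x j * G i j‖ := by
          exact norm_sum_le _ _
      _ ≤ ∑ i, ∑ j ∈ Finset.univ.erase i,
            ‖(starRingEnd ℂ) (x i) * x j * G i j‖ := by
          exact Finset.sum_le_sum fun i _ => norm_sum_le _ _
      _ ≤ ∑ i, ∑ j ∈ Finset.univ.erase i,
            ‖x i‖ * ‖x j‖ * (c / k) := by
          refine Finset.sum_le_sum fun i _ => Finset.sum_le_sum fun j hj => ?_
          have hij : i ≠ j := (Finset.ne_of_mem_erase hj).symm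
          rw [norm_mul, norm_mul, Complex.norm_conj]
          exact mul_le_mul_of_nonneg_left (hinc i j hij) (by positivity)
      _ = (c / k) * ∑ i, ∑ j ∈ Finset.univ.erase i,
            ‖x i‖ * ‖x j‖ := by
          rw [Finset.mul_sum]
          refine Finset.sum_congr rfl fun i _ => ?_
          rw [Finset.mul_sum]
          exact Finset.sum_congr rfl fun j _ => by ring
      _ ≤ (c / k) * ((k : ℝ) * s) := by
          exact mul_le_mul_of_nonneg_left hoff (by positivity)
      _ = c * s := by
          field_simp
  have hRre : |R.re| ≤ c * s := le_trans (Complex.abs_re_le_norm R) hRabs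
  have hRre' := abs_le.mp hRre
  have h1 : (1 - c) * s ≤ T := by rw [hTre]; nlinarith [hRre'.1]
  have h2 : T ≤ (1 + c) * s := by rw [hTre]; nlinarith [hRre'.2]
  constructor
  · have hle : ((1 - c) * Real.sqrt s) ^ 2 ≤ T := by
      rw [mul_pow, Real.sq_sqrt hs0]
      nlinarith
    have := Real.sqrt_le_sqrt hle
    rwa [Real.sqrt_sq (mul_nonneg (by linarith) (Real.sqrt_nonneg _))] at this
  · have hle : T ≤ ((1 + c) * Real.sqrt s) ^ 2 := by
      rw [mul_pow, Real.sq_sqrt hs0]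
      nlinarith
    have := Real.sqrt_le_sqrt hle
    rwa [Real.sqrt_sq (mul_nonneg (by linarith) (Real.sqrt_nonneg _))] at this
end
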